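/- arXiv:math/0607658 — 8 statements merged into one kernel-verified Lean document; each statement's English description precedes it below -/
import Mathlib

section
/- Let ψ: ℝ → ℝ be C¹ with ψ(0)=1, ψ even, and suppose there exist C>0 and δ>1 such that |ψ(x)| + |x·ψ'(x)| ≤ C·(1+x²)^{-δ/2} for all x ∈ ℝ. Let μ be a probability measure on ℝ, let 0 < α ≤ 1, and let x ∈ ℝ be such that (d_α μ)(x) := lim_{ε→0⁺} μ((x−ε, x+ε))/(2ε)^α exists and is finite. Then lim_{a→0⁺} a^{−α}·(ψ_a * μ)(x) = c_α · (d_α μ)(x), where c_α = ∫_0^∞ α·2^α·y^{α−1}·ψ(y) dy. -/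
/-!
Writing `ψ(t) = ∫_{|t|}^∞ (-ψ')` and applying Fubini gives the layer-cake formula
`(ψ_a * μ)(x) = ∫_0^∞ (-ψ'(s)) μ((x - as, x + as)) ds`. Hence
`a^{-α} (ψ_a * μ)(x) = ∫_0^∞ (-ψ'(s)) (2s)^α q(as) ds`, where `q(ε) = μ((x-ε, x+ε))/(2ε)^α`
is bounded on `(0, ∞)` and tends to `(d_α μ)(x)`; dominated convergence gives the limit
`(∫_0^∞ (-ψ'(s)) (2s)^α ds) (d_α μ)(x)`, and integrating by parts turns the constant into `c_α`.
The decay of `ψ` and `sψ'` makes every integral converge, since `α ≤ 1 < δ`.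
-/

open MeasureTheory Filter Real Set Topology

lemma one_add_sq_rpow_neg_le_rpow_neg {s δ : ℝ} (hs : 0 < s) (hδ : 0 ≤ δ) :
    (1 + s ^ 2) ^ (-δ / 2) ≤ s ^ (-δ) := by
  calc (1 + s ^ 2) ^ (-δ / 2) ≤ (s ^ 2) ^ (-δ / 2) :=
        rpow_le_rpow_of_nonpos (by positivity) (by linarith) (by linarith)
    _ = s ^ (-δ) := by
        rw [← rpow_natCast, ← rpow_mul hs.le]
        congr 1
        push_cast
        ring

lemma integrableOn_rpow_mul_one_add_sq_rpow_neg {β δ : ℝ} (hβ : -1 < β) (hβδ : β + 1 < δ) :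
    IntegrableOn (fun s : ℝ => s ^ β * (1 + s ^ 2) ^ (-δ / 2)) (Ioi 0) := by
  have hmeas : AEStronglyMeasurable (fun s : ℝ => s ^ β * (1 + s ^ 2) ^ (-δ / 2)) volume := by
    fun_prop
  have hnear : IntegrableOn (fun s : ℝ => s ^ β * (1 + s ^ 2) ^ (-δ / 2)) (Ioc 0 1) := by
    refine Integrable.mono' ((intervalIntegral.intervalIntegrable_rpow' hβ).1) hmeas.restrict ?_
    filter_upwards [ae_restrict_mem measurableSet_Ioc] with s hs
    have hs0 : 0 < s := hs.1
    rw [norm_of_nonneg (by positivity)]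
    exact mul_le_of_le_one_right (by positivity)
      (rpow_le_one_of_one_le_of_nonpos (by nlinarith) (by linarith))
  have hfar : IntegrableOn (fun s : ℝ => s ^ β * (1 + s ^ 2) ^ (-δ / 2)) (Ioi 1) := by
    refine Integrable.mono' (integrableOn_Ioi_rpow_of_lt (by linarith : β - δ < -1) one_pos)
      hmeas.restrict ?_
    filter_upwards [ae_restrict_mem measurableSet_Ioi] with s (hs : 1 < s)
    have hs0 : 0 < s := one_pos.trans hs
    rw [norm_of_nonneg (by positivity), sub_eq_add_neg, rpow_add hs0]
    exact mul_le_mul_of_nonneg_left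
      (one_add_sq_rpow_neg_le_rpow_neg hs0 (by linarith)) (by positivity)
  exact (hnear.union hfar).mono_set fun s hs => (le_or_gt s 1).imp (⟨hs, ·⟩) id

section Decay

variable {g : ℝ → ℝ} {C δ : ℝ} (hg : ∀ s, |g s| ≤ C * (1 + s ^ 2) ^ (-δ / 2))
include hg

lemma integrableOn_rpow_mul_of_abs_le (hmeas : AEStronglyMeasurable g volume) {β : ℝ}
    (hβ : -1 < β) (hβδ : β + 1 < δ) :
    IntegrableOn (fun s => s ^ β * g s) (Ioi 0) := by
  refine Integrable.mono' ((integrableOn_rpow_mul_one_add_sq_rpow_neg hβ hβδ).const_mul C)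
    ((by fun_prop : Measurable fun s : ℝ => s ^ β).aestronglyMeasurable.mul hmeas).restrict ?_
  filter_upwards [ae_restrict_mem measurableSet_Ioi] with s (hs : 0 < s)
  rw [norm_mul, norm_of_nonneg (by positivity), Real.norm_eq_abs, mul_left_comm]
  exact mul_le_mul_of_nonneg_left (hg s) (by positivity)

lemma tendsto_rpow_mul_atTop_of_abs_le {β : ℝ} (hβ : 0 ≤ β) (hβδ : β < δ) :
    Tendsto (fun s => s ^ β * g s) atTop (𝓝 0) := by
  have hC : 0 ≤ C := by simpa using (abs_nonneg _).trans (hg 0)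
  have hlim : Tendsto (fun s : ℝ => C * s ^ (β - δ)) atTop (𝓝 0) := by
    simpa using (tendsto_rpow_neg_atTop (by linarith : 0 < δ - β)).const_mul C
  refine squeeze_zero_norm' ?_ hlim
  filter_upwards [eventually_gt_atTop 0] with s hs
  calc ‖s ^ β * g s‖ = s ^ β * |g s| := by
        rw [norm_mul, norm_of_nonneg (by positivity), Real.norm_eq_abs]
    _ ≤ s ^ β * (C * s ^ (-δ)) := by
        gcongr
        exact (hg s).trans (mul_le_mul_of_nonneg_left
          (one_add_sq_rpow_neg_le_rpow_neg hs (by linarith)) hC)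
    _ = C * s ^ (β - δ) := by rw [sub_eq_add_neg, rpow_add hs]; ring

end Decay

lemma integrableOn_Ioi_of_abs_mul_le {g : ℝ → ℝ} {C δ : ℝ} (hg : Continuous g)
    (hbound : ∀ s, |s * g s| ≤ C * (1 + s ^ 2) ^ (-δ / 2)) (hδ : 1 < δ) :
    IntegrableOn g (Ioi 0) := by
  have hnear : IntegrableOn g (Ioc 0 1) := hg.integrableOn_Icc.mono_set Ioc_subset_Icc_self
  have hfar : IntegrableOn g (Ioi 1) := by
    have hw : IntegrableOn (fun s : ℝ => C * (s ^ (0 : ℝ) * (1 + s ^ 2) ^ (-δ / 2))) (Ioi 0) :=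
      (integrableOn_rpow_mul_one_add_sq_rpow_neg (by norm_num) (by linarith)).const_mul C
    refine Integrable.mono' (hw.mono_set (Ioi_subset_Ioi zero_le_one))
      hg.aestronglyMeasurable.restrict ?_
    filter_upwards [ae_restrict_mem measurableSet_Ioi] with s (hs : 1 < s)
    rw [rpow_zero, one_mul, Real.norm_eq_abs]
    refine le_trans ?_ (hbound s)
    rw [abs_mul, abs_of_pos (one_pos.trans hs)]
    exact le_mul_of_one_le_left (abs_nonneg _) hs.le
  exact (hnear.union hfar).mono_set fun s hs => (le_or_gt s 1).imp (⟨hs, ·⟩) id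

lemma integrableOn_rpow_mul_of_abs_mul_le {g : ℝ → ℝ} {C δ β : ℝ}
    (hmeas : AEStronglyMeasurable g volume)
    (hbound : ∀ s, |s * g s| ≤ C * (1 + s ^ 2) ^ (-δ / 2)) (hβ : 0 < β) (hβδ : β < δ) :
    IntegrableOn (fun s => s ^ β * g s) (Ioi 0) := by
  refine (integrableOn_rpow_mul_of_abs_le hbound (aestronglyMeasurable_id.mul hmeas)
    (β := β - 1) (by linarith) (by linarith)).congr_fun (fun s (hs : 0 < s) => ?_)
    measurableSet_Ioi
  dsimp only
  rw [← mul_assoc, ← rpow_add_one hs.ne', sub_add_cancel]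

lemma eq_integral_Ioi_abs_neg_deriv {ψ : ℝ → ℝ} (hψ : Differentiable ℝ ψ)
    (heven : ∀ x, ψ (-x) = ψ x) (htop : Tendsto ψ atTop (𝓝 0))
    (hint : IntegrableOn (deriv ψ) (Ioi 0)) (t : ℝ) :
    ψ t = ∫ s in Ioi |t|, -deriv ψ s := by
  rw [integral_neg, integral_Ioi_of_hasDerivAt_of_tendsto' (fun s _ => (hψ s).hasDerivAt)
    (hint.mono_set (Ioi_subset_Ioi (abs_nonneg t))) htop]
  rcases abs_choice t with h | h <;> simp [h, heven]

lemma integral_comp_div_eq_setIntegral_mul_measureReal_Ioo {ψ φ : ℝ → ℝ}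
    (hφ : IntegrableOn φ (Ioi 0)) (hψ : ∀ t, ψ t = ∫ s in Ioi |t|, φ s)
    (μ : Measure ℝ) [IsFiniteMeasure μ] (x : ℝ) {a : ℝ} (ha : 0 < a) :
    ∫ y, ψ ((x - y) / a) ∂μ = ∫ s in Ioi 0, φ s * μ.real (Ioo (x - a * s) (x + a * s)) := by
  set S : Set (ℝ × ℝ) := {p | |x - p.1| < a * p.2}
  have hS : MeasurableSet S := (isOpen_lt (by fun_prop) (by fun_prop)).measurableSet
  set F : ℝ × ℝ → ℝ := S.indicator fun p => φ p.2
  have hF : Integrable F (μ.prod (volume.restrict (Ioi 0))) := (hφ.comp_snd μ).indicator hS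
  have hslice_y : ∀ y, ∫ s in Ioi 0, F (y, s) = ψ ((x - y) / a) := by
    intro y
    have hy : (fun s => F (y, s)) = (Ioi (|x - y| / a)).indicator φ := by
      ext s
      simp [F, S, indicator, div_lt_iff₀ ha, mul_comm]
    rw [hy, integral_indicator measurableSet_Ioi, Measure.restrict_restrict measurableSet_Ioi,
      inter_eq_self_of_subset_left (Ioi_subset_Ioi (by positivity)), hψ, abs_div, abs_of_pos ha]
  have hslice_s : ∀ s, ∫ y, F (y, s) ∂μ = φ s * μ.real (Ioo (x - a * s) (x + a * s)) := by
    intro s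
    have hs : (fun y => F (y, s)) = (Ioo (x - a * s) (x + a * s)).indicator fun _ => φ s := by
      ext y
      simp [F, S, indicator, abs_sub_lt_iff, sub_lt_comm, sub_lt_iff_lt_add']
    rw [hs, integral_indicator_const _ measurableSet_Ioo, smul_eq_mul, mul_comm]
  simp_rw [← hslice_y, ← hslice_s]
  exact integral_integral_swap (f := fun y s => F (y, s)) hF

lemma setIntegral_rpow_mul_deriv_eq_neg {ψ : ℝ → ℝ} (hψ : Differentiable ℝ ψ) {α : ℝ}
    (hα : 0 < α) (htop : Tendsto (fun s => s ^ α * ψ s) atTop (𝓝 0))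
    (hint : IntegrableOn (fun s => s ^ (α - 1) * ψ s) (Ioi 0))
    (hint' : IntegrableOn (fun s => s ^ α * deriv ψ s) (Ioi 0)) :
    ∫ s in Ioi 0, s ^ α * deriv ψ s = -∫ s in Ioi 0, α * s ^ (α - 1) * ψ s := by
  have hzero : Tendsto (fun s => s ^ α * ψ s) (𝓝[>] 0) (𝓝 0) := by
    have h : Tendsto (fun s => s ^ α * ψ s) (𝓝 0) (𝓝 ((0 : ℝ) ^ α * ψ 0)) :=
      (continuousAt_rpow_const 0 α (Or.inr hα.le)).tendsto.mul (hψ 0).continuousAt.tendsto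
    rw [zero_rpow hα.ne', zero_mul] at h
    exact h.mono_left nhdsWithin_le_nhds
  have hint_mul : IntegrableOn ((fun s => α * s ^ (α - 1)) * ψ) (Ioi 0) :=
    (hint.const_mul α).congr (ae_of_all _ fun s => by simp only [Pi.mul_apply]; ring)
  rw [integral_Ioi_mul_deriv_eq_deriv_mul (fun s hs => hasDerivAt_rpow_const (Or.inl hs.ne'))
    (fun s _ => (hψ s).hasDerivAt) hint' hint_mul hzero htop]
  ring

lemma setIntegral_const_mul_rpow_mul_eq {ψ : ℝ → ℝ} (hψ : Differentiable ℝ ψ) {α : ℝ}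
    (hα : 0 < α) (htop : Tendsto (fun s => s ^ α * ψ s) atTop (𝓝 0))
    (hint : IntegrableOn (fun s => s ^ (α - 1) * ψ s) (Ioi 0))
    (hint' : IntegrableOn (fun s => s ^ α * deriv ψ s) (Ioi 0)) {c : ℝ} (hc : 0 ≤ c) :
    ∫ s in Ioi 0, α * c ^ α * s ^ (α - 1) * ψ s = ∫ s in Ioi 0, -deriv ψ s * (c * s) ^ α := by
  calc ∫ s in Ioi 0, α * c ^ α * s ^ (α - 1) * ψ s
      = c ^ α * ∫ s in Ioi 0, α * s ^ (α - 1) * ψ s := by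
        rw [← integral_const_mul]; congr 1; ext s; ring
    _ = c ^ α * -∫ s in Ioi 0, s ^ α * deriv ψ s := by
        rw [setIntegral_rpow_mul_deriv_eq_neg hψ hα htop hint hint', neg_neg]
    _ = ∫ s in Ioi 0, -deriv ψ s * (c * s) ^ α := by
        rw [← integral_neg, ← integral_const_mul]
        refine setIntegral_congr_fun measurableSet_Ioi fun s (hs : 0 < s) => ?_
        rw [mul_rpow hc hs.le]
        ring

lemma tendsto_mul_const_nhdsGT_zero {s : ℝ} (hs : 0 < s) :
    Tendsto (fun a => a * s) (𝓝[>] 0) (𝓝[>] 0) := by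
  refine tendsto_nhdsWithin_of_tendsto_nhds_of_eventually_within _ ?_ ?_
  · simpa using (continuous_mul_const s).tendsto' 0 0 (zero_mul s) |>.mono_left nhdsWithin_le_nhds
  · filter_upwards [self_mem_nhdsWithin] with a (ha : 0 < a)
    exact mul_pos ha hs

lemma tendsto_setIntegral_mul_comp_mul {f G : ℝ → ℝ} {L M : ℝ} (hf : IntegrableOn f (Ioi 0))
    (hG : Measurable G) (hGM : ∀ ε > 0, |G ε| ≤ M) (hGL : Tendsto G (𝓝[>] 0) (𝓝 L)) :
    Tendsto (fun a => ∫ s in Ioi 0, f s * G (a * s)) (𝓝[>] 0)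
      (𝓝 ((∫ s in Ioi 0, f s) * L)) := by
  rw [← integral_mul_const]
  refine tendsto_integral_filter_of_dominated_convergence (fun s => ‖f s‖ * M)
    (Eventually.of_forall fun a => hf.aestronglyMeasurable.mul
      (hG.comp (measurable_const.mul measurable_id)).aestronglyMeasurable)
    ?_ (hf.norm.mul_const M) ?_
  · filter_upwards [self_mem_nhdsWithin] with a (ha : 0 < a)
    filter_upwards [ae_restrict_mem measurableSet_Ioi] with s (hs : 0 < s)
    rw [norm_mul, Real.norm_eq_abs (G _)]
    exact mul_le_mul_of_nonneg_left (hGM _ (mul_pos ha hs)) (norm_nonneg _)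
  · filter_upwards [ae_restrict_mem measurableSet_Ioi] with s (hs : 0 < s)
    exact (hGL.comp (tendsto_mul_const_nhdsGT_zero hs)).const_mul (f s)

lemma exists_abs_le_of_tendsto_nhdsGT {G : ℝ → ℝ} {L : ℝ} (hGL : Tendsto G (𝓝[>] 0) (𝓝 L))
    (htail : ∀ ε₀ > 0, ∃ K, ∀ ε ≥ ε₀, |G ε| ≤ K) : ∃ M, ∀ ε > 0, |G ε| ≤ M := by
  obtain ⟨ε₀, hε₀, hnear⟩ := mem_nhdsGT_iff_exists_Ioo_subset.mp
    (hGL.abs.eventually_le_const (lt_add_one |L|))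
  obtain ⟨K, hK⟩ := htail ε₀ hε₀
  refine ⟨max (|L| + 1) K, fun ε hε => ?_⟩
  rcases lt_or_ge ε ε₀ with h | h
  · exact le_max_of_le_left (hnear ⟨hε, h⟩)
  · exact le_max_of_le_right (hK ε h)

noncomputable def densityQuotient (μ : Measure ℝ) (α x ε : ℝ) : ℝ :=
  μ.real (Ioo (x - ε) (x + ε)) / (2 * ε) ^ α

section densityQuotient

variable (μ : Measure ℝ) (α x : ℝ)

lemma measurable_densityQuotient [IsFiniteMeasure μ] : Measurable (densityQuotient μ α x) := by
  have hmono : Monotone fun ε => μ.real (Ioo (x - ε) (x + ε)) := fun ε ε' h =>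
    measureReal_mono (Ioo_subset_Ioo (by linarith) (by linarith)) (measure_ne_top μ _)
  exact hmono.measurable.div (by fun_prop)

lemma rpow_neg_mul_measureReal_Ioo_eq {a s : ℝ} (ha : 0 < a) (hs : 0 < s) :
    a ^ (-α) * μ.real (Ioo (x - a * s) (x + a * s)) =
      (2 * s) ^ α * densityQuotient μ α x (a * s) := by
  rw [densityQuotient, show 2 * (a * s) = a * (2 * s) by ring, mul_rpow ha.le (by positivity),
    rpow_neg ha.le]
  field_simp

lemma exists_abs_densityQuotient_le [IsFiniteMeasure μ] (hα : 0 ≤ α) {L : ℝ}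
    (hd : Tendsto (densityQuotient μ α x) (𝓝[>] 0) (𝓝 L)) :
    ∃ M, ∀ ε > 0, |densityQuotient μ α x ε| ≤ M := by
  refine exists_abs_le_of_tendsto_nhdsGT hd fun ε₀ hε₀ => ⟨μ.real univ / (2 * ε₀) ^ α, ?_⟩
  intro ε hε
  have hε0 : 0 < ε := hε₀.trans_le hε
  rw [densityQuotient, abs_of_nonneg (by positivity)]
  gcongr
  · exact measure_ne_top μ _
  · exact subset_univ _

end densityQuotient

theorem psi_a_conv_alpha_derivative_general
    (ψ : ℝ → ℝ) (hC1 : ContDiff ℝ 1 ψ)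
    (heven : ∀ x : ℝ, ψ (-x) = ψ x)
    (hdecay : ∃ C > (0:ℝ), ∃ δ > (1:ℝ), ∀ x : ℝ,
      |ψ x| + |x * deriv ψ x| ≤ C * (1 + x ^ 2) ^ (-δ / 2))
    (μ : Measure ℝ) [IsProbabilityMeasure μ]
    (α : ℝ) (hα0 : 0 < α) (hα1 : α ≤ 1) (x : ℝ) (L : ℝ)
    (hd : Tendsto (fun ε : ℝ => (μ (Ioo (x - ε) (x + ε))).toReal / (2 * ε) ^ α)
      (𝓝[>] 0) (𝓝 L)) :
    Tendsto (fun a : ℝ => a ^ (-α) * ∫ y : ℝ, ψ ((x - y) / a) ∂μ)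
      (𝓝[>] 0)
      (𝓝 ((∫ y in Ioi (0:ℝ), α * 2 ^ α * y ^ (α - 1) * ψ y) * L)) := by
  obtain ⟨C, -, δ, hδ, hb⟩ := hdecay
  have hψ_le (s : ℝ) : |ψ s| ≤ C * (1 + s ^ 2) ^ (-δ / 2) :=
    (le_add_of_nonneg_right (abs_nonneg _)).trans (hb s)
  have hdψ_le (s : ℝ) : |s * deriv ψ s| ≤ C * (1 + s ^ 2) ^ (-δ / 2) :=
    (le_add_of_nonneg_left (abs_nonneg _)).trans (hb s)
  have hdiff : Differentiable ℝ ψ := hC1.differentiable one_ne_zero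
  have hint_d : IntegrableOn (deriv ψ) (Ioi 0) :=
    integrableOn_Ioi_of_abs_mul_le (hC1.continuous_deriv le_rfl) hdψ_le hδ
  have hint_ψ : IntegrableOn (fun s => s ^ (α - 1) * ψ s) (Ioi 0) :=
    integrableOn_rpow_mul_of_abs_le hψ_le hC1.continuous.aestronglyMeasurable
      (by linarith) (by linarith)
  have hint_sd : IntegrableOn (fun s => s ^ α * deriv ψ s) (Ioi 0) :=
    integrableOn_rpow_mul_of_abs_mul_le (measurable_deriv ψ).aestronglyMeasurable hdψ_le hα0
      (by linarith)
  have hint_f : IntegrableOn (fun s => -deriv ψ s * (2 * s) ^ α) (Ioi 0) :=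
    IntegrableOn.congr_fun (hint_sd.const_mul (-2 ^ α)) (fun s (hs : 0 < s) => by
      rw [mul_rpow zero_le_two hs.le]; ring) measurableSet_Ioi
  obtain ⟨M, hM⟩ := exists_abs_densityQuotient_le μ α x hα0.le hd
  have hlim := tendsto_setIntegral_mul_comp_mul hint_f (measurable_densityQuotient μ α x) hM hd
  rw [← setIntegral_const_mul_rpow_mul_eq hdiff hα0
    (tendsto_rpow_mul_atTop_of_abs_le hψ_le hα0.le (by linarith)) hint_ψ hint_sd
    zero_le_two] at hlim
  refine hlim.congr' ?_
  filter_upwards [self_mem_nhdsWithin] with a (ha : 0 < a)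
  have hrep := eq_integral_Ioi_abs_neg_deriv hdiff heven
    (by simpa using tendsto_rpow_mul_atTop_of_abs_le hψ_le le_rfl (by linarith)) hint_d
  rw [integral_comp_div_eq_setIntegral_mul_measureReal_Ioo (φ := fun s => -deriv ψ s)
    hint_d.neg hrep μ x ha, ← integral_const_mul]
  refine setIntegral_congr_fun measurableSet_Ioi fun s (hs : 0 < s) => ?_
  rw [mul_left_comm, rpow_neg_mul_measureReal_Ioo_eq μ α x ha hs, mul_assoc]

/-- Theorem 2.2 (3): if the `α`-derivative `(d_α μ)(x)` exists and is finite, then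
`a^{-α} (ψ_a * μ)(x) → c_α (d_α μ)(x)` as `a → 0⁺`, where
`c_α = ∫_0^∞ α 2^α y^{α-1} ψ(y) dy`. -/
theorem psi_a_conv_alpha_derivative
    (ψ : ℝ → ℝ) (hC1 : ContDiff ℝ 1 ψ) (hψ0 : ψ 0 = 1)
    (heven : ∀ x : ℝ, ψ (-x) = ψ x)
    (hdecay : ∃ C > (0:ℝ), ∃ δ > (1:ℝ), ∀ x : ℝ,
      |ψ x| + |x * deriv ψ x| ≤ C * (1 + x ^ 2) ^ (-δ / 2))
    (μ : Measure ℝ) [IsProbabilityMeasure μ]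
    (α : ℝ) (hα0 : 0 < α) (hα1 : α ≤ 1) (x : ℝ) (L : ℝ)
    (hd : Tendsto (fun ε : ℝ => (μ (Ioo (x - ε) (x + ε))).toReal / (2 * ε) ^ α)
      (𝓝[>] 0) (𝓝 L)) :
    Tendsto (fun a : ℝ => a ^ (-α) * ∫ y : ℝ, ψ ((x - y) / a) ∂μ)
      (𝓝[>] 0)
      (𝓝 ((∫ y in Ioi (0:ℝ), α * 2 ^ α * y ^ (α - 1) * ψ y) * L)) :=
  psi_a_conv_alpha_derivative_general ψ hC1 heven hdecay μ α hα0 hα1 x L hd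
end

section
/- Let ψ: ℝ → ℝ be C¹ with ψ(0)=1, ψ even, and suppose there exist C>0 and δ>1 such that |ψ(x)| + |x·ψ'(x)| ≤ C·(1+x²)^{-δ/2} for all x ∈ ℝ. Let μ be a probability measure on ℝ and let (c,d) be a bounded interval with c < d. Set C₀ = ∫_ℝ |ψ(x)|² dx. Then lim_{a→0⁺} (1/a)·∫_c^d |(ψ_a * μ)(x)|² dx = C₀·( Σ_{x ∈ (c,d)} μ({x})² + (1/2)·(μ({c})² + μ({d})²) ), where the sum runs over the (at most countably many) atoms of μ in (c,d). -/
open MeasureTheory Filter Real Set Topology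

/-!
Expanding the square and using Fubini, `(1/a) ∫_c^d |ψ_a * μ|²` is the integral over `μ ⊗ μ` of
the kernel `K_a(y, z) = ∫_{(c-y)/a}^{(d-y)/a} ψ(t) ψ(t + (y-z)/a) dt`, which is bounded by
`‖ψ‖₁ ‖ψ‖_∞`. As `a → 0⁺` the kernel tends to `0` off the diagonal, because the shift `(y-z)/a`
escapes to infinity, and on the diagonal to the integral of `ψ²` over the limit of the interval
`((c-y)/a, (d-y)/a)`; by evenness this is `C₀` times `1`, `1/2` or `0` according as `y` lies in
`(c, d)`, at an endpoint, or outside `[c, d]` (this is `wienerWeight c d y`). Dominated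
convergence leaves `C₀ ∫ wienerWeight c d y · μ{y} dμ(y)`, which only sees the countably many
atoms of `μ`.
-/

section Atoms

variable {α : Type*} [MeasurableSpace α] [MeasurableEq α]

lemma measurable_measureReal_singleton (μ : Measure α) [SFinite μ] :
    Measurable fun y => μ.real {y} := by
  have h := (measurable_measure_prodMk_left (ν := μ)
    (measurableSet_diagonal (α := α))).ennreal_toReal
  have hpre : ∀ y : α, Prod.mk y ⁻¹' diagonal α = {y} := fun y => by
    ext z; simp [eq_comm]
  simpa [hpre, measureReal_def] using h

lemma integrable_measureReal_singleton (μ : Measure α) [IsFiniteMeasure μ] :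
    Integrable (fun y => μ.real {y}) μ := by
  refine (integrable_const (μ.real univ)).mono'
    (measurable_measureReal_singleton μ).aestronglyMeasurable (Eventually.of_forall fun y => ?_)
  rw [Real.norm_eq_abs, abs_of_nonneg measureReal_nonneg]
  exact measureReal_mono (subset_univ _)

lemma setIntegral_measureReal_singleton (μ : Measure α) [IsFiniteMeasure μ] {s : Set α}
    (hs : MeasurableSet s) :
    ∫ y in s, μ.real {y} ∂μ = ∑' x : s, μ.real {(x : α)} ^ 2 := by
  set T : Set α := s ∩ {t | 0 < μ {t}}
  have hT : T.Countable := by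
    refine (Measure.countable_meas_level_set_pos (μ := μ) measurable_id).mono ?_
    simp [T]
  have hatoms : ∀ y, y ∉ T → y ∈ s → μ.real {y} = 0 := fun y hyT hys => by
    simp_all [T, measureReal_def]
  have hsT : ∫ y in s, μ.real {y} ∂μ = ∫ y in T, μ.real {y} ∂μ :=
    setIntegral_eq_of_subset_of_forall_sdiff_eq_zero hs inter_subset_left
      fun y hy => hatoms y hy.2 hy.1
  have hTs : T.indicator (fun y => μ.real {y} ^ 2) = s.indicator (fun y => μ.real {y} ^ 2) := by
    ext y
    by_cases hyT : y ∈ T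
    · simp [indicator_of_mem hyT, indicator_of_mem hyT.1]
    · by_cases hys : y ∈ s <;> simp [indicator_of_notMem hyT, hys, hatoms y hyT]
  rw [hsT, setIntegral_countable _ hT (integrable_measureReal_singleton μ).integrableOn]
  simp_rw [smul_eq_mul, ← sq]
  rw [tsum_subtype T (fun y => μ.real {y} ^ 2), tsum_subtype s (fun y => μ.real {y} ^ 2), hTs]

lemma integral_indicator_diagonal {μ ν : Measure α} [IsFiniteMeasure μ] [IsFiniteMeasure ν]
    {g : α → ℝ} {B : ℝ} (hg : Measurable g) (hgB : ∀ y, |g y| ≤ B) :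
    ∫ p, (diagonal α).indicator (fun p => g p.1) p ∂(μ.prod ν) = ∫ y, g y * ν.real {y} ∂μ := by
  have hint : Integrable ((diagonal α).indicator fun p => g p.1) (μ.prod ν) :=
    (integrable_const B).mono'
      ((hg.comp measurable_fst).indicator measurableSet_diagonal).aestronglyMeasurable
      (Eventually.of_forall fun p => (norm_indicator_le_norm_self _ p).trans (hgB p.1))
  rw [integral_prod _ hint]
  refine integral_congr_ae (Eventually.of_forall fun y => ?_)
  have hslice : (fun z => (diagonal α).indicator (fun p => g p.1) (y, z)) =
      ({y} : Set α).indicator (fun _ => g y) := by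
    ext z
    by_cases h : y = z
    · simp [h]
    · simp [h, Ne.symm h]
  simp only [hslice, integral_indicator (measurableSet_singleton y), setIntegral_const,
    smul_eq_mul, mul_comm]

end Atoms

section Decay

variable {ψ : ℝ → ℝ} {C δ : ℝ}

lemma abs_le_of_abs_le_rpow_decay (hδ : 0 ≤ δ) (hb : ∀ x, |ψ x| ≤ C * (1 + x ^ 2) ^ (-δ / 2))
    (x : ℝ) : |ψ x| ≤ C := by
  have hC : 0 ≤ C := by simpa using (abs_nonneg _).trans (hb 0)
  refine (hb x).trans (mul_le_of_le_one_right hC ?_)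
  exact Real.rpow_le_one_of_one_le_of_nonpos (by nlinarith [sq_nonneg x]) (by linarith)

lemma integrable_of_abs_le_rpow_decay (hψ : AEStronglyMeasurable ψ) (hδ : 1 < δ)
    (hb : ∀ x, |ψ x| ≤ C * (1 + x ^ 2) ^ (-δ / 2)) : Integrable ψ := by
  have h := integrable_rpow_neg_one_add_norm_sq (E := ℝ) (μ := volume) (r := δ) (by simpa using hδ)
  refine (h.const_mul C).mono' hψ (Eventually.of_forall fun x => ?_)
  simpa [Real.norm_eq_abs, sq_abs] using hb x

lemma tendsto_cobounded_of_abs_le_rpow_decay (hδ : 0 < δ)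
    (hb : ∀ x, |ψ x| ≤ C * (1 + x ^ 2) ^ (-δ / 2)) :
    Tendsto ψ (Bornology.cobounded ℝ) (𝓝 0) := by
  have hsq : Tendsto (fun x : ℝ => 1 + x ^ 2) (Bornology.cobounded ℝ) atTop := by
    refine tendsto_atTop_add_const_left _ 1 ?_
    simpa only [Function.comp_def, Real.norm_eq_abs, sq_abs] using
      (tendsto_pow_atTop two_ne_zero).comp (tendsto_norm_cobounded_atTop (E := ℝ))
  have hdecay : Tendsto (fun x : ℝ => C * (1 + x ^ 2) ^ (-δ / 2)) (Bornology.cobounded ℝ)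
      (𝓝 0) := by
    simpa [neg_div] using
      ((tendsto_rpow_neg_atTop (by positivity : 0 < δ / 2)).comp hsq).const_mul C
  exact squeeze_zero_norm (fun x => by simpa using hb x) hdecay

end Decay

section EvenIntegral

variable {f : ℝ → ℝ}

lemma integral_Iic_zero_of_even (heven : ∀ x, f (-x) = f x) :
    ∫ t in Iic 0, f t = ∫ t in Ioi 0, f t := by
  rw [← neg_zero, ← integral_comp_neg_Iic]
  simp only [heven, neg_zero]

lemma integral_Ioi_zero_eq_half_of_even (hf : Integrable f) (heven : ∀ x, f (-x) = f x) :
    ∫ t in Ioi 0, f t = (∫ t, f t) / 2 := by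
  have h := intervalIntegral.integral_Iic_add_Ioi (b := 0) hf.integrableOn hf.integrableOn
  rw [integral_Iic_zero_of_even heven] at h
  linarith

lemma tendsto_intervalIntegral_zero_div_of_even (hf : Integrable f)
    (heven : ∀ x, f (-x) = f x) (r : ℝ) :
    Tendsto (fun a => ∫ t in 0..r / a, f t) (𝓝[>] 0) (𝓝 (Real.sign r * ((∫ t, f t) / 2))) := by
  rw [← integral_Ioi_zero_eq_half_of_even hf heven]
  simp only [div_eq_mul_inv r]
  rcases lt_trichotomy r 0 with hr | rfl | hr
  · have hbot := (tendsto_const_mul_atBot_of_neg hr).mpr tendsto_inv_nhdsGT_zero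
    rw [Real.sign_of_neg hr, neg_one_mul, ← integral_Iic_zero_of_even heven]
    refine (intervalIntegral_tendsto_integral_Iic 0 hf.integrableOn hbot).neg.congr fun a => ?_
    exact (intervalIntegral.integral_symm _ _).symm
  · simp
  · have htop := (tendsto_const_mul_atTop_of_pos hr).mpr tendsto_inv_nhdsGT_zero
    rw [Real.sign_of_pos hr, one_mul]
    exact intervalIntegral_tendsto_integral_Ioi 0 hf.integrableOn htop

end EvenIntegral

noncomputable def wienerWeight (c d y : ℝ) : ℝ :=
  (Ioo c d).indicator 1 y + (1 / 2) * (({c} : Set ℝ).indicator 1 y + ({d} : Set ℝ).indicator 1 y)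

section WienerWeight

variable {c d : ℝ}

lemma wienerWeight_eq_sign (hcd : c < d) (y : ℝ) :
    wienerWeight c d y = (Real.sign (d - y) - Real.sign (c - y)) / 2 := by
  rcases lt_trichotomy y c with hyc | rfl | hyc
  · have hyd : y < d := hyc.trans hcd
    simp [wienerWeight, hyc.ne, hyd.ne, not_lt.mpr hyc.le, Real.sign_of_pos, hyc, hyd]
  · simp [wienerWeight, hcd.ne, Real.sign_of_pos, hcd]
  rcases lt_trichotomy y d with hyd | rfl | hyd
  · simp [wienerWeight, hyc.ne', hyd.ne, hyc, hyd, Real.sign_of_pos, Real.sign_of_neg]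
  · simp [wienerWeight, hcd.ne', Real.sign_of_neg, hcd]
  · have hcy : c < y := hcd.trans hyd
    simp [wienerWeight, hcy.ne', hyd.ne', not_lt.mpr hyd.le, Real.sign_of_neg, hcy, hyd]

lemma abs_wienerWeight_le_one (hcd : c < d) (y : ℝ) : |wienerWeight c d y| ≤ 1 := by
  rw [wienerWeight_eq_sign hcd]
  rcases Real.sign_apply_eq (d - y) with h₁ | h₁ | h₁ <;>
    rcases Real.sign_apply_eq (c - y) with h₂ | h₂ | h₂ <;> norm_num [h₁, h₂, abs_div]

lemma measurable_wienerWeight : Measurable (wienerWeight c d) :=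
  (measurable_const.indicator measurableSet_Ioo).add <| measurable_const.mul <|
    (measurable_const.indicator (measurableSet_singleton c)).add
      (measurable_const.indicator (measurableSet_singleton d))

end WienerWeight

lemma integral_wienerWeight_mul_measureReal_singleton (μ : Measure ℝ) [IsFiniteMeasure μ]
    (c d : ℝ) :
    ∫ y, wienerWeight c d y * μ.real {y} ∂μ =
      ∑' x : Ioo c d, μ.real {(x : ℝ)} ^ 2 + 1 / 2 * (μ.real {c} ^ 2 + μ.real {d} ^ 2) := by
  have hm := integrable_measureReal_singleton μ
  have hsplit : ∀ y, wienerWeight c d y * μ.real {y} =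
      (Ioo c d).indicator (μ.real {·}) y +
        1 / 2 * (({c} : Set ℝ).indicator (μ.real {·}) y +
          ({d} : Set ℝ).indicator (μ.real {·}) y) := by
    intro y
    simp only [wienerWeight, indicator_apply, Pi.one_apply]
    split_ifs <;> ring
  simp_rw [hsplit]
  rw [integral_add (hm.indicator measurableSet_Ioo) ?_, integral_const_mul,
    integral_add (hm.indicator (measurableSet_singleton c))
      (hm.indicator (measurableSet_singleton d)),
    integral_indicator measurableSet_Ioo, integral_indicator (measurableSet_singleton c),
    integral_indicator (measurableSet_singleton d), integral_singleton, integral_singleton,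
    setIntegral_measureReal_singleton μ measurableSet_Ioo]
  · simp only [smul_eq_mul, sq]
  · exact ((hm.indicator (measurableSet_singleton c)).add
      (hm.indicator (measurableSet_singleton d))).const_mul _

section WienerKernel

variable {ψ : ℝ → ℝ} {M c d a : ℝ}

noncomputable def wienerKernel (ψ : ℝ → ℝ) (c d a y z : ℝ) : ℝ :=
  (1 / a) * ∫ x in Ioo c d, ψ ((x - y) / a) * ψ ((x - z) / a)

lemma integral_sq_abs_integral_eq_integral_wienerKernel (hψ : Continuous ψ)
    (hM : ∀ x, |ψ x| ≤ M) (μ : Measure ℝ) [IsFiniteMeasure μ] (c d a : ℝ) :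
    (1 / a) * ∫ x in Ioo c d, |∫ y, ψ ((x - y) / a) ∂μ| ^ 2 =
      ∫ p, wienerKernel ψ c d a p.1 p.2 ∂(μ.prod μ) := by
  have : IsFiniteMeasure (volume.restrict (Ioo c d)) :=
    isFiniteMeasure_restrict.mpr measure_Ioo_lt_top.ne
  have hcont : Continuous fun q : ℝ × ℝ × ℝ => ψ ((q.1 - q.2.1) / a) * ψ ((q.1 - q.2.2) / a) := by
    fun_prop
  have hint : Integrable
      (Function.uncurry fun (x : ℝ) (p : ℝ × ℝ) => ψ ((x - p.1) / a) * ψ ((x - p.2) / a))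
      ((volume.restrict (Ioo c d)).prod (μ.prod μ)) := by
    refine (integrable_const (M * M)).mono' hcont.aestronglyMeasurable
      (Eventually.of_forall fun q => ?_)
    rw [Real.norm_eq_abs, Function.uncurry_def, abs_mul]
    exact mul_le_mul (hM _) (hM _) (abs_nonneg _) ((abs_nonneg _).trans (hM 0))
  calc (1 / a) * ∫ x in Ioo c d, |∫ y, ψ ((x - y) / a) ∂μ| ^ 2
      = (1 / a) * ∫ x in Ioo c d, ∫ p, ψ ((x - p.1) / a) * ψ ((x - p.2) / a) ∂(μ.prod μ) := by
        congr 1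
        refine integral_congr_ae (Eventually.of_forall fun x => ?_)
        dsimp only
        rw [sq_abs, sq, ← integral_prod_mul]
    _ = ∫ p, wienerKernel ψ c d a p.1 p.2 ∂(μ.prod μ) := by
        rw [integral_integral_swap hint, ← integral_const_mul]
        rfl

lemma stronglyMeasurable_wienerKernel (hψ : Continuous ψ) (c d a : ℝ) :
    StronglyMeasurable fun p : ℝ × ℝ => wienerKernel ψ c d a p.1 p.2 := by
  have hcont : Continuous fun q : (ℝ × ℝ) × ℝ => ψ ((q.2 - q.1.1) / a) * ψ ((q.2 - q.1.2) / a) := by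
    fun_prop
  exact (hcont.stronglyMeasurable.integral_prod_right'
    (ν := volume.restrict (Ioo c d))).const_mul (1 / a)

lemma wienerKernel_eq_intervalIntegral (ha : a ≠ 0) (hcd : c ≤ d) (y z : ℝ) :
    wienerKernel ψ c d a y z = ∫ t in (c - y) / a..(d - y) / a, ψ t * ψ (t + (y - z) / a) := by
  have hshift : ∀ x, ψ ((x - y) / a) * ψ ((x - z) / a) =
      ψ ((x - y) / a) * ψ ((x - y) / a + (y - z) / a) := fun x => by ring_nf
  rw [wienerKernel, ← integral_Ioc_eq_integral_Ioo, ← intervalIntegral.integral_of_le hcd]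
  simp_rw [hshift]
  rw [intervalIntegral.integral_comp_sub_right (fun u => ψ (u / a) * ψ (u / a + (y - z) / a)) y,
    intervalIntegral.integral_comp_div (fun t => ψ t * ψ (t + (y - z) / a)) ha, smul_eq_mul,
    ← mul_assoc, one_div_mul_cancel ha, one_mul]

lemma tendsto_const_div_nhdsGT_zero_cobounded {r : ℝ} (hr : r ≠ 0) :
    Tendsto (fun a : ℝ => r / a) (𝓝[>] 0) (Bornology.cobounded ℝ) := by
  simpa only [div_eq_mul_inv, Function.comp_def] using
    (tendsto_mul_left_cobounded hr).comp (tendsto_inv₀_nhdsNE_zero.mono_left (nhdsGT_le_nhdsNE 0))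

section Bounded

variable (hψ : Continuous ψ) (hint : Integrable ψ) (hM : ∀ x, |ψ x| ≤ M)
include hψ hint hM

lemma integrable_abs_mul_abs_comp_add (s : ℝ) : Integrable fun t => |ψ t| * |ψ (t + s)| :=
  hint.abs.mul_bdd (hψ.comp (continuous_add_const s)).abs.aestronglyMeasurable
    (Eventually.of_forall fun t => by simpa using hM (t + s))

lemma abs_wienerKernel_le_integral (ha : a ≠ 0) (hcd : c ≤ d) (y z : ℝ) :
    |wienerKernel ψ c d a y z| ≤ ∫ t, |ψ t| * |ψ (t + (y - z) / a)| := by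
  rw [wienerKernel_eq_intervalIntegral ha hcd, ← Real.norm_eq_abs]
  refine intervalIntegral.norm_integral_le_integral_norm_uIoc.trans ?_
  simp only [Real.norm_eq_abs, abs_mul]
  exact setIntegral_le_integral (integrable_abs_mul_abs_comp_add hψ hint hM _)
    (Eventually.of_forall fun t => by positivity)

lemma abs_wienerKernel_le (ha : a ≠ 0) (hcd : c ≤ d) (y z : ℝ) :
    |wienerKernel ψ c d a y z| ≤ (∫ t, |ψ t|) * M := by
  refine (abs_wienerKernel_le_integral hψ hint hM ha hcd y z).trans ?_
  rw [← integral_mul_const]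
  exact integral_mono (integrable_abs_mul_abs_comp_add hψ hint hM _) (hint.abs.mul_const M)
    fun t => mul_le_mul_of_nonneg_left (hM _) (abs_nonneg _)

lemma tendsto_integral_abs_mul_abs_comp_add {ι : Type*} {l : Filter ι} [l.IsCountablyGenerated]
    (h0 : Tendsto ψ (Bornology.cobounded ℝ) (𝓝 0)) {s : ι → ℝ}
    (hs : Tendsto s l (Bornology.cobounded ℝ)) :
    Tendsto (fun i => ∫ t, |ψ t| * |ψ (t + s i)|) l (𝓝 0) := by
  rw [← integral_zero ℝ ℝ]
  refine tendsto_integral_filter_of_dominated_convergence (fun t => |ψ t| * M)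
    (Eventually.of_forall fun i => (integrable_abs_mul_abs_comp_add hψ hint hM _).1)
    (Eventually.of_forall fun i => Eventually.of_forall fun t => ?_) (hint.abs.mul_const M)
    (Eventually.of_forall fun t => ?_)
  · rw [Real.norm_eq_abs, abs_of_nonneg (by positivity)]
    exact mul_le_mul_of_nonneg_left (hM _) (abs_nonneg _)
  · simpa using ((h0.comp ((tendsto_const_add_cobounded t).comp hs)).abs.const_mul |ψ t|)

lemma tendsto_wienerKernel_of_ne (h0 : Tendsto ψ (Bornology.cobounded ℝ) (𝓝 0)) (hcd : c ≤ d)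
    {y z : ℝ} (hyz : y ≠ z) :
    Tendsto (fun a => wienerKernel ψ c d a y z) (𝓝[>] 0) (𝓝 0) := by
  refine squeeze_zero_norm' ?_ (tendsto_integral_abs_mul_abs_comp_add hψ hint hM h0
    (tendsto_const_div_nhdsGT_zero_cobounded (sub_ne_zero.mpr hyz)))
  filter_upwards [self_mem_nhdsWithin] with a (ha : 0 < a)
  exact abs_wienerKernel_le_integral hψ hint hM ha.ne' hcd y z

lemma tendsto_wienerKernel_self (heven : ∀ x, ψ (-x) = ψ x) (hcd : c < d) (y : ℝ) :
    Tendsto (fun a => wienerKernel ψ c d a y y) (𝓝[>] 0)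
      (𝓝 ((∫ t, |ψ t| ^ 2) * wienerWeight c d y)) := by
  have hsq : Integrable fun t => |ψ t| ^ 2 := by
    simpa [sq] using integrable_abs_mul_abs_comp_add hψ hint hM 0
  have hsq_even : ∀ t, |ψ (-t)| ^ 2 = |ψ t| ^ 2 := fun t => by rw [heven]
  have hdiff : ∀ᶠ a in 𝓝[>] (0 : ℝ), wienerKernel ψ c d a y y =
      (∫ t in 0..(d - y) / a, |ψ t| ^ 2) - ∫ t in 0..(c - y) / a, |ψ t| ^ 2 := by
    filter_upwards [self_mem_nhdsWithin] with a (ha : 0 < a)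
    rw [intervalIntegral.integral_interval_sub_left hsq.intervalIntegrable hsq.intervalIntegrable,
      wienerKernel_eq_intervalIntegral ha.ne' hcd.le]
    simp [sq]
  have hlimit : (∫ t, |ψ t| ^ 2) * wienerWeight c d y =
      Real.sign (d - y) * ((∫ t, |ψ t| ^ 2) / 2) - Real.sign (c - y) * ((∫ t, |ψ t| ^ 2) / 2) := by
    rw [wienerWeight_eq_sign hcd]
    ring
  rw [hlimit]
  exact ((tendsto_intervalIntegral_zero_div_of_even hsq hsq_even _).sub
    (tendsto_intervalIntegral_zero_div_of_even hsq hsq_even _)).congr' (EventuallyEq.symm hdiff)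

lemma tendsto_integral_wienerKernel (h0 : Tendsto ψ (Bornology.cobounded ℝ) (𝓝 0))
    (heven : ∀ x, ψ (-x) = ψ x) (μ : Measure ℝ) [IsFiniteMeasure μ] (hcd : c < d) :
    Tendsto (fun a => ∫ p, wienerKernel ψ c d a p.1 p.2 ∂(μ.prod μ)) (𝓝[>] 0)
      (𝓝 ((∫ t, |ψ t| ^ 2) * ∫ y, wienerWeight c d y * μ.real {y} ∂μ)) := by
  set I := ∫ t, |ψ t| ^ 2
  have hlim : ∀ p : ℝ × ℝ, Tendsto (fun a => wienerKernel ψ c d a p.1 p.2) (𝓝[>] 0)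
      (𝓝 ((diagonal ℝ).indicator (fun p => I * wienerWeight c d p.1) p)) := by
    rintro ⟨y, z⟩
    by_cases hyz : y = z
    · subst hyz
      rw [indicator_of_mem (mem_diagonal y)]
      exact tendsto_wienerKernel_self hψ hint hM heven hcd y
    · rw [indicator_of_notMem (by simpa using hyz)]
      exact tendsto_wienerKernel_of_ne hψ hint hM h0 hcd.le hyz
  have hbound : ∀ᶠ a in 𝓝[>] (0 : ℝ), ∀ᵐ p ∂(μ.prod μ),
      ‖wienerKernel ψ c d a p.1 p.2‖ ≤ (∫ t, |ψ t|) * M := by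
    filter_upwards [self_mem_nhdsWithin] with a (ha : 0 < a)
    exact Eventually.of_forall fun p => abs_wienerKernel_le hψ hint hM ha.ne' hcd.le p.1 p.2
  have hweight : ∀ y, |I * wienerWeight c d y| ≤ |I| := fun y => by
    simpa [abs_mul] using mul_le_mul_of_nonneg_left (abs_wienerWeight_le_one hcd y) (abs_nonneg I)
  have hDCT := tendsto_integral_filter_of_dominated_convergence _
    (Eventually.of_forall fun a => (stronglyMeasurable_wienerKernel hψ c d a).aestronglyMeasurable)
    hbound (integrable_const _) (Eventually.of_forall hlim)
  rwa [integral_indicator_diagonal (measurable_wienerWeight.const_mul I) hweight,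
    funext fun y => mul_assoc I _ _, integral_const_mul] at hDCT

end Bounded

end WienerKernel

theorem wiener_type_theorem_general
    (ψ : ℝ → ℝ) (hC1 : ContDiff ℝ 1 ψ)
    (heven : ∀ x : ℝ, ψ (-x) = ψ x)
    (hdecay : ∃ C > (0:ℝ), ∃ δ > (1:ℝ), ∀ x : ℝ,
      |ψ x| + |x * deriv ψ x| ≤ C * (1 + x ^ 2) ^ (-δ / 2))
    (μ : Measure ℝ) [IsProbabilityMeasure μ]
    (c d : ℝ) (hcd : c < d) :
    Tendsto (fun a : ℝ => (1 / a) * ∫ x in Ioo c d, |∫ y : ℝ, ψ ((x - y) / a) ∂μ| ^ 2)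
      (𝓝[>] 0)
      (𝓝 ((∫ x : ℝ, |ψ x| ^ 2) *
        ((∑' x : Ioo c d, (μ {(x : ℝ)}).toReal ^ 2) +
          (1 / 2) * ((μ {c}).toReal ^ 2 + (μ {d}).toReal ^ 2)))) := by
  obtain ⟨C, -, δ, hδ, hdec⟩ := hdecay
  have hb : ∀ x, |ψ x| ≤ C * (1 + x ^ 2) ^ (-δ / 2) :=
    fun x => (le_add_of_nonneg_right (abs_nonneg _)).trans (hdec x)
  have hψ : Continuous ψ := hC1.continuous
  have hint := integrable_of_abs_le_rpow_decay hψ.aestronglyMeasurable hδ hb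
  have hM := abs_le_of_abs_le_rpow_decay (by linarith) hb
  have h0 := tendsto_cobounded_of_abs_le_rpow_decay (by linarith) hb
  have hlim := tendsto_integral_wienerKernel hψ hint hM h0 heven μ hcd
  rw [integral_wienerWeight_mul_measureReal_singleton] at hlim
  simp only [measureReal_def] at hlim
  exact hlim.congr fun a => (integral_sq_abs_integral_eq_integral_wienerKernel hψ hM μ c d a).symm

/-- Theorem 2.4 (1): a Wiener-type theorem:
`(1/a) ∫_c^d |(ψ_a * μ)(x)|² dx → C₀ (Σ_{x ∈ (c,d)} μ({x})² + (μ({c})² + μ({d})²)/2)`. -/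
theorem wiener_type_theorem
    (ψ : ℝ → ℝ) (hC1 : ContDiff ℝ 1 ψ) (hψ0 : ψ 0 = 1)
    (heven : ∀ x : ℝ, ψ (-x) = ψ x)
    (hdecay : ∃ C > (0:ℝ), ∃ δ > (1:ℝ), ∀ x : ℝ,
      |ψ x| + |x * deriv ψ x| ≤ C * (1 + x ^ 2) ^ (-δ / 2))
    (μ : Measure ℝ) [IsProbabilityMeasure μ]
    (c d : ℝ) (hcd : c < d) :
    Tendsto (fun a : ℝ => (1 / a) * ∫ x in Ioo c d, |∫ y : ℝ, ψ ((x - y) / a) ∂μ| ^ 2)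
      (𝓝[>] 0)
      (𝓝 ((∫ x : ℝ, |ψ x| ^ 2) *
        ((∑' x : Ioo c d, (μ {(x : ℝ)}).toReal ^ 2) +
          (1 / 2) * ((μ {c}).toReal ^ 2 + (μ {d}).toReal ^ 2)))) :=
  wiener_type_theorem_general ψ hC1 heven hdecay μ c d hcd
end

section
/- Let ψ: ℝ → ℝ be C¹ with ψ(0)=1, ψ even, and suppose there exist C>0 and δ>1 such that |ψ(x)| + |x·ψ'(x)| ≤ C·(1+x²)^{-δ/2} for all x ∈ ℝ, and A_ψ := ∫_ℝ ψ(x) dx ≠ 0. Let μ be a probability measure on ℝ with Lebesgue decomposition μ = μ_ac + μ_s with respect to Lebesgue measure, where μ_ac has density dμ_ac/dx. Then for every bounded interval (c,d) with c < d and every p with 0 < p < 1, lim_{a→0⁺} ∫_c^d |(ψ̃_a * μ)(x)|^p dx = |A_ψ|^p · ∫_c^d |dμ_ac/dx (x)|^p dx, where ψ̃_a(x) = (1/a)·ψ(x/a). -/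
open MeasureTheory Filter Real Set Topology
open scoped NNReal ENNReal

namespace Thm24

variable {ψ : ℝ → ℝ} {C δ : ℝ}

noncomputable def Phi (C δ : ℝ) (s : ℝ) : ℝ := C * (1 + s ^ 2) ^ (-δ / 2)

lemma decay_le_rpow {δ : ℝ} (hδ : 1 < δ) {s : ℝ} (hs : 1 < s) :
    (1 + s ^ 2) ^ (-δ / 2) ≤ s ^ (-δ) := by
  have hs0 : (0:ℝ) < s := lt_trans one_pos hs
  have h1 : (1 + s ^ 2) ^ (-δ / 2) ≤ (s ^ 2) ^ (-δ / 2) := by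
    rw [show (-δ/2) = -(δ/2) by ring, Real.rpow_neg (by positivity),
      Real.rpow_neg (by positivity)]
    refine inv_anti₀ (Real.rpow_pos_of_pos (by positivity) _) ?_
    exact Real.rpow_le_rpow (by positivity) (by linarith) (by linarith)
  refine h1.trans_eq ?_
  rw [← Real.rpow_natCast s 2, ← Real.rpow_mul hs0.le,
    show ((2:ℕ):ℝ) * (-δ/2) = -δ by push_cast; ring]


lemma integrable_decay {δ : ℝ} (hδ : 1 < δ) :
    Integrable (fun s : ℝ => (1 + s ^ 2) ^ (-δ / 2)) := by
  have hcont : Continuous fun s : ℝ => (1 + s ^ 2) ^ (-δ / 2) := by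
    apply Continuous.rpow_const (by fun_prop)
    intro s; left; positivity
  have key : ∀ s : ℝ, 1 < s → (1 + s ^ 2) ^ (-δ / 2) ≤ s ^ (-δ) := by
    intro s hs
    have hs0 : (0:ℝ) < s := lt_trans one_pos hs
    have h1 : (1 + s ^ 2) ^ (-δ / 2) ≤ (s ^ 2) ^ (-δ / 2) := by
      rw [show (-δ/2) = -(δ/2) by ring, Real.rpow_neg (by positivity),
        Real.rpow_neg (by positivity)]
      refine inv_anti₀ (Real.rpow_pos_of_pos (by positivity) _) ?_
      exact Real.rpow_le_rpow (by positivity) (by linarith) (by linarith)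
    refine h1.trans_eq ?_
    rw [← Real.rpow_natCast s 2, ← Real.rpow_mul hs0.le, show ((2:ℕ):ℝ) * (-δ/2) = -δ by push_cast; ring]
  have hIoi : IntegrableOn (fun s : ℝ => (1 + s ^ 2) ^ (-δ / 2)) (Ioi 1) := by
    refine (integrableOn_Ioi_rpow_of_lt (show -δ < -1 by linarith) one_pos).mono'
      hcont.aestronglyMeasurable ?_
    filter_upwards [ae_restrict_mem measurableSet_Ioi] with s hs
    rw [Real.norm_eq_abs, abs_of_nonneg (by positivity)]
    exact key s hs
  have hIio : IntegrableOn (fun s : ℝ => (1 + s ^ 2) ^ (-δ / 2)) (Iio (-1)) := by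
    have h2 : IntegrableOn (fun s : ℝ => (1 + (-s) ^ 2) ^ (-δ / 2)) (Iio (-1)) := by
      have := (MeasurePreserving.integrableOn_comp_preimage
        (Measure.measurePreserving_neg (volume : Measure ℝ))
        (Homeomorph.neg ℝ).measurableEmbedding).2 hIoi
      refine this.mono_set ?_
      intro x hx
      simp only [mem_preimage, mem_Ioi, mem_Iio] at *
      linarith
    refine h2.congr_fun ?_ measurableSet_Iio
    intro x _; show (1 + (-x) ^ 2) ^ (-δ / 2) = (1 + x ^ 2) ^ (-δ / 2); rw [neg_sq]
  have hIcc : IntegrableOn (fun s : ℝ => (1 + s ^ 2) ^ (-δ / 2)) (Icc (-1) 1) :=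
    hcont.integrableOn_Icc
  have huniv : IntegrableOn (fun s : ℝ => (1 + s ^ 2) ^ (-δ / 2)) univ := by
    refine ((hIio.union hIcc).union hIoi).mono_set ?_
    intro x _
    rcases lt_or_ge x (-1) with h | h
    · exact Or.inl (Or.inl h)
    · rcases le_or_gt x 1 with h' | h'
      · exact Or.inl (Or.inr ⟨h, h'⟩)
      · exact Or.inr h'
  rwa [integrableOn_univ] at huniv



-- decay bound notation
lemma integrable_decay' {δ : ℝ} (hδ : 1 < δ) (C : ℝ) :
    Integrable (Phi C δ) := (integrable_decay hδ).const_mul C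

lemma psi_abs_le (hdec : ∀ x : ℝ, |ψ x| + |x * deriv ψ x| ≤ Phi C δ x) (x : ℝ) :
    |ψ x| ≤ Phi C δ x :=
  le_trans (le_add_of_nonneg_right (abs_nonneg _)) (hdec x)

lemma xpsi'_abs_le (hdec : ∀ x : ℝ, |ψ x| + |x * deriv ψ x| ≤ Phi C δ x) (x : ℝ) :
    |x * deriv ψ x| ≤ Phi C δ x :=
  le_trans (le_add_of_nonneg_left (abs_nonneg _)) (hdec x)

lemma psi_integrable (hC1 : ContDiff ℝ 1 ψ) (hδ : 1 < δ)
    (hdec : ∀ x : ℝ, |ψ x| + |x * deriv ψ x| ≤ Phi C δ x) : Integrable ψ := by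
  refine (integrable_decay' hδ C).mono' hC1.continuous.aestronglyMeasurable ?_
  filter_upwards with x
  rw [Real.norm_eq_abs]; exact psi_abs_le hdec x

lemma deriv_integrableOn_Ioi (hC1 : ContDiff ℝ 1 ψ) (hδ : 1 < δ)
    (hdec : ∀ x : ℝ, |ψ x| + |x * deriv ψ x| ≤ Phi C δ x) :
    IntegrableOn (deriv ψ) (Ioi (0:ℝ)) := by
  have hcont : Continuous (deriv ψ) := hC1.continuous_deriv le_rfl
  have h1 : IntegrableOn (deriv ψ) (Ioc (0:ℝ) 1) :=
    hcont.integrableOn_Icc.mono_set Ioc_subset_Icc_self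
  have h2 : IntegrableOn (deriv ψ) (Ioi (1:ℝ)) := by
    refine ((integrable_decay' hδ C).integrableOn).mono' hcont.aestronglyMeasurable ?_
    filter_upwards [ae_restrict_mem measurableSet_Ioi] with s hs
    have hs1 : (1:ℝ) < s := hs
    rw [Real.norm_eq_abs]
    calc |deriv ψ s| ≤ |s| * |deriv ψ s| := by
          nlinarith [abs_nonneg (deriv ψ s), abs_of_pos (lt_trans one_pos hs1)]
      _ = |s * deriv ψ s| := (abs_mul s (deriv ψ s)).symm
      _ ≤ Phi C δ s := xpsi'_abs_le hdec s
  have := h1.union h2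
  rwa [Ioc_union_Ioi_eq_Ioi zero_le_one] at this

lemma smul_deriv_integrableOn_Ioi (hC1 : ContDiff ℝ 1 ψ) (hδ : 1 < δ)
    (hdec : ∀ x : ℝ, |ψ x| + |x * deriv ψ x| ≤ Phi C δ x) :
    IntegrableOn (fun s => s * deriv ψ s) (Ioi (0:ℝ)) := by
  refine ((integrable_decay' hδ C).integrableOn).mono'
    (continuous_id.mul (hC1.continuous_deriv le_rfl)).aestronglyMeasurable ?_
  filter_upwards with s
  rw [Real.norm_eq_abs]; exact xpsi'_abs_le hdec s

lemma psi_tendsto_atTop (hδ : 1 < δ)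
    (hdec : ∀ x : ℝ, |ψ x| + |x * deriv ψ x| ≤ Phi C δ x) :
    Tendsto ψ atTop (𝓝 0) := by
  have hphi : Tendsto (Phi C δ) atTop (𝓝 0) := by
    have h1 : Tendsto (fun x : ℝ => x ^ (-(δ/2))) atTop (𝓝 0) :=
      tendsto_rpow_neg_atTop (by linarith)
    have h2 : Tendsto (fun x : ℝ => 1 + x ^ 2) atTop atTop := by
      apply tendsto_atTop_add_const_left
      exact (tendsto_pow_atTop two_ne_zero)
    have := (h1.comp h2).const_mul C
    simp only [mul_zero] at this
    refine this.congr fun x => ?_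
    simp only [Function.comp, Phi]
    rw [show -δ/2 = -(δ/2) by ring]
  exact squeeze_zero_norm (fun x => psi_abs_le hdec x) hphi

lemma psi_eq_abs (heven : ∀ x : ℝ, ψ (-x) = ψ x) (u : ℝ) : ψ u = ψ |u| := by
  rcases le_or_gt 0 u with h | h
  · rw [abs_of_nonneg h]
  · rw [abs_of_neg h, ← heven u]

lemma ftc (hC1 : ContDiff ℝ 1 ψ) (hδ : 1 < δ)
    (hdec : ∀ x : ℝ, |ψ x| + |x * deriv ψ x| ≤ Phi C δ x)
    {t : ℝ} (ht : 0 ≤ t) : ψ t = -∫ s in Ioi t, deriv ψ s := by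
  have hint : IntegrableOn (deriv ψ) (Ioi t) :=
    (deriv_integrableOn_Ioi hC1 hδ hdec).mono_set (Ioi_subset_Ioi ht)
  have h1 : Tendsto (fun T => ∫ s in t..T, deriv ψ s) atTop
      (𝓝 (∫ s in Ioi t, deriv ψ s)) :=
    intervalIntegral_tendsto_integral_Ioi t hint tendsto_id
  have h2 : ∀ T : ℝ, ∫ s in t..T, deriv ψ s = ψ T - ψ t := by
    intro T
    exact intervalIntegral.integral_deriv_eq_sub
      (fun x _ => (hC1.differentiable one_ne_zero).differentiableAt)
      ((hC1.continuous_deriv le_rfl).intervalIntegrable t T)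
  have h3 : Tendsto (fun T => ψ T - ψ t) atTop (𝓝 (0 - ψ t)) :=
    (psi_tendsto_atTop hδ hdec).sub_const (ψ t)
  have := tendsto_nhds_unique (h1.congr fun T => h2 T) h3
  rw [this]; ring



/-- rewrite an `Ioi t` integral as an indicator integral over `Ioi 0`. -/
lemma integral_Ioi_eq_indicator (g : ℝ → ℝ) {t : ℝ} (ht : 0 ≤ t) :
    (∫ s in Ioi t, g s) = ∫ s in Ioi (0:ℝ), (Ici t).indicator g s := by
  rw [integral_indicator measurableSet_Ici, Measure.restrict_restrict measurableSet_Ici]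
  refine (setIntegral_congr_set ?_).symm
  rcases ht.eq_or_lt with h | h
  · subst h
    have : (Ici (0:ℝ) ∩ Ioi 0 : Set ℝ) = Ioi 0 := inter_eq_right.mpr Ioi_subset_Ici_self
    rw [this]
    exact EventuallyEq.rfl
  · have : (Ici t ∩ Ioi 0 : Set ℝ) = Ici t := inter_eq_left.mpr fun y hy => lt_of_lt_of_le h hy
    rw [this]
    exact (Ioi_ae_eq_Ici (a := t)).symm

/-- the Fubini representation of the convolution. -/
lemma repr (hC1 : ContDiff ℝ 1 ψ) (heven : ∀ x : ℝ, ψ (-x) = ψ x) (hδ : 1 < δ)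
    (hdec : ∀ x : ℝ, |ψ x| + |x * deriv ψ x| ≤ Phi C δ x)
    (μ : Measure ℝ) [IsProbabilityMeasure μ] (x : ℝ) {a : ℝ} (ha : 0 < a) :
    ∫ y, (1 / a) * ψ ((x - y) / a) ∂μ
      = -(1/a) * ∫ s in Ioi (0:ℝ), deriv ψ s * (μ (Metric.closedBall x (a*s))).toReal := by
  have hcψ' : Continuous (deriv ψ) := hC1.continuous_deriv le_rfl
  set S : Set (ℝ × ℝ) := {p : ℝ × ℝ | |x - p.1| ≤ a * p.2} with hS
  have hSclosed : IsClosed S :=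
    isClosed_le ((continuous_const.sub continuous_fst).abs) (continuous_const.mul continuous_snd)
  set F : ℝ → ℝ → ℝ := fun y s => S.indicator (fun q => deriv ψ q.2) (y, s) with hF
  have hFunc : Function.uncurry F = fun p : ℝ × ℝ => S.indicator (fun q => deriv ψ q.2) p := rfl
  have hFmeas : StronglyMeasurable (Function.uncurry F) := by
    rw [hFunc]
    exact ((hcψ'.comp continuous_snd).stronglyMeasurable).indicator hSclosed.measurableSet
  have hFy : ∀ y : ℝ, (fun s => F y s) = (Ici (|x - y|/a)).indicator (deriv ψ) := by
    intro y; funext s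
    show S.indicator (fun q => deriv ψ q.2) (y, s) = (Ici (|x - y|/a)).indicator (deriv ψ) s
    by_cases h : |x - y| ≤ a * s
    · rw [indicator_of_mem (show (y,s) ∈ S from h),
        indicator_of_mem (mem_Ici.2 ((div_le_iff₀' ha).2 h))]
    · rw [indicator_of_notMem (show (y,s) ∉ S from h),
        indicator_of_notMem (fun hmem => h ((div_le_iff₀' ha).1 (mem_Ici.1 hmem)))]
  have hderInt : IntegrableOn (deriv ψ) (Ioi (0:ℝ)) := deriv_integrableOn_Ioi hC1 hδ hdec
  have hintF : Integrable (Function.uncurry F) (μ.prod (volume.restrict (Ioi (0:ℝ)))) := by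
    rw [integrable_prod_iff hFmeas.aestronglyMeasurable]
    constructor
    · filter_upwards with y
      show Integrable (fun s => F y s) _
      rw [hFy y]
      exact hderInt.indicator measurableSet_Ici
    · have hb : ∀ y : ℝ, (∫ s in Ioi (0:ℝ), ‖F y s‖) ≤ ∫ s in Ioi (0:ℝ), |deriv ψ s| := by
        intro y
        refine integral_mono_of_nonneg (by filter_upwards with s; positivity)
          hderInt.abs ?_
        filter_upwards with s
        rw [show F y s = (Ici (|x - y|/a)).indicator (deriv ψ) s from congrFun (hFy y) s]
        have := norm_indicator_le_norm_self (f := deriv ψ) (s := Ici (|x - y|/a)) s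
        simpa [Real.norm_eq_abs] using this
      refine (integrable_const (∫ s in Ioi (0:ℝ), |deriv ψ s|)).mono' ?_ ?_
      · exact (hFmeas.norm.integral_prod_right').aestronglyMeasurable
      · filter_upwards with y
        rw [Real.norm_eq_abs, abs_of_nonneg (integral_nonneg fun s => norm_nonneg _)]
        exact hb y
  have hinner : ∀ s : ℝ, (∫ y, F y s ∂μ)
      = deriv ψ s * (μ (Metric.closedBall x (a*s))).toReal := by
    intro s
    have heq : (fun y => F y s) = (Metric.closedBall x (a*s)).indicator (fun _ => deriv ψ s) := by
      funext y
      have hiff : ((y, s) ∈ S) ↔ y ∈ Metric.closedBall x (a*s) := by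
        simp only [hS, mem_setOf_eq, Metric.mem_closedBall, Real.dist_eq, abs_sub_comm y x]
      show S.indicator (fun q => deriv ψ q.2) (y, s) = _
      by_cases h : (y, s) ∈ S
      · rw [indicator_of_mem h, indicator_of_mem (hiff.1 h)]
      · rw [indicator_of_notMem h, indicator_of_notMem (fun hmem => h (hiff.2 hmem))]
    rw [heq, integral_indicator_const _ measurableSet_closedBall, smul_eq_mul, mul_comm]
    rfl
  have hpoint : ∀ y : ℝ, ψ ((x - y)/a) = -∫ s in Ioi (0:ℝ), F y s := by
    intro y
    have habs : |(x - y)/a| = |x - y|/a := by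
      rw [abs_div, abs_of_pos ha]
    rw [psi_eq_abs heven, habs, ftc hC1 hδ hdec (div_nonneg (abs_nonneg _) ha.le),
      integral_Ioi_eq_indicator _ (div_nonneg (abs_nonneg _) ha.le), ← hFy y]
  calc ∫ y, (1 / a) * ψ ((x - y) / a) ∂μ
      = (1/a) * ∫ y, ψ ((x - y) / a) ∂μ := integral_const_mul _ _
    _ = (1/a) * ∫ y, (-∫ s in Ioi (0:ℝ), F y s) ∂μ := by
        congr 1
        exact integral_congr_ae (Filter.Eventually.of_forall fun y => hpoint y)
    _ = -(1/a) * ∫ y, (∫ s in Ioi (0:ℝ), F y s) ∂μ := by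
        rw [integral_neg]; ring
    _ = -(1/a) * ∫ s in Ioi (0:ℝ), (∫ y, F y s ∂μ) := by
        rw [integral_integral_swap hintF]
    _ = -(1/a) * ∫ s in Ioi (0:ℝ), deriv ψ s * (μ (Metric.closedBall x (a*s))).toReal := by
        congr 1
        exact integral_congr_ae (Filter.Eventually.of_forall fun s => hinner s)

/-- `∫ ψ = -2 ∫_{Ioi 0} s ψ'(s) ds`. -/
lemma A_eq (hC1 : ContDiff ℝ 1 ψ) (heven : ∀ x : ℝ, ψ (-x) = ψ x) (hC : 0 < C) (hδ : 1 < δ)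
    (hdec : ∀ x : ℝ, |ψ x| + |x * deriv ψ x| ≤ Phi C δ x) :
    (∫ z, ψ z) = -2 * ∫ s in Ioi (0:ℝ), s * deriv ψ s := by
  have hψint : Integrable ψ := psi_integrable hC1 hδ hdec
  have hP : ∀ T : ℝ, ∫ s in (0:ℝ)..T, s * deriv ψ s
      = T * ψ T - 0 * ψ 0 - ∫ s in (0:ℝ)..T, 1 * ψ s := by
    intro T
    refine intervalIntegral.integral_mul_deriv_eq_deriv_mul
      (fun x _ => hasDerivAt_id x) (fun x _ => ?_) ?_ ?_
    · exact (hC1.differentiable one_ne_zero).differentiableAt.hasDerivAt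
    · exact intervalIntegrable_const
    · exact (hC1.continuous_deriv le_rfl).intervalIntegrable _ _
  have hL1 : Tendsto (fun T => ∫ s in (0:ℝ)..T, s * deriv ψ s) atTop
      (𝓝 (∫ s in Ioi (0:ℝ), s * deriv ψ s)) :=
    intervalIntegral_tendsto_integral_Ioi 0 (smul_deriv_integrableOn_Ioi hC1 hδ hdec) tendsto_id
  have hL2 : Tendsto (fun T : ℝ => T * ψ T) atTop (𝓝 0) := by
    have hbd : ∀ᶠ T : ℝ in atTop, ‖T * ψ T‖ ≤ C * T ^ (1 - δ) := by
      filter_upwards [eventually_gt_atTop (1:ℝ)] with T hT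
      have hT0 : (0:ℝ) < T := lt_trans one_pos hT
      rw [Real.norm_eq_abs, abs_mul, abs_of_pos hT0]
      calc T * |ψ T| ≤ T * (C * T ^ (-δ)) := by
            refine mul_le_mul_of_nonneg_left ?_ hT0.le
            refine (psi_abs_le hdec T).trans ?_
            exact mul_le_mul_of_nonneg_left (decay_le_rpow hδ hT) hC.le
        _ = C * T ^ (1 - δ) := by
            rw [show (1 - δ) = 1 + (-δ) by ring, Real.rpow_add hT0, Real.rpow_one]
            ring
    have hlim : Tendsto (fun T : ℝ => C * T ^ (1 - δ)) atTop (𝓝 0) := by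
      have := (tendsto_rpow_neg_atTop (show (0:ℝ) < δ - 1 by linarith)).const_mul C
      rw [mul_zero] at this
      refine this.congr fun T => ?_
      rw [show -(δ - 1) = 1 - δ by ring]
    exact squeeze_zero_norm' hbd hlim
  have hL3 : Tendsto (fun T => ∫ s in (0:ℝ)..T, 1 * ψ s) atTop
      (𝓝 (∫ s in Ioi (0:ℝ), ψ s)) := by
    simp only [one_mul]
    exact intervalIntegral_tendsto_integral_Ioi 0 hψint.integrableOn tendsto_id
  have hcomb : Tendsto (fun T => T * ψ T - 0 * ψ 0 - ∫ s in (0:ℝ)..T, 1 * ψ s) atTop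
      (𝓝 (0 - 0 * ψ 0 - ∫ s in Ioi (0:ℝ), ψ s)) :=
    (hL2.sub_const _).sub hL3
  have hkey : (∫ s in Ioi (0:ℝ), s * deriv ψ s) = -∫ s in Ioi (0:ℝ), ψ s := by
    have := tendsto_nhds_unique (hL1.congr fun T => hP T) hcomb
    rw [this]; ring
  have hsplit : (∫ s in Ioi (0:ℝ), ψ s) + ∫ s in (Ioi (0:ℝ))ᶜ, ψ s = ∫ z, ψ z :=
    integral_add_compl measurableSet_Ioi hψint
  have hneg : (∫ s in (Ioi (0:ℝ))ᶜ, ψ s) = ∫ s in Ioi (0:ℝ), ψ s := by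
    rw [compl_Ioi]
    have := integral_comp_neg_Iic (0:ℝ) ψ
    rw [neg_zero] at this
    rw [← this]
    exact integral_congr_ae (Filter.Eventually.of_forall fun y => (heven y).symm)
  rw [hkey, ← hsplit, hneg]
  ring



lemma pointwise_limit (hC1 : ContDiff ℝ 1 ψ) (heven : ∀ x : ℝ, ψ (-x) = ψ x)
    (hC : 0 < C) (hδ : 1 < δ)
    (hdec : ∀ x : ℝ, |ψ x| + |x * deriv ψ x| ≤ Phi C δ x)
    (μ : Measure ℝ) [IsProbabilityMeasure μ] :
    ∀ᵐ x : ℝ, Tendsto (fun a => ∫ y, (1/a) * ψ ((x - y)/a) ∂μ) (𝓝[>] (0:ℝ))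
      (𝓝 ((∫ z, ψ z) * (μ.rnDeriv volume x).toReal)) := by
  have hcψ' : Continuous (deriv ψ) := hC1.continuous_deriv le_rfl
  filter_upwards [Besicovitch.ae_tendsto_rnDeriv μ volume, Measure.rnDeriv_lt_top μ volume]
    with x hx hfin
  set fx := (μ.rnDeriv volume x).toReal with hfx
  have hfx0 : 0 ≤ fx := ENNReal.toReal_nonneg
  have h1 : Tendsto (fun r => (μ (Metric.closedBall x r)).toReal / (2*r)) (𝓝[>] (0:ℝ))
      (𝓝 fx) := by
    refine ((ENNReal.tendsto_toReal hfin.ne).comp hx).congr' ?_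
    filter_upwards [self_mem_nhdsWithin] with r hr
    have hr0 : (0:ℝ) < r := hr
    show (μ (Metric.closedBall x r) / volume (Metric.closedBall x r)).toReal = _
    rw [Real.volume_closedBall, ENNReal.toReal_div, ENNReal.toReal_ofReal (by positivity)]
  obtain ⟨K, hK0, hK⟩ : ∃ K : ℝ, 0 < K ∧ ∀ r : ℝ, 0 < r →
      (μ (Metric.closedBall x r)).toReal ≤ K * (2*r) := by
    have hev : ∀ᶠ r in 𝓝[>] (0:ℝ),
        (μ (Metric.closedBall x r)).toReal / (2*r) < fx + 1 :=
      h1.eventually_lt_const (by linarith)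
    obtain ⟨r₀, hr₀, hsub⟩ := mem_nhdsGT_iff_exists_Ioc_subset.1 hev
    have hr₀0 : (0:ℝ) < r₀ := hr₀
    refine ⟨max (fx+1) (1/(2*r₀)), lt_of_lt_of_le (by linarith) (le_max_left _ _), ?_⟩
    intro r hr
    rcases le_or_gt r r₀ with h | h
    · have hlt : (μ (Metric.closedBall x r)).toReal / (2*r) < fx + 1 := hsub ⟨hr, h⟩
      have h2r : (0:ℝ) < 2*r := by linarith
      rw [div_lt_iff₀ h2r] at hlt
      calc (μ (Metric.closedBall x r)).toReal ≤ (fx+1) * (2*r) := hlt.le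
        _ ≤ max (fx+1) (1/(2*r₀)) * (2*r) :=
          mul_le_mul_of_nonneg_right (le_max_left _ _) h2r.le
    · have hμ1 : (μ (Metric.closedBall x r)).toReal ≤ 1 := by
        have hle : μ (Metric.closedBall x r) ≤ 1 := prob_le_one
        simpa using ENNReal.toReal_mono (by simp) hle
      have hmax0 : 0 < max (fx+1) (1/(2*r₀)) := lt_of_lt_of_le (by linarith) (le_max_left _ _)
      calc (μ (Metric.closedBall x r)).toReal ≤ 1 := hμ1
        _ = (1/(2*r₀)) * (2*r₀) := by field_simp
        _ ≤ max (fx+1) (1/(2*r₀)) * (2*r) := by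
            apply mul_le_mul (le_max_right _ _) (by linarith) (by linarith) hmax0.le
  have hrepr : (fun a : ℝ => ∫ y, (1/a) * ψ ((x - y)/a) ∂μ) =ᶠ[𝓝[>] (0:ℝ)]
      (fun a : ℝ => ∫ s in Ioi (0:ℝ),
        -(deriv ψ s * (μ (Metric.closedBall x (a*s))).toReal / a)) := by
    filter_upwards [self_mem_nhdsWithin] with a ha
    have ha0 : (0:ℝ) < a := ha
    rw [repr hC1 heven hδ hdec μ x ha0, integral_neg, integral_div]
    ring
  have hDCT : Tendsto (fun a : ℝ => ∫ s in Ioi (0:ℝ),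
      -(deriv ψ s * (μ (Metric.closedBall x (a*s))).toReal / a)) (𝓝[>] (0:ℝ))
      (𝓝 (∫ s in Ioi (0:ℝ), -(deriv ψ s * (2*s) * fx))) := by
    refine tendsto_integral_filter_of_dominated_convergence
      (bound := fun s => 2 * K * |s * deriv ψ s|) ?_ ?_ ?_ ?_
    · filter_upwards [self_mem_nhdsWithin] with a ha
      have ha0 : (0:ℝ) < a := ha
      have hmono : Monotone (fun s : ℝ => (μ (Metric.closedBall x (a*s))).toReal) := by
        intro s t hst
        exact ENNReal.toReal_mono (measure_ne_top _ _)
          (measure_mono (Metric.closedBall_subset_closedBall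
            (mul_le_mul_of_nonneg_left hst ha0.le)))
      exact ((((hcψ'.measurable).mul hmono.measurable).div_const a).neg).aestronglyMeasurable
    · filter_upwards [self_mem_nhdsWithin] with a ha
      have ha0 : (0:ℝ) < a := ha
      filter_upwards [ae_restrict_mem measurableSet_Ioi] with s hs
      have hs0 : (0:ℝ) < s := hs
      have hb := hK (a*s) (mul_pos ha0 hs0)
      rw [Real.norm_eq_abs, abs_neg, abs_div, abs_of_pos ha0, abs_mul,
        abs_of_nonneg (ENNReal.toReal_nonneg)]
      calc |deriv ψ s| * (μ (Metric.closedBall x (a*s))).toReal / a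
          ≤ |deriv ψ s| * (K * (2*(a*s))) / a := by gcongr
        _ = 2*K*(|deriv ψ s| * s) := by field_simp
        _ = 2*K*|s * deriv ψ s| := by rw [abs_mul, abs_of_pos hs0]; ring
    · exact ((smul_deriv_integrableOn_Ioi hC1 hδ hdec).abs.const_mul (2*K))
    · filter_upwards [ae_restrict_mem measurableSet_Ioi] with s hs
      have hs0 : (0:ℝ) < s := hs
      have hmul : Tendsto (fun a : ℝ => a * s) (𝓝[>] (0:ℝ)) (𝓝[>] (0:ℝ)) := by
        refine tendsto_nhdsWithin_of_tendsto_nhds_of_eventually_within _ ?_ ?_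
        · have hcont : Continuous (fun a : ℝ => a * s) := continuous_id.mul continuous_const
          have := hcont.tendsto (0:ℝ)
          simpa using this.mono_left nhdsWithin_le_nhds
        · filter_upwards [self_mem_nhdsWithin] with a ha
          exact mul_pos ha hs0
      have hconv : Tendsto (fun a : ℝ =>
          (μ (Metric.closedBall x (a*s))).toReal / (2*(a*s))) (𝓝[>] (0:ℝ)) (𝓝 fx) :=
        h1.comp hmul
      have heq : ∀ᶠ a in 𝓝[>] (0:ℝ),
          -(deriv ψ s * (2*s) * ((μ (Metric.closedBall x (a*s))).toReal / (2*(a*s))))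
            = -(deriv ψ s * (μ (Metric.closedBall x (a*s))).toReal / a) := by
        filter_upwards [self_mem_nhdsWithin] with a ha
        have ha0 : (0:ℝ) < a := ha
        field_simp
      refine Tendsto.congr' heq ?_
      exact ((hconv.const_mul (deriv ψ s * (2*s))).neg)
  have hval : (∫ s in Ioi (0:ℝ), -(deriv ψ s * (2*s) * fx)) = (∫ z, ψ z) * fx := by
    have heq : (fun s => -(deriv ψ s * (2*s) * fx)) = fun s => (-2*fx) * (s * deriv ψ s) := by
      funext s; ring
    rw [heq, integral_const_mul, A_eq hC1 heven hC hδ hdec]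
    ring
  rw [← hval]
  exact Tendsto.congr' hrepr.symm hDCT



lemma real_rpow_add_le {p : ℝ} (hp0 : 0 < p) (hp1 : p < 1) {x y : ℝ}
    (hx : 0 ≤ x) (hy : 0 ≤ y) : (x + y) ^ p ≤ x ^ p + y ^ p := by
  have h := NNReal.rpow_add_le_add_rpow (Real.toNNReal x) (Real.toNNReal y) hp0.le hp1.le
  calc (x + y) ^ p = ((((Real.toNNReal x) + (Real.toNNReal y) : ℝ≥0) : ℝ)) ^ p := by
        rw [NNReal.coe_add, Real.coe_toNNReal _ hx, Real.coe_toNNReal _ hy]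
    _ = ((((Real.toNNReal x) + (Real.toNNReal y)) ^ p : ℝ≥0) : ℝ) :=
        (NNReal.coe_rpow _ _).symm
    _ ≤ (((Real.toNNReal x) ^ p + (Real.toNNReal y) ^ p : ℝ≥0) : ℝ) := by exact_mod_cast h
    _ = x ^ p + y ^ p := by
        rw [NNReal.coe_add, NNReal.coe_rpow, NNReal.coe_rpow,
          Real.coe_toNNReal _ hx, Real.coe_toNNReal _ hy]

lemma rpow_abs_sub_abs_le {p : ℝ} (hp0 : 0 < p) (hp1 : p < 1) (u v : ℝ) :
    |(|u| ^ p - |v| ^ p)| ≤ |u - v| ^ p := by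
  have key : ∀ a b : ℝ, |a| ^ p ≤ |b| ^ p + |a - b| ^ p := by
    intro a b
    have h1 : |a| ≤ |b| + |a - b| := by
      calc |a| = |b + (a - b)| := by ring_nf
        _ ≤ |b| + |a - b| := abs_add_le _ _
    calc |a| ^ p ≤ (|b| + |a - b|) ^ p :=
          Real.rpow_le_rpow (abs_nonneg _) h1 hp0.le
      _ ≤ |b| ^ p + |a - b| ^ p := real_rpow_add_le hp0 hp1 (abs_nonneg _) (abs_nonneg _)
  rw [abs_sub_le_iff]
  constructor
  · linarith [key u v]
  · have := key v u
    rw [abs_sub_comm] at this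
    linarith

lemma vitali (I : Set ℝ) (hIfin : volume I ≠ ⊤)
    {p : ℝ} (hp0 : 0 < p) (hp1 : p < 1) (u : ℕ → ℝ → ℝ)
    (hmeas : ∀ n, Measurable (u n)) {M : ℝ≥0∞} (hM : M ≠ ⊤)
    (hbd : ∀ n, (∫⁻ x in I, ENNReal.ofReal |u n x|) ≤ M)
    (hae : ∀ᵐ x ∂(volume.restrict I), Tendsto (fun n => u n x) atTop (𝓝 0)) :
    Tendsto (fun n => ∫ x in I, |u n x| ^ p) atTop (𝓝 0) := by
  haveI : IsFiniteMeasure (volume.restrict I) := ⟨by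
    rw [Measure.restrict_apply_univ]
    exact lt_top_iff_ne_top.2 hIfin⟩
  set L : ℕ → ℝ≥0∞ := fun n => ∫⁻ x in I, (ENNReal.ofReal |u n x|) ^ p with hLdef
  have hIeq : ∀ n, (∫ x in I, |u n x| ^ p) = (L n).toReal := by
    intro n
    rw [integral_eq_lintegral_of_nonneg_ae
      (Filter.Eventually.of_forall fun x => Real.rpow_nonneg (abs_nonneg _) p)
      (((Real.continuous_rpow_const hp0.le).measurable.comp
        (hmeas n).abs).aestronglyMeasurable)]
    congr 1
    refine lintegral_congr fun x => ?_
    rw [← ENNReal.ofReal_rpow_of_nonneg (abs_nonneg _) hp0.le]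
  have hconv : TendstoInMeasure (volume.restrict I) (fun n => u n) atTop (fun _ => (0:ℝ)) := by
    refine tendstoInMeasure_of_tendsto_ae (fun n => (hmeas n).aestronglyMeasurable) ?_
    exact hae
  have hLlim : Tendsto L atTop (𝓝 0) := by
    rw [ENNReal.tendsto_atTop_zero]
    intro η hη
    have hη2 : (0:ℝ≥0∞) < η / 2 := ENNReal.div_pos hη.ne' (by norm_num)
    obtain ⟨ε, hεmem, hεsmall⟩ : ∃ ε : ℝ, ε ∈ Ioi (0:ℝ) ∧
        ENNReal.ofReal (ε ^ p) * volume I < η / 2 := by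
      have h1 : Tendsto (fun ε : ℝ => ε ^ p) (𝓝[>] (0:ℝ)) (𝓝 0) := by
        have := ((Real.continuous_rpow_const hp0.le).tendsto (0:ℝ)).mono_left
          (nhdsWithin_le_nhds : 𝓝[>] (0:ℝ) ≤ 𝓝 0)
        rwa [Real.zero_rpow hp0.ne'] at this
      have h2 : Tendsto (fun ε : ℝ => ENNReal.ofReal (ε ^ p) * volume I)
          (𝓝[>] (0:ℝ)) (𝓝 0) := by
        have h3 := (ENNReal.continuous_ofReal.tendsto 0).comp h1
        rw [ENNReal.ofReal_zero] at h3
        have := ENNReal.Tendsto.mul_const h3 (Or.inr hIfin)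
        rwa [zero_mul] at this
      have := (h2.eventually (gt_mem_nhds hη2)).and self_mem_nhdsWithin
      obtain ⟨ε, hε1, hε2⟩ := this.exists
      exact ⟨ε, hε2, hε1⟩
    have hε0 : (0:ℝ) < ε := hεmem
    have hmc := tendstoInMeasure_iff_dist.1 hconv ε hε0
    have hpow : Tendsto (fun n => M ^ p *
        ((volume.restrict I) {x | ε ≤ dist (u n x) (0:ℝ)}) ^ (1-p)) atTop (𝓝 0) := by
      have hMp : M ^ p ≠ ⊤ := ENNReal.rpow_ne_top_of_nonneg hp0.le hM
      have := (ENNReal.tendsto_const_mul_rpow_nhds_zero_of_pos hMp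
        (show (0:ℝ) < 1 - p by linarith)).comp hmc
      exact this
    have hev2 := hpow.eventually (gt_mem_nhds hη2)
    rw [eventually_atTop] at hev2
    obtain ⟨N, hN⟩ := hev2
    refine ⟨N, fun n hn => ?_⟩
    set E := {x : ℝ | ε ≤ dist (u n x) (0:ℝ)} with hEdef
    have hEmeas : MeasurableSet E := by
      have : E = {x : ℝ | ε ≤ |u n x|} := by
        ext x; simp [hEdef, Real.dist_0_eq_abs]
      rw [this]
      exact measurableSet_le measurable_const (hmeas n).abs
    have hsplit : L n ≤ ENNReal.ofReal (ε^p) * volume I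
        + M ^ p * ((volume.restrict I) E) ^ (1-p) := by
      have hpoint : ∀ x : ℝ, (ENNReal.ofReal |u n x|) ^ p
          ≤ ENNReal.ofReal (ε^p) + (ENNReal.ofReal |u n x|) ^ p * E.indicator 1 x := by
        intro x
        by_cases hx : x ∈ E
        · rw [indicator_of_mem hx]
          simp only [Pi.one_apply, mul_one]
          exact le_add_self
        · rw [indicator_of_notMem hx, mul_zero, add_zero]
          have hlt : |u n x| ≤ ε := by
            have := hx
            simp only [hEdef, mem_setOf_eq, not_le, Real.dist_0_eq_abs] at this
            exact this.le
          rw [ENNReal.ofReal_rpow_of_nonneg (abs_nonneg _) hp0.le]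
          exact ENNReal.ofReal_le_ofReal
            (Real.rpow_le_rpow (abs_nonneg _) hlt hp0.le)
      have hHolder : (∫⁻ x in I, (ENNReal.ofReal |u n x|) ^ p * E.indicator 1 x)
          ≤ M ^ p * ((volume.restrict I) E) ^ (1-p) := by
        have hf : AEMeasurable (fun x => ENNReal.ofReal |u n x|) (volume.restrict I) :=
          ((hmeas n).abs.ennreal_ofReal).aemeasurable
        have hg : AEMeasurable (E.indicator (1 : ℝ → ℝ≥0∞)) (volume.restrict I) :=
          ((measurable_one).indicator hEmeas).aemeasurable
        have hH := ENNReal.lintegral_mul_norm_pow_le (μ := volume.restrict I)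
          hf hg hp0.le (show (0:ℝ) ≤ 1 - p by linarith) (by ring)
        have hgeq : ∀ x, (E.indicator (1 : ℝ → ℝ≥0∞) x) ^ (1-p)
            = E.indicator (1 : ℝ → ℝ≥0∞) x := by
          intro x
          by_cases hx : x ∈ E
          · rw [indicator_of_mem hx]; simp
          · rw [indicator_of_notMem hx]
            exact ENNReal.zero_rpow_of_pos (by linarith)
        rw [show (∫⁻ x in I, (ENNReal.ofReal |u n x|) ^ p * E.indicator 1 x)
            = ∫⁻ x in I, (ENNReal.ofReal |u n x|) ^ p
              * (E.indicator (1 : ℝ → ℝ≥0∞) x) ^ (1-p) from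
          lintegral_congr fun x => by rw [hgeq x]]
        refine hH.trans ?_
        have h1 : (∫⁻ x in I, ENNReal.ofReal |u n x|) ^ p ≤ M ^ p :=
          ENNReal.rpow_le_rpow (hbd n) hp0.le
        have h2 : (∫⁻ x in I, E.indicator (1 : ℝ → ℝ≥0∞) x) = (volume.restrict I) E := by
          rw [lintegral_indicator_one hEmeas]
        rw [h2]
        exact mul_le_mul_left h1 _
      calc L n ≤ ∫⁻ x in I, (ENNReal.ofReal (ε^p)
            + (ENNReal.ofReal |u n x|) ^ p * E.indicator 1 x) :=
            lintegral_mono hpoint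
        _ = ENNReal.ofReal (ε^p) * volume I
            + ∫⁻ x in I, (ENNReal.ofReal |u n x|) ^ p * E.indicator 1 x := by
            rw [lintegral_add_left measurable_const, lintegral_const,
              Measure.restrict_apply_univ]
        _ ≤ ENNReal.ofReal (ε^p) * volume I + M ^ p * ((volume.restrict I) E) ^ (1-p) :=
            add_le_add_right hHolder _
    calc L n ≤ ENNReal.ofReal (ε^p) * volume I + M ^ p * ((volume.restrict I) E) ^ (1-p) :=
          hsplit
      _ ≤ η / 2 + η / 2 := add_le_add hεsmall.le (hN n hn).le
      _ = η := ENNReal.add_halves η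
  have htoReal : Tendsto (fun n => (L n).toReal) atTop (𝓝 0) := by
    have := (ENNReal.tendsto_toReal (by simp : (0:ℝ≥0∞) ≠ ⊤)).comp hLlim
    simpa [Function.comp_def] using this
  exact htoReal.congr fun n => (hIeq n).symm



lemma g_meas (hC1 : ContDiff ℝ 1 ψ) (μ : Measure ℝ) [SFinite μ] (a : ℝ) :
    StronglyMeasurable fun x => ∫ y, (1/a) * ψ ((x - y)/a) ∂μ := by
  have hcont : Continuous fun q : ℝ × ℝ => (1/a) * ψ ((q.1 - q.2)/a) :=
    continuous_const.mul (hC1.continuous.comp ((continuous_fst.sub continuous_snd).div_const a))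
  exact hcont.stronglyMeasurable.integral_prod_right'

lemma phi_le (hC : 0 < C) (hδ : 1 < δ) (x : ℝ) : Phi C δ x ≤ C := by
  have h1 : (1 + x ^ 2 : ℝ) ^ (-δ / 2) ≤ 1 :=
    Real.rpow_le_one_of_one_le_of_nonpos (by nlinarith) (by linarith)
  calc Phi C δ x = C * (1 + x ^ 2) ^ (-δ / 2) := rfl
    _ ≤ C * 1 := mul_le_mul_of_nonneg_left h1 hC.le
    _ = C := mul_one C

lemma g_lintegral_bound (hC1 : ContDiff ℝ 1 ψ) (hC : 0 < C) (hδ : 1 < δ)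
    (hdec : ∀ x : ℝ, |ψ x| + |x * deriv ψ x| ≤ Phi C δ x)
    (μ : Measure ℝ) [IsProbabilityMeasure μ] {a : ℝ} (ha : 0 < a) (I : Set ℝ) :
    (∫⁻ x in I, ENNReal.ofReal |∫ y, (1/a) * ψ ((x - y)/a) ∂μ|)
      ≤ ENNReal.ofReal (∫ z, |ψ z|) := by
  have hψcont := hC1.continuous
  have habs_int : Integrable (fun z : ℝ => |ψ z|) := (psi_integrable hC1 hδ hdec).abs
  have ha' : (0:ℝ) < 1/a := by positivity
  -- integrand integrable in y for each x
  have hyint : ∀ x : ℝ, Integrable (fun y => (1/a) * |ψ ((x - y)/a)|) μ := by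
    intro x
    refine (integrable_const ((1/a) * C)).mono' ?_ ?_
    · exact (continuous_const.mul ((hψcont.comp
        ((continuous_const.sub continuous_id).div_const a)).abs)).aestronglyMeasurable
    · filter_upwards with y
      rw [Real.norm_eq_abs, abs_of_nonneg (by positivity)]
      exact mul_le_mul_of_nonneg_left
        ((psi_abs_le hdec _).trans (phi_le hC hδ _)) ha'.le
  have hpt : ∀ x : ℝ, ENNReal.ofReal |∫ y, (1/a) * ψ ((x - y)/a) ∂μ|
      ≤ ∫⁻ y, ENNReal.ofReal ((1/a) * |ψ ((x - y)/a)|) ∂μ := by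
    intro x
    have h1 : |∫ y, (1/a) * ψ ((x - y)/a) ∂μ| ≤ ∫ y, (1/a) * |ψ ((x - y)/a)| ∂μ := by
      have h2 := norm_integral_le_integral_norm (f := fun y => (1/a) * ψ ((x - y)/a)) (μ := μ)
      calc |∫ y, (1/a) * ψ ((x - y)/a) ∂μ| ≤ ∫ y, ‖(1/a) * ψ ((x - y)/a)‖ ∂μ := h2
        _ = ∫ y, (1/a) * |ψ ((x - y)/a)| ∂μ := by
            refine integral_congr_ae (Eventually.of_forall fun y => ?_)
            show ‖1/a * ψ ((x - y)/a)‖ = 1/a * |ψ ((x - y)/a)|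
            rw [Real.norm_eq_abs, abs_mul, abs_of_pos ha']
    calc ENNReal.ofReal |∫ y, (1/a) * ψ ((x - y)/a) ∂μ|
        ≤ ENNReal.ofReal (∫ y, (1/a) * |ψ ((x - y)/a)| ∂μ) := ENNReal.ofReal_le_ofReal h1
      _ = ∫⁻ y, ENNReal.ofReal ((1/a) * |ψ ((x - y)/a)|) ∂μ :=
          ofReal_integral_eq_lintegral_ofReal (hyint x)
            (Eventually.of_forall fun y => by positivity)
  have hprodmeas : AEMeasurable (fun q : ℝ × ℝ =>
      ENNReal.ofReal ((1/a) * |ψ ((q.1 - q.2)/a)|)) (volume.prod μ) := by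
    apply Continuous.aemeasurable
    exact ENNReal.continuous_ofReal.comp (continuous_const.mul ((hψcont.comp
      ((continuous_fst.sub continuous_snd).div_const a)).abs))
  have hxint : ∀ y : ℝ, Integrable (fun x : ℝ => (1/a) * |ψ ((x - y)/a)|) := by
    intro y
    have h1 : Integrable (fun x : ℝ => |ψ (x/a)|) := habs_int.comp_div (ne_of_gt ha)
    have h2 : Integrable (fun x : ℝ => |ψ ((x - y)/a)|) := h1.comp_sub_right y
    exact h2.const_mul _
  have hxval : ∀ y : ℝ, (∫ x : ℝ, (1/a) * |ψ ((x - y)/a)|) = ∫ z, |ψ z| := by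
    intro y
    rw [integral_const_mul]
    have h1 : (∫ x : ℝ, |ψ ((x - y)/a)|) = ∫ x : ℝ, |ψ (x/a)| :=
      integral_sub_right_eq_self (fun x => |ψ (x/a)|) y
    rw [h1, MeasureTheory.Measure.integral_comp_div (fun z => |ψ z|) a, abs_of_pos ha,
      smul_eq_mul]
    field_simp
  calc (∫⁻ x in I, ENNReal.ofReal |∫ y, (1/a) * ψ ((x - y)/a) ∂μ|)
      ≤ ∫⁻ x in I, ∫⁻ y, ENNReal.ofReal ((1/a) * |ψ ((x - y)/a)|) ∂μ :=
        lintegral_mono fun x => hpt x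
    _ ≤ ∫⁻ x, ∫⁻ y, ENNReal.ofReal ((1/a) * |ψ ((x - y)/a)|) ∂μ :=
        setLIntegral_le_lintegral _ _
    _ = ∫⁻ y, ∫⁻ x, ENNReal.ofReal ((1/a) * |ψ ((x - y)/a)|) ∂volume ∂μ :=
        lintegral_lintegral_swap hprodmeas
    _ = ∫⁻ y, ENNReal.ofReal (∫ x : ℝ, (1/a) * |ψ ((x - y)/a)|) ∂μ := by
        refine lintegral_congr fun y => ?_
        rw [ofReal_integral_eq_lintegral_ofReal (hxint y)
          (Eventually.of_forall fun x => by positivity)]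
    _ = ∫⁻ _ : ℝ, ENNReal.ofReal (∫ z, |ψ z|) ∂μ := by
        refine lintegral_congr fun y => ?_
        rw [hxval y]
    _ = ENNReal.ofReal (∫ z, |ψ z|) := by
        rw [lintegral_const, measure_univ, mul_one]

lemma g_integrableOn (hC1 : ContDiff ℝ 1 ψ) (hC : 0 < C) (hδ : 1 < δ)
    (hdec : ∀ x : ℝ, |ψ x| + |x * deriv ψ x| ≤ Phi C δ x)
    (μ : Measure ℝ) [IsProbabilityMeasure μ] {a : ℝ} (ha : 0 < a) (I : Set ℝ) :
    IntegrableOn (fun x => ∫ y, (1/a) * ψ ((x - y)/a) ∂μ) I := by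
  refine ⟨(g_meas hC1 μ a).aestronglyMeasurable, ?_⟩
  rw [hasFiniteIntegral_iff_norm]
  have heq : (∫⁻ x in I, ENNReal.ofReal ‖∫ y, (1/a) * ψ ((x - y)/a) ∂μ‖)
      = ∫⁻ x in I, ENNReal.ofReal |∫ y, (1/a) * ψ ((x - y)/a) ∂μ| := by
    refine lintegral_congr fun x => ?_
    rw [Real.norm_eq_abs]
  rw [heq]
  exact lt_of_le_of_lt (g_lintegral_bound hC1 hC hδ hdec μ ha I) ENNReal.ofReal_lt_top

lemma f_integrableOn (μ : Measure ℝ) [IsProbabilityMeasure μ] (I : Set ℝ) :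
    IntegrableOn (fun x => (μ.rnDeriv volume x).toReal) I := by
  refine integrable_toReal_of_lintegral_ne_top
    (μ.measurable_rnDeriv volume).aemeasurable ?_
  refine ne_of_lt (lt_of_le_of_lt (Measure.setLIntegral_rnDeriv_le I) ?_)
  exact lt_of_le_of_lt prob_le_one ENNReal.one_lt_top

lemma Af_lintegral_bound (μ : Measure ℝ) [IsProbabilityMeasure μ] (A : ℝ) (I : Set ℝ) :
    (∫⁻ x in I, ENNReal.ofReal |A * (μ.rnDeriv volume x).toReal|) ≤ ENNReal.ofReal |A| := by
  have heq : ∀ x : ℝ, ENNReal.ofReal |A * (μ.rnDeriv volume x).toReal|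
      = ENNReal.ofReal |A| * ENNReal.ofReal ((μ.rnDeriv volume x).toReal) := by
    intro x
    rw [abs_mul, abs_of_nonneg ENNReal.toReal_nonneg, ENNReal.ofReal_mul (abs_nonneg _)]
  calc (∫⁻ x in I, ENNReal.ofReal |A * (μ.rnDeriv volume x).toReal|)
      = ENNReal.ofReal |A| * ∫⁻ x in I, ENNReal.ofReal ((μ.rnDeriv volume x).toReal) := by
        rw [← lintegral_const_mul _ ((μ.measurable_rnDeriv volume).ennreal_toReal.ennreal_ofReal)]
        exact lintegral_congr heq
    _ ≤ ENNReal.ofReal |A| * μ I := by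
        refine mul_le_mul_right ?_ _
        refine le_trans (lintegral_mono fun x => ENNReal.ofReal_toReal_le) ?_
        exact Measure.setLIntegral_rnDeriv_le I
    _ ≤ ENNReal.ofReal |A| * 1 := mul_le_mul_right prob_le_one _
    _ = ENNReal.ofReal |A| := mul_one _

lemma rpow_integrableOn {I : Set ℝ} (hIfin : volume I ≠ ⊤) {p : ℝ}
    (hp0 : 0 < p) (hp1 : p < 1) {g : ℝ → ℝ} (hg : IntegrableOn g I) :
    IntegrableOn (fun x => |g x| ^ p) I := by
  haveI : IsFiniteMeasure (volume.restrict I) := ⟨by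
    rw [Measure.restrict_apply_univ]; exact lt_top_iff_ne_top.2 hIfin⟩
  refine ((integrable_const (1:ℝ)).add hg.abs).mono' ?_ ?_
  · exact (Real.continuous_rpow_const hp0.le).comp_aestronglyMeasurable hg.1.norm
  · filter_upwards with x
    rw [Real.norm_eq_abs, abs_of_nonneg (Real.rpow_nonneg (abs_nonneg _) _)]
    simp only [Pi.add_apply]
    rcases le_or_gt (|g x|) 1 with h | h
    · have h2 := Real.rpow_le_one (abs_nonneg _) h hp0.le
      have h3 := abs_nonneg (g x)
      linarith
    · have h2 : |g x| ^ p ≤ |g x| ^ (1:ℝ) :=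
        Real.rpow_le_rpow_of_exponent_le h.le hp1.le
      rw [Real.rpow_one] at h2
      linarith

theorem Lp_convergence_core
    (hC1 : ContDiff ℝ 1 ψ) (heven : ∀ x : ℝ, ψ (-x) = ψ x)
    (hC : 0 < C) (hδ : 1 < δ)
    (hdec : ∀ x : ℝ, |ψ x| + |x * deriv ψ x| ≤ Phi C δ x)
    (μ : Measure ℝ) [IsProbabilityMeasure μ]
    (c d : ℝ) (hcd : c < d) (p : ℝ) (hp0 : 0 < p) (hp1 : p < 1) :
    Tendsto (fun a : ℝ =>
        ∫ x in Ioo c d, |∫ y : ℝ, (1 / a) * ψ ((x - y) / a) ∂μ| ^ p)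
      (𝓝[>] 0)
      (𝓝 (|∫ x : ℝ, ψ x| ^ p *
        ∫ x in Ioo c d, ((μ.rnDeriv volume x).toReal) ^ p)) := by
  set A := ∫ x : ℝ, ψ x with hA_def
  set f : ℝ → ℝ := fun x => (μ.rnDeriv volume x).toReal with hf_def
  set I : Set ℝ := Ioo c d with hI_def
  have hIfin : volume I ≠ ⊤ := by
    rw [hI_def, Real.volume_Ioo]; exact ENNReal.ofReal_ne_top
  haveI : IsFiniteMeasure (volume.restrict I) := ⟨by
    rw [Measure.restrict_apply_univ]; exact lt_top_iff_ne_top.2 hIfin⟩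
  have hfInt : IntegrableOn f I := f_integrableOn μ I
  have hfmeas : Measurable f := (μ.measurable_rnDeriv volume).ennreal_toReal
  have hlim_eq : |A| ^ p * (∫ x in I, f x ^ p) = ∫ x in I, |A * f x| ^ p := by
    rw [← integral_const_mul]
    refine integral_congr_ae (Eventually.of_forall fun x => ?_)
    show |A| ^ p * f x ^ p = |A * f x| ^ p
    rw [abs_mul, Real.mul_rpow (abs_nonneg A) (abs_nonneg (f x)),
      abs_of_nonneg (show (0:ℝ) ≤ f x from ENNReal.toReal_nonneg)]
  rw [show (𝓝 (|A| ^ p * ∫ x in I, f x ^ p)) = 𝓝 (∫ x in I, |A * f x| ^ p) by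
    rw [hlim_eq]]
  rw [tendsto_iff_seq_tendsto]
  intro aseq haseq
  set b : ℕ → ℝ := fun n => if 0 < aseq n then aseq n else 1 with hb_def
  have hbpos : ∀ n, 0 < b n := by
    intro n
    rw [hb_def]
    dsimp only
    split_ifs with h
    · exact h
    · exact one_pos
  have hbeq : ∀ᶠ n in atTop, b n = aseq n := by
    filter_upwards [haseq.eventually self_mem_nhdsWithin] with n hn
    have h : 0 < aseq n := hn
    rw [hb_def]
    dsimp only
    rw [if_pos h]
  have hbtend : Tendsto b atTop (𝓝[>] (0:ℝ)) :=
    haseq.congr' (by filter_upwards [hbeq] with n h; exact h.symm)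
  set g : ℕ → ℝ → ℝ := fun n x => ∫ y, (1/(b n)) * ψ ((x - y)/(b n)) ∂μ with hg_def
  have hgmeas : ∀ n, StronglyMeasurable (g n) := fun n => g_meas hC1 μ (b n)
  have hgint : ∀ n, IntegrableOn (g n) I :=
    fun n => g_integrableOn hC1 hC hδ hdec μ (hbpos n) I
  set u : ℕ → ℝ → ℝ := fun n x => g n x - A * f x with hu_def
  have humeas : ∀ n, Measurable (u n) :=
    fun n => ((hgmeas n).measurable).sub (measurable_const.mul hfmeas)
  have hD : Tendsto (fun n => ∫ x in I, |u n x| ^ p) atTop (𝓝 0) := by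
    refine vitali I hIfin hp0 hp1 u humeas
      (M := ENNReal.ofReal (∫ z, |ψ z|) + ENNReal.ofReal |A|)
      (by simp [ENNReal.add_ne_top]) ?_ ?_
    · intro n
      calc (∫⁻ x in I, ENNReal.ofReal |u n x|)
          ≤ ∫⁻ x in I, (ENNReal.ofReal |g n x| + ENNReal.ofReal |A * f x|) := by
            refine lintegral_mono fun x => ?_
            calc ENNReal.ofReal |u n x|
                ≤ ENNReal.ofReal (|g n x| + |A * f x|) := by
                  refine ENNReal.ofReal_le_ofReal ?_
                  calc |u n x| = |g n x + (-(A * f x))| := by rw [hu_def]; ring_nf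
                    _ ≤ |g n x| + |(-(A * f x))| := abs_add_le _ _
                    _ = |g n x| + |A * f x| := by rw [abs_neg]
              _ = ENNReal.ofReal |g n x| + ENNReal.ofReal |A * f x| :=
                  ENNReal.ofReal_add (abs_nonneg _) (abs_nonneg _)
        _ = (∫⁻ x in I, ENNReal.ofReal |g n x|)
            + ∫⁻ x in I, ENNReal.ofReal |A * f x| :=
            lintegral_add_left ((hgmeas n).measurable.abs.ennreal_ofReal) _
        _ ≤ ENNReal.ofReal (∫ z, |ψ z|) + ENNReal.ofReal |A| :=
            add_le_add (g_lintegral_bound hC1 hC hδ hdec μ (hbpos n) I)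
              (Af_lintegral_bound μ A I)
    · have hae := pointwise_limit hC1 heven hC hδ hdec μ
      have hae' := ae_restrict_of_ae (s := I) hae
      filter_upwards [hae'] with x hx
      have h1 : Tendsto (fun n => g n x) atTop (𝓝 (A * f x)) := hx.comp hbtend
      have h2 := h1.sub (tendsto_const_nhds (x := A * f x))
      simpa using h2
  have hTle : ∀ n, ‖(∫ x in I, |g n x| ^ p) - ∫ x in I, |A * f x| ^ p‖
      ≤ ∫ x in I, |u n x| ^ p := by
    intro n
    have hint1 : IntegrableOn (fun x => |g n x| ^ p) I :=
      rpow_integrableOn hIfin hp0 hp1 (hgint n)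
    have hint2 : IntegrableOn (fun x => |A * f x| ^ p) I :=
      rpow_integrableOn hIfin hp0 hp1 (hfInt.const_mul A)
    have hint3 : IntegrableOn (fun x => |u n x| ^ p) I :=
      rpow_integrableOn hIfin hp0 hp1 ((hgint n).sub (hfInt.const_mul A))
    rw [Real.norm_eq_abs, ← integral_sub hint1 hint2]
    calc |∫ x in I, (|g n x| ^ p - |A * f x| ^ p)|
        ≤ ∫ x in I, |(|g n x| ^ p - |A * f x| ^ p)| := by
          have h2 := norm_integral_le_integral_norm
            (f := fun x => |g n x| ^ p - |A * f x| ^ p) (μ := volume.restrict I)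
          simpa [Real.norm_eq_abs] using h2
      _ ≤ ∫ x in I, |u n x| ^ p := by
          refine integral_mono_of_nonneg
            (Eventually.of_forall fun x => abs_nonneg _) hint3 ?_
          filter_upwards with x
          exact rpow_abs_sub_abs_le hp0 hp1 (g n x) (A * f x)
  have hsq := squeeze_zero_norm hTle hD
  have hfinal : Tendsto (fun n => ∫ x in I, |g n x| ^ p) atTop
      (𝓝 (∫ x in I, |A * f x| ^ p)) := by
    have h2 := hsq.add_const (∫ x in I, |A * f x| ^ p)
    simpa using h2
  refine hfinal.congr' ?_
  filter_upwards [hbeq] with n hn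
  show (∫ x in I, |g n x| ^ p) = ∫ x in I, |∫ y, (1/(aseq n)) * ψ ((x - y)/(aseq n)) ∂μ| ^ p
  rw [show g n = fun x => ∫ y, (1/(aseq n)) * ψ ((x - y)/(aseq n)) ∂μ from by rw [← hn]]


end Thm24

/-- Theorem 2.4 (2): for `0 < p < 1`,
`∫_c^d |(ψ̃_a * μ)(x)|^p dx → |A_ψ|^p ∫_c^d |dμ_ac/dx|^p dx` as `a → 0⁺`,
where `dμ_ac/dx` is the Radon–Nikodym derivative of the absolutely continuous part of `μ`
with respect to Lebesgue measure. -/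
theorem Lp_convergence_to_ac_density
    (ψ : ℝ → ℝ) (hC1 : ContDiff ℝ 1 ψ) (hψ0 : ψ 0 = 1)
    (heven : ∀ x : ℝ, ψ (-x) = ψ x)
    (hdecay : ∃ C > (0:ℝ), ∃ δ > (1:ℝ), ∀ x : ℝ,
      |ψ x| + |x * deriv ψ x| ≤ C * (1 + x ^ 2) ^ (-δ / 2))
    (hA : (∫ x : ℝ, ψ x) ≠ 0)
    (μ : Measure ℝ) [IsProbabilityMeasure μ]
    (c d : ℝ) (hcd : c < d) (p : ℝ) (hp0 : 0 < p) (hp1 : p < 1) :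
    Tendsto (fun a : ℝ =>
        ∫ x in Ioo c d, |∫ y : ℝ, (1 / a) * ψ ((x - y) / a) ∂μ| ^ p)
      (𝓝[>] 0)
      (𝓝 (|∫ x : ℝ, ψ x| ^ p *
        ∫ x in Ioo c d, ((μ.rnDeriv volume x).toReal) ^ p)) := by
  obtain ⟨C, hC, δ, hδ, hdec⟩ := hdecay
  exact Thm24.Lp_convergence_core hC1 heven hC hδ hdec μ c d hcd p hp0 hp1
end

section
/- Let ψ: ℝ → ℝ be C¹ with ψ(0)=1, ψ even, and suppose there exist C>0 and δ>1 such that |ψ(x)| + |x·ψ'(x)| ≤ C·(1+x²)^{-δ/2} for all x ∈ ℝ. Define h(x) = ψ(x) + x·ψ'(x) and, for a probability measure μ on ℝ, W_h(μ)(b,a) = (1/a)·∫_ℝ h((b−y)/a) dμ(y). Then for every b ∈ ℝ, lim_{ε→0⁺} ε·∫_ε^∞ W_h(μ)(b,a) (da/a) = μ({b}). -/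
/-!
Since `d/da [-ψ(c/a)/a] = h(c/a)/a²`, after Fubini the `a`-integral telescopes:
`ε ∫_ε^∞ W_h(μ)(b,a) da/a = ∫ ψ((b - y)/ε) dμ(y)`. As `ε → 0⁺` the integrand tends to
`ψ 0 = 1` at `y = b` and to `0` elsewhere, because the decay bound makes `ψ` vanish at infinity;
dominated convergence then gives `μ {b}`.
-/

open MeasureTheory Filter Real Set Topology

noncomputable def wavelet (ψ : ℝ → ℝ) (x : ℝ) : ℝ := ψ x + x * deriv ψ x

noncomputable def waveletTransform (h : ℝ → ℝ) (μ : Measure ℝ) (b a : ℝ) : ℝ :=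
  (1 / a) * ∫ y, h ((b - y) / a) ∂μ

lemma measurable_wavelet {ψ : ℝ → ℝ} (hψ : Measurable ψ) : Measurable (wavelet ψ) :=
  hψ.add (measurable_id.mul (measurable_deriv ψ))

lemma integrableOn_Ioi_inv_sq {ε : ℝ} (hε : 0 < ε) :
    IntegrableOn (fun a : ℝ => (a ^ 2)⁻¹) (Ioi ε) := by
  refine (integrableOn_Ioi_rpow_of_lt (by norm_num : (-2 : ℝ) < -1) hε).congr_fun
    (fun a ha => ?_) measurableSet_Ioi
  change a ^ (-2 : ℝ) = _
  rw [rpow_neg (hε.trans ha).le, rpow_two]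

lemma hasDerivAt_neg_comp_div_div {ψ : ℝ → ℝ} {c a : ℝ} (hψ : DifferentiableAt ℝ ψ (c / a))
    (ha : a ≠ 0) :
    HasDerivAt (fun a => -(ψ (c / a) / a)) (wavelet ψ (c / a) / a ^ 2) a := by
  have hdiv : HasDerivAt (fun a => c / a) (-(c / a ^ 2)) a := by
    simpa [div_eq_mul_inv] using (hasDerivAt_inv ha).const_mul c
  refine (((hψ.hasDerivAt.comp a hdiv).div (hasDerivAt_id' a) ha).neg).congr_deriv ?_
  rw [wavelet, Function.comp_apply]
  field_simp
  ring

section Bounded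

variable {ψ : ℝ → ℝ} {C : ℝ}

lemma integral_Ioi_wavelet_comp_div_div_sq (hψ : Differentiable ℝ ψ) (hψC : ∀ x, |ψ x| ≤ C)
    (hhC : ∀ x, |wavelet ψ x| ≤ C) (c : ℝ) {ε : ℝ} (hε : 0 < ε) :
    ∫ a in Ioi ε, wavelet ψ (c / a) / a ^ 2 = ψ (c / ε) / ε := by
  have hderiv : ∀ a ∈ Ici ε,
      HasDerivAt (fun a => -(ψ (c / a) / a)) (wavelet ψ (c / a) / a ^ 2) a :=
    fun a ha => hasDerivAt_neg_comp_div_div (hψ _) (hε.trans_le ha).ne'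
  have hint : IntegrableOn (fun a => wavelet ψ (c / a) / a ^ 2) (Ioi ε) := by
    refine ((integrableOn_Ioi_inv_sq hε).const_mul C).mono' ?_ ?_
    · exact (((measurable_wavelet hψ.continuous.measurable).comp
        (measurable_const.div measurable_id)).div (measurable_id.pow_const 2)).aestronglyMeasurable
    · filter_upwards with a
      rw [Real.norm_eq_abs, abs_div, abs_of_nonneg (sq_nonneg a), div_eq_mul_inv]
      exact mul_le_mul_of_nonneg_right (hhC _) (by positivity)
  have hlim : Tendsto (fun a => -(ψ (c / a) / a)) atTop (𝓝 0) := by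
    refine squeeze_zero_norm' ?_ ((tendsto_const_nhds (x := C)).div_atTop tendsto_id)
    filter_upwards [eventually_gt_atTop 0] with a ha
    rw [norm_neg, norm_div, Real.norm_eq_abs, Real.norm_eq_abs, abs_of_pos ha]
    exact div_le_div_of_nonneg_right (hψC _) ha.le
  rw [integral_Ioi_of_hasDerivAt_of_tendsto' hderiv hint hlim]
  ring

lemma mul_integral_Ioi_waveletTransform_div (hψ : Differentiable ℝ ψ) (hψC : ∀ x, |ψ x| ≤ C)
    (hhC : ∀ x, |wavelet ψ x| ≤ C) (μ : Measure ℝ) [IsFiniteMeasure μ] (b : ℝ) {ε : ℝ}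
    (hε : 0 < ε) :
    ε * ∫ a in Ioi ε, waveletTransform (wavelet ψ) μ b a / a = ∫ y, ψ ((b - y) / ε) ∂μ := by
  set F : ℝ → ℝ → ℝ := fun a y => wavelet ψ ((b - y) / a) / a ^ 2
  have hF : Integrable (Function.uncurry F) ((volume.restrict (Ioi ε)).prod μ) := by
    refine (((integrableOn_Ioi_inv_sq hε).const_mul C).mul_prod (integrable_const 1)).mono' ?_ ?_
    · exact (((measurable_wavelet hψ.continuous.measurable).comp
        ((measurable_const.sub measurable_snd).div measurable_fst)).div
        (measurable_fst.pow_const 2)).aestronglyMeasurable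
    · filter_upwards with ⟨a, y⟩
      rw [Function.uncurry_apply_pair, mul_one, Real.norm_eq_abs, abs_div,
        abs_of_nonneg (sq_nonneg a), div_eq_mul_inv]
      exact mul_le_mul_of_nonneg_right (hhC _) (by positivity)
  calc ε * ∫ a in Ioi ε, waveletTransform (wavelet ψ) μ b a / a
      = ε * ∫ a in Ioi ε, ∫ y, F a y ∂μ := by
        congr 1
        refine setIntegral_congr_fun measurableSet_Ioi fun a _ => ?_
        simp only [F, waveletTransform, integral_div]
        ring
    _ = ε * ∫ y, (∫ a in Ioi ε, F a y) ∂μ := by rw [integral_integral_swap hF]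
    _ = ε * ∫ y, ψ ((b - y) / ε) / ε ∂μ := by
        simp only [F, integral_Ioi_wavelet_comp_div_div_sq hψ hψC hhC _ hε]
    _ = ∫ y, ψ ((b - y) / ε) ∂μ := by
        rw [integral_div, mul_div_cancel₀ _ hε.ne']

end Bounded

lemma tendsto_const_div_nhdsGT_zero_cocompact {c : ℝ} (hc : c ≠ 0) :
    Tendsto (fun ε : ℝ => c / ε) (𝓝[>] 0) (cocompact ℝ) := by
  simpa only [div_eq_mul_inv, Function.comp_def] using
    (tendsto_cocompact_mul_left₀ hc).comp (tendsto_inv_nhdsGT_zero.mono_right atTop_le_cocompact)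

lemma tendsto_integral_comp_div_nhdsGT_zero {ψ : ℝ → ℝ} {C : ℝ} (hψ : Measurable ψ)
    (hψC : ∀ x, |ψ x| ≤ C) (hlim : Tendsto ψ (cocompact ℝ) (𝓝 0))
    (μ : Measure ℝ) [IsFiniteMeasure μ] (b : ℝ) :
    Tendsto (fun ε => ∫ y, ψ ((b - y) / ε) ∂μ) (𝓝[>] 0) (𝓝 (μ.real {b} * ψ 0)) := by
  rw [← smul_eq_mul, ← integral_indicator_const _ (measurableSet_singleton b)]
  refine tendsto_integral_filter_of_dominated_convergence (fun _ => C) ?_ ?_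
    (integrable_const C) ?_
  · exact Eventually.of_forall fun ε =>
      (hψ.comp ((measurable_const.sub measurable_id).div_const ε)).aestronglyMeasurable
  · exact Eventually.of_forall fun ε => Eventually.of_forall fun y => hψC _
  · filter_upwards with y
    rcases eq_or_ne y b with rfl | hy
    · simp only [sub_self, zero_div, indicator_of_mem (mem_singleton y)]
      exact tendsto_const_nhds
    · rw [indicator_of_notMem (notMem_singleton_iff.2 hy)]
      exact hlim.comp (tendsto_const_div_nhdsGT_zero_cocompact (sub_ne_zero.2 hy.symm))

lemma one_add_sq_rpow_neg_le_one (x : ℝ) {s : ℝ} (hs : 0 ≤ s) : (1 + x ^ 2) ^ (-s) ≤ 1 :=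
  rpow_le_one_of_one_le_of_nonpos (le_add_of_nonneg_right (sq_nonneg x)) (neg_nonpos.2 hs)

lemma tendsto_one_add_sq_rpow_neg_cocompact {s : ℝ} (hs : 0 < s) :
    Tendsto (fun x : ℝ => (1 + x ^ 2) ^ (-s)) (cocompact ℝ) (𝓝 0) := by
  have hsq : Tendsto (fun x : ℝ => x ^ 2) (cocompact ℝ) atTop := by
    simpa only [Function.comp_def, Real.norm_eq_abs, sq_abs] using
      (tendsto_pow_atTop two_ne_zero).comp (tendsto_norm_cocompact_atTop (E := ℝ))
  exact (tendsto_rpow_neg_atTop hs).comp (tendsto_atTop_add_const_left _ 1 hsq)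

theorem wavelet_transform_recovers_point_mass_general
    (ψ : ℝ → ℝ) (hC1 : ContDiff ℝ 1 ψ) (hψ0 : ψ 0 = 1)
    (hdecay : ∃ C > (0:ℝ), ∃ δ > (1:ℝ), ∀ x : ℝ,
      |ψ x| + |x * deriv ψ x| ≤ C * (1 + x ^ 2) ^ (-δ / 2))
    (μ : Measure ℝ) [IsProbabilityMeasure μ] (b : ℝ) :
    Tendsto (fun ε : ℝ => ε *
        ∫ a in Ioi ε,
          ((1 / a) * ∫ y : ℝ,
            (ψ ((b - y) / a) + ((b - y) / a) * deriv ψ ((b - y) / a)) ∂μ) / a)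
      (𝓝[>] 0) (𝓝 (μ {b}).toReal) := by
  obtain ⟨C, hC, δ, hδ, hdecay⟩ := hdecay
  simp only [neg_div] at hdecay
  have hδ2 : 0 < δ / 2 := by positivity
  have hψ_le : ∀ x, |ψ x| ≤ C * (1 + x ^ 2) ^ (-(δ / 2)) :=
    fun x => (le_add_of_nonneg_right (abs_nonneg _)).trans (hdecay x)
  have hle_C : ∀ x, C * (1 + x ^ 2) ^ (-(δ / 2)) ≤ C :=
    fun x => mul_le_of_le_one_right hC.le (one_add_sq_rpow_neg_le_one x hδ2.le)
  have hψC : ∀ x, |ψ x| ≤ C := fun x => (hψ_le x).trans (hle_C x)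
  have hhC : ∀ x, |wavelet ψ x| ≤ C :=
    fun x => ((abs_add_le _ _).trans (hdecay x)).trans (hle_C x)
  have hψ_lim : Tendsto ψ (cocompact ℝ) (𝓝 0) := by
    refine squeeze_zero_norm hψ_le ?_
    simpa using (tendsto_one_add_sq_rpow_neg_cocompact hδ2).const_mul C
  have hψ : Differentiable ℝ ψ := hC1.differentiable one_ne_zero
  have hlim := tendsto_integral_comp_div_nhdsGT_zero hψ.continuous.measurable hψC hψ_lim μ b
  rw [hψ0, mul_one, measureReal_def] at hlim
  refine hlim.congr' ?_
  filter_upwards [self_mem_nhdsWithin] with ε hε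
  exact (mul_integral_Ioi_waveletTransform_div hψ hψC hhC μ b hε).symm

/-- Theorem 2.6 (1): with `h(x) = ψ(x) + x ψ'(x)` and the continuous wavelet transform
`W_h(μ)(b,a) = (1/a) ∫ h((b-y)/a) dμ(y)`, one has
`ε ∫_ε^∞ W_h(μ)(b,a) da/a → μ({b})` as `ε → 0⁺`. -/
theorem wavelet_transform_recovers_point_mass
    (ψ : ℝ → ℝ) (hC1 : ContDiff ℝ 1 ψ) (hψ0 : ψ 0 = 1)
    (heven : ∀ x : ℝ, ψ (-x) = ψ x)
    (hdecay : ∃ C > (0:ℝ), ∃ δ > (1:ℝ), ∀ x : ℝ,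
      |ψ x| + |x * deriv ψ x| ≤ C * (1 + x ^ 2) ^ (-δ / 2))
    (μ : Measure ℝ) [IsProbabilityMeasure μ] (b : ℝ) :
    Tendsto (fun ε : ℝ => ε *
        ∫ a in Ioi ε,
          ((1 / a) * ∫ y : ℝ,
            (ψ ((b - y) / a) + ((b - y) / a) * deriv ψ ((b - y) / a)) ∂μ) / a)
      (𝓝[>] 0) (𝓝 (μ {b}).toReal) :=
  wavelet_transform_recovers_point_mass_general ψ hC1 hψ0 hdecay μ b
end

section
/- Let ψ: ℝ → ℝ be C¹ with ψ(0)=1, ψ even, and suppose there exist C>0 and δ>1 such that |ψ(x)| + |x·ψ'(x)| ≤ C·(1+x²)^{-δ/2} for all x ∈ ℝ. Define h(x) = ψ(x) + x·ψ'(x) and, for a probability measure μ on ℝ, W_h(μ)(b,a) = (1/a)·∫_ℝ h((b−y)/a) dμ(y). Let 0 < α ≤ 1 and b ∈ ℝ be such that (d_α μ)(b) := lim_{ε→0⁺} μ((b−ε, b+ε))/(2ε)^α exists and is finite. Then lim_{ε→0⁺} ε^{1−α}·∫_ε^∞ W_h(μ)(b,a) (da/a) = c_α·(d_α μ)(b),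 where c_α = ∫_0^∞ α·2^α·y^{α−1}·ψ(y) dy. -/
open MeasureTheory Filter Real Set Topology

set_option maxHeartbeats 1000000 in
/-- Theorem 2.6 (2): with `h(x) = ψ(x) + x ψ'(x)`, if `(d_α μ)(b)` exists and is finite,
then `ε^{1-α} ∫_ε^∞ W_h(μ)(b,a) da/a → c_α (d_α μ)(b)` as `ε → 0⁺`, where
`c_α = ∫_0^∞ α 2^α y^{α-1} ψ(y) dy`. -/
theorem wavelet_transform_alpha_derivative
    (ψ : ℝ → ℝ) (hC1 : ContDiff ℝ 1 ψ) (hψ0 : ψ 0 = 1)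
    (heven : ∀ x : ℝ, ψ (-x) = ψ x)
    (hdecay : ∃ C > (0:ℝ), ∃ δ > (1:ℝ), ∀ x : ℝ,
      |ψ x| + |x * deriv ψ x| ≤ C * (1 + x ^ 2) ^ (-δ / 2))
    (μ : Measure ℝ) [IsProbabilityMeasure μ]
    (α : ℝ) (hα0 : 0 < α) (hα1 : α ≤ 1) (b : ℝ) (L : ℝ)
    (hd : Tendsto (fun ε : ℝ => (μ (Ioo (b - ε) (b + ε))).toReal / (2 * ε) ^ α)
      (𝓝[>] 0) (𝓝 L)) :
    Tendsto (fun ε : ℝ => ε ^ (1 - α) *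
        ∫ a in Ioi ε,
          ((1 / a) * ∫ y : ℝ,
            (ψ ((b - y) / a) + ((b - y) / a) * deriv ψ ((b - y) / a)) ∂μ) / a)
      (𝓝[>] 0)
      (𝓝 ((∫ y in Ioi (0:ℝ), α * 2 ^ α * y ^ (α - 1) * ψ y) * L)) := by
  obtain ⟨C, hC, δ, hδ, hψb⟩ := hdecay
  have hψcont : Continuous ψ := hC1.continuous
  have hψ'cont : Continuous (deriv ψ) := hC1.continuous_deriv le_rfl
  have hψderiv : ∀ x : ℝ, HasDerivAt ψ (deriv ψ x) x :=
    fun x => (hC1.differentiable one_ne_zero x).hasDerivAt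
  set ψ' : ℝ → ℝ := deriv ψ with hψ'def
  -- basic decay facts
  have hone : ∀ x : ℝ, (1 + x ^ 2 : ℝ) ^ (-δ / 2) ≤ 1 := by
    intro x
    apply Real.rpow_le_one_of_one_le_of_nonpos (by nlinarith) (by linarith)
  have hψle : ∀ x : ℝ, |ψ x| ≤ C * (1 + x ^ 2) ^ (-δ / 2) := by
    intro x; have := hψb x; have := abs_nonneg (x * ψ' x); linarith
  have hxψ'le : ∀ x : ℝ, |x * ψ' x| ≤ C * (1 + x ^ 2) ^ (-δ / 2) := by
    intro x; have := hψb x; have := abs_nonneg (ψ x); linarith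
  have hple : ∀ x : ℝ, (1 + x ^ 2 : ℝ) ^ (-δ / 2) > 0 := by
    intro x; positivity
  have hψleC : ∀ x : ℝ, |ψ x| ≤ C := by
    intro x; refine (hψle x).trans ?_
    nlinarith [hone x, hple x]
  have hhleC : ∀ x : ℝ, |ψ x + x * ψ' x| ≤ C := by
    intro x
    refine (abs_add_le _ _).trans ((hψb x).trans ?_)
    nlinarith [hone x, hple x]
  have hdec1 : ∀ x : ℝ, 1 ≤ x → ((1 : ℝ) + x ^ 2) ^ (-δ / 2) ≤ x ^ (-δ) := by
    intro x hx
    have h0 : (0:ℝ) < x := by linarith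
    have h1 : (x:ℝ) ^ 2 ≤ 1 + x ^ 2 := by nlinarith
    have h2 : ((1:ℝ) + x ^ 2) ^ (-δ / 2) ≤ (x ^ 2) ^ (-δ / 2) := by
      apply Real.rpow_le_rpow_of_nonpos (by positivity) h1 (by linarith)
    calc ((1:ℝ) + x ^ 2) ^ (-δ / 2) ≤ (x ^ 2) ^ (-δ / 2) := h2
      _ = x ^ (-δ) := by
          rw [← Real.rpow_natCast x 2, ← Real.rpow_mul h0.le]
          rw [show ((2:ℕ):ℝ) * (-δ / 2) = -δ by push_cast; ring]
  -- ψ tends to 0 at infinity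
  have hψtop : Tendsto ψ atTop (𝓝 0) := by
    have hb : Tendsto (fun x : ℝ => C * x ^ (-δ)) atTop (𝓝 0) := by
      rw [show (0:ℝ) = C * 0 by ring]
      exact (tendsto_rpow_neg_atTop (by linarith)).const_mul C
    apply squeeze_zero_norm' _ hb
    filter_upwards [eventually_ge_atTop (1:ℝ)] with x hx
    calc ‖ψ x‖ ≤ C * (1 + x ^ 2) ^ (-δ / 2) := hψle x
      _ ≤ C * x ^ (-δ) := by
          have := hdec1 x hx; nlinarith
  -- integrability helper on (0, ∞)
  have key_int : ∀ (f : ℝ → ℝ) (M : ℝ),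
      AEStronglyMeasurable f (volume.restrict (Ioi (0:ℝ))) →
      (∀ s : ℝ, 0 < s → s ≤ 1 → |f s| ≤ M * s ^ (α - 1)) →
      (∀ s : ℝ, 1 ≤ s → |f s| ≤ M * s ^ (-δ)) →
      IntegrableOn f (Ioi (0:ℝ)) := by
    intro f M hmeas hsmall hlarge
    rw [← Ioc_union_Ioi_eq_Ioi (zero_le_one : (0:ℝ) ≤ 1)]
    apply IntegrableOn.union
    · have hg : IntegrableOn (fun s : ℝ => M * s ^ (α - 1)) (Ioc (0:ℝ) 1) := by
        apply Integrable.const_mul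
        exact (intervalIntegrable_iff_integrableOn_Ioc_of_le zero_le_one).mp
          (intervalIntegral.intervalIntegrable_rpow' (by linarith))
      apply Integrable.mono' hg (hmeas.mono_measure
        (Measure.restrict_mono Ioc_subset_Ioi_self le_rfl))
      rw [ae_restrict_iff' measurableSet_Ioc]
      filter_upwards with s hs using hsmall s hs.1 hs.2
    · have hg : IntegrableOn (fun s : ℝ => M * s ^ (-δ)) (Ioi (1:ℝ)) :=
        (integrableOn_Ioi_rpow_of_lt (by linarith) one_pos).const_mul M
      apply Integrable.mono' hg (hmeas.mono_measure
        (Measure.restrict_mono (Ioi_subset_Ioi zero_le_one) le_rfl))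
      rw [ae_restrict_iff' measurableSet_Ioi]
      filter_upwards with s hs using hlarge s (le_of_lt hs)
  obtain ⟨M₁, hM₁⟩ : ∃ M, ∀ s ∈ Icc (0:ℝ) 1, ‖ψ' s‖ ≤ M :=
    isCompact_Icc.exists_bound_of_continuousOn hψ'cont.continuousOn
  have hM₁0 : 0 ≤ M₁ := le_trans (norm_nonneg _) (hM₁ 0 ⟨le_rfl, zero_le_one⟩)
  set M : ℝ := max M₁ C + α * C + 1 with hM
  have hM0 : 0 < M := by positivity
  have hMM₁ : M₁ ≤ M := by
    have : M₁ ≤ max M₁ C := le_max_left _ _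
    have : (0:ℝ) ≤ α * C := by positivity
    simp only [hM]; linarith [le_max_left M₁ C]
  have hMC : C ≤ M := by
    have : (0:ℝ) ≤ α * C := by positivity
    simp only [hM]; linarith [le_max_right M₁ C]
  have hMαC : α * C ≤ M := by
    simp only [hM]; nlinarith [le_max_right M₁ C, hM₁0, le_max_left M₁ C]
  have hrpow_ge1 : ∀ s : ℝ, 0 < s → s ≤ 1 → (1:ℝ) ≤ s ^ (α - 1) :=
    fun s hs hs1 => Real.one_le_rpow_of_pos_of_le_one_of_nonpos hs hs1 (by linarith)
  have hrpow_le1 : ∀ s : ℝ, 1 ≤ s → s ^ (α - 1) ≤ 1 :=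
    fun s hs => Real.rpow_le_one_of_one_le_of_nonpos hs (by linarith)
  -- |ψ' s| ≤ C s^{-δ} for s ≥ 1
  have hψ'large : ∀ s : ℝ, 1 ≤ s → |ψ' s| ≤ C * s ^ (-δ) := by
    intro s hs
    have h1 : |ψ' s| ≤ |s * ψ' s| := by
      rw [abs_mul]
      nlinarith [abs_nonneg (ψ' s), abs_of_nonneg (le_trans zero_le_one hs : (0:ℝ) ≤ s)]
    refine h1.trans ((hxψ'le s).trans ?_)
    nlinarith [hdec1 s hs]
  have hψ'int : IntegrableOn ψ' (Ioi (0:ℝ)) := by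
    apply key_int ψ' M hψ'cont.aestronglyMeasurable.restrict
    · intro s hs hs1
      calc |ψ' s| ≤ M₁ := hM₁ s ⟨hs.le, hs1⟩
        _ = M₁ * 1 := by ring
        _ ≤ M * s ^ (α - 1) := by
            apply mul_le_mul hMM₁ (hrpow_ge1 s hs hs1) zero_le_one hM0.le
    · intro s hs
      exact (hψ'large s hs).trans (by nlinarith [Real.rpow_pos_of_pos (lt_of_lt_of_le one_pos hs) (-δ)])
  have m1 : AEStronglyMeasurable (fun s : ℝ => s ^ α * |ψ' s|) (volume.restrict (Ioi (0:ℝ))) :=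
    ((measurable_id'.pow_const α).mul hψ'cont.abs.measurable).aestronglyMeasurable.restrict
  have m2 : AEStronglyMeasurable (fun s : ℝ => s ^ α * ψ' s) (volume.restrict (Ioi (0:ℝ))) :=
    ((measurable_id'.pow_const α).mul hψ'cont.measurable).aestronglyMeasurable.restrict
  have m3 : AEStronglyMeasurable (fun s : ℝ => α * s ^ (α - 1) * ψ s)
      (volume.restrict (Ioi (0:ℝ))) :=
    ((measurable_const.mul (measurable_id'.pow_const (α - 1))).mul
      hψcont.measurable).aestronglyMeasurable.restrict
  have hbint : IntegrableOn (fun s : ℝ => s ^ α * |ψ' s|) (Ioi (0:ℝ)) := by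
    apply key_int _ M m1
    · intro s hs hs1
      rw [abs_of_nonneg (by positivity)]
      calc s ^ α * |ψ' s| ≤ 1 * M₁ := by
            apply mul_le_mul _ (hM₁ s ⟨hs.le, hs1⟩) (abs_nonneg _) zero_le_one
            exact Real.rpow_le_one hs.le hs1 hα0.le
        _ = M₁ * 1 := by ring
        _ ≤ M * s ^ (α - 1) := mul_le_mul hMM₁ (hrpow_ge1 s hs hs1) zero_le_one hM0.le
    · intro s hs
      have hs0 : (0:ℝ) < s := lt_of_lt_of_le one_pos hs
      rw [abs_of_nonneg (by positivity)]
      have h1 : s ^ α ≤ s := by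
        calc s ^ α ≤ s ^ (1:ℝ) := Real.rpow_le_rpow_of_exponent_le hs hα1
          _ = s := Real.rpow_one s
      calc s ^ α * |ψ' s| ≤ s * |ψ' s| := by
            apply mul_le_mul_of_nonneg_right h1 (abs_nonneg _)
        _ = |s * ψ' s| := by rw [abs_mul, abs_of_nonneg hs0.le]
        _ ≤ C * (1 + s ^ 2) ^ (-δ / 2) := hxψ'le s
        _ ≤ M * s ^ (-δ) := by nlinarith [hdec1 s hs, Real.rpow_pos_of_pos hs0 (-δ)]
  have haint : IntegrableOn (fun s : ℝ => s ^ α * ψ' s) (Ioi (0:ℝ)) := by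
    apply Integrable.mono' hbint m2
    rw [ae_restrict_iff' measurableSet_Ioi]
    filter_upwards with s hs
    rw [Real.norm_eq_abs, abs_mul, abs_of_nonneg (Real.rpow_nonneg (le_of_lt hs) α)]
  have hgint : IntegrableOn (fun s : ℝ => α * s ^ (α - 1) * ψ s) (Ioi (0:ℝ)) := by
    apply key_int _ M m3
    · intro s hs hs1
      have h0 : (0:ℝ) ≤ s ^ (α - 1) := Real.rpow_nonneg hs.le _
      rw [abs_mul, abs_mul, abs_of_nonneg hα0.le, abs_of_nonneg h0]
      calc α * s ^ (α - 1) * |ψ s| ≤ α * s ^ (α - 1) * C := by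
            apply mul_le_mul_of_nonneg_left (hψleC s) (by positivity)
        _ = (α * C) * s ^ (α - 1) := by ring
        _ ≤ M * s ^ (α - 1) := mul_le_mul_of_nonneg_right hMαC h0
    · intro s hs
      have hs0 : (0:ℝ) < s := lt_of_lt_of_le one_pos hs
      have h0 : (0:ℝ) ≤ s ^ (α - 1) := Real.rpow_nonneg hs0.le _
      rw [abs_mul, abs_mul, abs_of_nonneg hα0.le, abs_of_nonneg h0]
      calc α * s ^ (α - 1) * |ψ s| ≤ α * 1 * (C * s ^ (-δ)) := by
            apply mul_le_mul _ _ (abs_nonneg _) (by positivity)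
            · exact mul_le_mul_of_nonneg_left (hrpow_le1 s hs) hα0.le
            · exact (hψle s).trans (by nlinarith [hdec1 s hs, Real.rpow_pos_of_pos hs0 (-δ)])
        _ = (α * C) * s ^ (-δ) := by ring
        _ ≤ M * s ^ (-δ) := mul_le_mul_of_nonneg_right hMαC (Real.rpow_nonneg hs0.le _)
  -- integrability of bounded measurable functions wrt μ
  have int_of_bdd : ∀ (f : ℝ → ℝ) (B : ℝ), AEStronglyMeasurable f μ → (∀ y, |f y| ≤ B) →
      Integrable f μ := by
    intro f B hm hb
    apply Integrable.mono' (integrable_const B) hm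
    filter_upwards with y using by simpa [Real.norm_eq_abs] using hb y
  -- norm bounds for the inner integrals
  have hJb : ∀ c : ℝ, |∫ y, ψ ((b - y) * c) ∂μ| ≤ C := by
    intro c
    have := norm_integral_le_of_norm_le_const (μ := μ)
      (f := fun y => ψ ((b - y) * c)) (C := C)
      (by filter_upwards with y using by simpa [Real.norm_eq_abs] using hψleC _)
    simpa [Real.norm_eq_abs] using this
  have hIb : ∀ c : ℝ,
      |∫ y, (ψ ((b - y) * c) + ((b - y) * c) * ψ' ((b - y) * c)) ∂μ| ≤ C := by
    intro c
    have := norm_integral_le_of_norm_le_const (μ := μ)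
      (f := fun y => ψ ((b - y) * c) + ((b - y) * c) * ψ' ((b - y) * c)) (C := C)
      (by filter_upwards with y using by simpa [Real.norm_eq_abs] using hhleC _)
    simpa [Real.norm_eq_abs] using this
  -- the function Φ and its derivative
  set Φ : ℝ → ℝ := fun a => a⁻¹ * ∫ y, ψ ((b - y) * a⁻¹) ∂μ with hΦdef
  have hcont_y : ∀ c : ℝ, Continuous fun y : ℝ => (b - y) * c :=
    fun c => (continuous_const.sub continuous_id).mul continuous_const
  have hΦ : ∀ a : ℝ, 0 < a → HasDerivAt Φ
      (-((a ^ 2)⁻¹ * ∫ y, (ψ ((b - y) * a⁻¹) + ((b - y) * a⁻¹) * ψ' ((b - y) * a⁻¹)) ∂μ)) a := by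
    intro a₀ ha₀
    have key := hasDerivAt_integral_of_dominated_loc_of_deriv_le (μ := μ)
      (F := fun x y => x⁻¹ * ψ ((b - y) * x⁻¹))
      (F' := fun x y => -((x ^ 2)⁻¹ * (ψ ((b - y) * x⁻¹) + ((b - y) * x⁻¹) * ψ' ((b - y) * x⁻¹))))
      (x₀ := a₀) (s := Metric.ball a₀ (a₀ / 2)) (bound := fun _ => ((a₀ / 2) ^ 2)⁻¹ * C)
      (Metric.ball_mem_nhds _ (by positivity))
      ?_ ?_ ?_ ?_ (integrable_const _) ?_
    · have h := key.2
      have hfn : (fun n : ℝ => ∫ y, n⁻¹ * ψ ((b - y) * n⁻¹) ∂μ) = Φ := by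
        funext n; rw [MeasureTheory.integral_const_mul]
      rw [hfn] at h
      refine h.congr_deriv ?_
      rw [integral_neg, MeasureTheory.integral_const_mul]
    · filter_upwards with x
      exact (continuous_const.mul (hψcont.comp (hcont_y x⁻¹))).aestronglyMeasurable
    · exact int_of_bdd _ (|a₀⁻¹| * C) (continuous_const.mul
        (hψcont.comp (hcont_y a₀⁻¹))).aestronglyMeasurable
        (fun y => by rw [abs_mul]; exact mul_le_mul_of_nonneg_left (hψleC _) (abs_nonneg _))
    · exact ((continuous_const.mul ((hψcont.comp (hcont_y a₀⁻¹)).add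
        ((hcont_y a₀⁻¹).mul (hψ'cont.comp (hcont_y a₀⁻¹))))).neg).aestronglyMeasurable
    · filter_upwards with y
      intro x hx
      have hx0 : a₀ / 2 < x := by
        have := abs_lt.mp (by simpa [Real.dist_eq] using hx)
        linarith [this.1]
      have hxpos : 0 < x := lt_trans (by positivity) hx0
      have h2 : ((a₀ / 2) ^ 2)⁻¹ ≥ (x ^ 2)⁻¹ := by
        apply inv_anti₀ (by positivity)
        nlinarith
      rw [Real.norm_eq_abs, abs_neg, abs_mul, abs_of_nonneg (by positivity :
        (0:ℝ) ≤ (x ^ 2)⁻¹)]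
      have := hhleC ((b - y) * x⁻¹)
      calc (x ^ 2)⁻¹ * |ψ ((b - y) * x⁻¹) + (b - y) * x⁻¹ * ψ' ((b - y) * x⁻¹)|
          ≤ (x ^ 2)⁻¹ * C := mul_le_mul_of_nonneg_left this (by positivity)
        _ ≤ ((a₀ / 2) ^ 2)⁻¹ * C := mul_le_mul_of_nonneg_right h2 hC.le
    · filter_upwards with y
      intro x hx
      have hx0 : a₀ / 2 < x := by
        have := abs_lt.mp (by simpa [Real.dist_eq] using hx)
        linarith [this.1]
      have hxpos : 0 < x := lt_trans (by positivity) hx0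
      have h1 : HasDerivAt (fun x : ℝ => (b - y) * x⁻¹) ((b - y) * -(x ^ 2)⁻¹) x :=
        (hasDerivAt_inv hxpos.ne').const_mul (b - y)
      have h2 : HasDerivAt (fun x : ℝ => ψ ((b - y) * x⁻¹))
          (ψ' ((b - y) * x⁻¹) * ((b - y) * -(x ^ 2)⁻¹)) x :=
        (hψderiv ((b - y) * x⁻¹)).comp x h1
      have h3 := (hasDerivAt_inv hxpos.ne').mul h2
      refine h3.congr_deriv ?_
      ring
  have hΦtop : Tendsto Φ atTop (𝓝 0) := by
    apply squeeze_zero_norm' _ (by simpa using tendsto_inv_atTop_zero.const_mul C :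
      Tendsto (fun a : ℝ => C * a⁻¹) atTop (𝓝 0))
    filter_upwards [eventually_ge_atTop (1:ℝ)] with a ha
    have ha0 : (0:ℝ) < a := lt_of_lt_of_le one_pos ha
    rw [Real.norm_eq_abs, hΦdef]
    calc |a⁻¹ * ∫ y, ψ ((b - y) * a⁻¹) ∂μ| = a⁻¹ * |∫ y, ψ ((b - y) * a⁻¹) ∂μ| := by
          rw [abs_mul, abs_of_nonneg (by positivity)]
      _ ≤ a⁻¹ * C := mul_le_mul_of_nonneg_left (hJb _) (by positivity)
      _ = C * a⁻¹ := by ring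
  have stepA : ∀ ε : ℝ, 0 < ε →
      (∫ a in Ioi ε,
        ((1 / a) * ∫ y, (ψ ((b - y) / a) + ((b - y) / a) * ψ' ((b - y) / a)) ∂μ) / a)
        = Φ ε := by
    intro ε hε
    set f' : ℝ → ℝ := fun a =>
      -((a ^ 2)⁻¹ * ∫ y, (ψ ((b - y) * a⁻¹) + ((b - y) * a⁻¹) * ψ' ((b - y) * a⁻¹)) ∂μ)
      with hf'def
    have hf'int : IntegrableOn f' (Ioi ε) := by
      have hmeas : AEStronglyMeasurable f' (volume.restrict (Ioi ε)) := by
        apply ((measurable_deriv Φ).aestronglyMeasurable.restrict).congr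
        rw [EventuallyEq, ae_restrict_iff' measurableSet_Ioi]
        filter_upwards with a ha
        exact (hΦ a (hε.trans ha)).deriv
      apply Integrable.mono' ((integrableOn_Ioi_rpow_of_lt
        (show (-2:ℝ) < -1 by norm_num) hε).const_mul C) hmeas
      rw [ae_restrict_iff' measurableSet_Ioi]
      filter_upwards with a ha
      have ha0 : 0 < a := hε.trans ha
      have hr : a ^ (-2:ℝ) = (a ^ 2)⁻¹ := by
        rw [show (-2:ℝ) = -((2:ℕ):ℝ) by norm_num, Real.rpow_neg ha0.le, Real.rpow_natCast]
      rw [hf'def, Real.norm_eq_abs, abs_neg, abs_mul,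
        abs_of_nonneg (by positivity : (0:ℝ) ≤ (a ^ 2)⁻¹), hr]
      calc (a ^ 2)⁻¹ * |∫ y, (ψ ((b - y) * a⁻¹) + ((b - y) * a⁻¹) * ψ' ((b - y) * a⁻¹)) ∂μ|
          ≤ (a ^ 2)⁻¹ * C := mul_le_mul_of_nonneg_left (hIb _) (by positivity)
        _ = C * (a ^ 2)⁻¹ := by ring
    have hFTC := integral_Ioi_of_hasDerivAt_of_tendsto (a := ε) (f := Φ) (f' := f') (m := 0)
      (hΦ ε hε).continuousAt.continuousWithinAt
      (fun a ha => hΦ a (hε.trans ha)) hf'int hΦtop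
    have hcongr : (∫ a in Ioi ε,
        ((1 / a) * ∫ y, (ψ ((b - y) / a) + ((b - y) / a) * ψ' ((b - y) / a)) ∂μ) / a)
        = ∫ a in Ioi ε, -(f' a) := by
      apply setIntegral_congr_fun measurableSet_Ioi
      intro a ha
      have ha0 : 0 < a := hε.trans ha
      simp only [hf'def, div_eq_mul_inv, one_mul, neg_neg]
      ring
    rw [hcongr, integral_neg, hFTC]
    ring
  -- ψ of absolute value
  have habs : ∀ x : ℝ, ψ |x| = ψ x := by
    intro x
    rcases abs_cases x with ⟨h, _⟩ | ⟨h, _⟩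
    · rw [h]
    · rw [h, heven]
  -- FTC for ψ on Ioi r
  have hFTCψ : ∀ r : ℝ, 0 ≤ r → ∫ s in Ioi r, (-ψ' s) = ψ r := by
    intro r hr
    have h := integral_Ioi_of_hasDerivAt_of_tendsto (a := r) (f := ψ) (f' := ψ') (m := 0)
      hψcont.continuousWithinAt (fun s _ => hψderiv s)
      (hψ'int.mono_set (Ioi_subset_Ioi hr)) hψtop
    rw [integral_neg, h]; ring
  -- Step B: layer cake
  have stepB : ∀ ε : ℝ, 0 < ε → ∫ y, ψ ((b - y) * ε⁻¹) ∂μ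
      = ∫ s in Ioi (0:ℝ), (-ψ' s) * (μ (Ioo (b - ε * s) (b + ε * s))).toReal := by
    intro ε hε
    set ν : Measure ℝ := volume.restrict (Ioi (0:ℝ)) with hνdef
    set f : ℝ → ℝ → ℝ := fun y s => if |b - y| < ε * s then -ψ' s else 0 with hfdef
    have hS : MeasurableSet {p : ℝ × ℝ | |b - p.1| < ε * p.2} :=
      measurableSet_lt ((measurable_const.sub measurable_fst).abs)
        (measurable_snd.const_mul ε)
    have hfeq : Function.uncurry f
        = Set.indicator {p : ℝ × ℝ | |b - p.1| < ε * p.2} (fun p => -ψ' p.2) := by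
      funext p
      simp only [Function.uncurry, hfdef, Set.indicator_apply, mem_setOf_eq]
    have hfm : AEStronglyMeasurable (Function.uncurry f) (μ.prod ν) := by
      rw [hfeq]
      exact (((hψ'cont.measurable.neg).comp measurable_snd).indicator hS).aestronglyMeasurable
    have hbnd : Integrable (fun p : ℝ × ℝ => |ψ' p.2|) (μ.prod ν) := by
      have h1 : Integrable (fun s => |ψ' s|) ν := hψ'int.abs
      have h2 : (μ.prod ν).map Prod.snd = ν := by
        rw [Measure.map_snd_prod, measure_univ, one_smul]
      have h3 : AEStronglyMeasurable (fun s => |ψ' s|) ((μ.prod ν).map Prod.snd) := by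
        rw [h2]; exact hψ'cont.abs.aestronglyMeasurable.restrict
      exact (integrable_map_measure h3 measurable_snd.aemeasurable).mp (by rwa [h2])
    have hfint : Integrable (Function.uncurry f) (μ.prod ν) := by
      apply Integrable.mono' hbnd hfm
      filter_upwards with p
      rw [hfeq, Real.norm_eq_abs]
      by_cases hp : p ∈ {p : ℝ × ℝ | |b - p.1| < ε * p.2}
      · rw [Set.indicator_of_mem hp, abs_neg]
      · rw [Set.indicator_of_notMem hp, abs_zero]; exact abs_nonneg _
    have hswap := integral_integral_swap hfint
    have hleft : ∀ y : ℝ, (∫ s, f y s ∂ν) = ψ ((b - y) * ε⁻¹) := by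
      intro y
      have hr0 : (0:ℝ) ≤ |b - y| / ε := by positivity
      have hiff : ∀ s : ℝ, (|b - y| < ε * s) ↔ (|b - y| / ε < s) := by
        intro s; rw [div_lt_iff₀ hε, mul_comm]
      have hind : (fun s => f y s) = (Ioi (|b - y| / ε)).indicator (fun s => -ψ' s) := by
        funext s
        simp only [hfdef, Set.indicator_apply, mem_Ioi, hiff s]
      rw [hind, hνdef, integral_indicator measurableSet_Ioi,
        Measure.restrict_restrict measurableSet_Ioi,
        inter_eq_left.mpr (Ioi_subset_Ioi hr0), hFTCψ _ hr0,
        ← habs ((b - y) * ε⁻¹), abs_mul, abs_of_nonneg (inv_nonneg.mpr hε.le),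
        div_eq_mul_inv]
    have hright : ∀ s : ℝ,
        (∫ y, f y s ∂μ) = (-ψ' s) * (μ (Ioo (b - ε * s) (b + ε * s))).toReal := by
      intro s
      have hiffy : ∀ y : ℝ, (|b - y| < ε * s) ↔ (b - ε * s < y ∧ y < b + ε * s) := by
        intro y
        rw [abs_lt]
        constructor
        · rintro ⟨h1, h2⟩; constructor <;> linarith
        · rintro ⟨h1, h2⟩; constructor <;> linarith
      have hind : (fun y => f y s)
          = (Ioo (b - ε * s) (b + ε * s)).indicator (fun _ => -ψ' s) := by
        funext y
        simp only [hfdef, Set.indicator_apply, mem_Ioo, hiffy y]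
      rw [hind, integral_indicator_const _ measurableSet_Ioo, smul_eq_mul, measureReal_def]
      ring
    calc ∫ y, ψ ((b - y) * ε⁻¹) ∂μ = ∫ y, ∫ s, f y s ∂ν ∂μ := by
          apply integral_congr_ae
          filter_upwards with y using (hleft y).symm
      _ = ∫ s, ∫ y, f y s ∂μ ∂ν := hswap
      _ = ∫ s in Ioi (0:ℝ), (-ψ' s) * (μ (Ioo (b - ε * s) (b + ε * s))).toReal := by
          apply integral_congr_ae
          filter_upwards with s using hright s
  -- Step D : integration by parts : ∫ (α s^{α-1} ψ + s^α ψ') = 0 on (0,∞)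
  have hD : ∫ s in Ioi (0:ℝ), (α * s ^ (α - 1) * ψ s + s ^ α * ψ' s) = 0 := by
    have hrpow_cont : Continuous fun s : ℝ => s ^ α := by
      rw [continuous_iff_continuousAt]
      intro x
      rcases eq_or_ne x 0 with rfl | hx
      · exact Real.continuousAt_rpow_const 0 α (Or.inr hα0.le)
      · exact Real.continuousAt_rpow_const x α (Or.inl hx)
    have hg0 : (0:ℝ) ^ α * ψ 0 = 0 := by rw [Real.zero_rpow hα0.ne']; ring
    have htop : Tendsto (fun s : ℝ => s ^ α * ψ s) atTop (𝓝 0) := by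
      apply squeeze_zero_norm' _
        (by simpa using (tendsto_rpow_neg_atTop (by linarith : (0:ℝ) < δ - α)).const_mul C :
          Tendsto (fun s : ℝ => C * s ^ (-(δ - α))) atTop (𝓝 0))
      filter_upwards [eventually_ge_atTop (1:ℝ)] with s hs
      have hs0 : (0:ℝ) < s := lt_of_lt_of_le one_pos hs
      rw [Real.norm_eq_abs, abs_mul, abs_of_nonneg (Real.rpow_nonneg hs0.le α)]
      calc s ^ α * |ψ s| ≤ s ^ α * (C * s ^ (-δ)) := by
            apply mul_le_mul_of_nonneg_left _ (Real.rpow_nonneg hs0.le α)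
            exact (hψle s).trans (by nlinarith [hdec1 s hs, Real.rpow_pos_of_pos hs0 (-δ)])
        _ = C * s ^ (-(δ - α)) := by
            rw [show -(δ - α) = α + -δ by ring, Real.rpow_add hs0]; ring
    have h := integral_Ioi_of_hasDerivAt_of_tendsto (a := (0:ℝ))
      (f := fun s => s ^ α * ψ s)
      (f' := fun s => α * s ^ (α - 1) * ψ s + s ^ α * ψ' s) (m := 0)
      (hrpow_cont.mul hψcont).continuousWithinAt
      (fun s hs => by
        have h1 : HasDerivAt (fun x : ℝ => x ^ α) (α * s ^ (α - 1)) s :=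
          Real.hasDerivAt_rpow_const (Or.inl (ne_of_gt hs))
        exact h1.mul (hψderiv s))
      (hgint.add haint) htop
    rw [h]
    simp [Real.zero_rpow hα0.ne']
  have hsplit : ∫ s in Ioi (0:ℝ), α * s ^ (α - 1) * ψ s
      = ∫ s in Ioi (0:ℝ), -(s ^ α * ψ' s) := by
    rw [integral_add hgint haint] at hD
    rw [integral_neg]
    linarith
  have hconst : ∫ s in Ioi (0:ℝ), (-ψ' s) * (2 * s) ^ α
      = ∫ y in Ioi (0:ℝ), α * 2 ^ α * y ^ (α - 1) * ψ y := by
    calc ∫ s in Ioi (0:ℝ), (-ψ' s) * (2 * s) ^ α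
        = ∫ s in Ioi (0:ℝ), 2 ^ α * -(s ^ α * ψ' s) := by
          apply setIntegral_congr_fun measurableSet_Ioi
          intro s hs
          show (-ψ' s) * (2 * s) ^ α = 2 ^ α * -(s ^ α * ψ' s)
          rw [Real.mul_rpow (by norm_num) (le_of_lt hs)]
          ring
      _ = 2 ^ α * ∫ s in Ioi (0:ℝ), -(s ^ α * ψ' s) := integral_const_mul _ _
      _ = 2 ^ α * ∫ s in Ioi (0:ℝ), α * s ^ (α - 1) * ψ s := by rw [← hsplit]
      _ = ∫ y in Ioi (0:ℝ), 2 ^ α * (α * y ^ (α - 1) * ψ y) := (integral_const_mul _ _).symm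
      _ = ∫ y in Ioi (0:ℝ), α * 2 ^ α * y ^ (α - 1) * ψ y := by
          apply setIntegral_congr_fun measurableSet_Ioi
          intro y _
          show 2 ^ α * (α * y ^ (α - 1) * ψ y) = α * 2 ^ α * y ^ (α - 1) * ψ y
          ring
  -- nonnegativity of L and the global bound K
  have hL0 : 0 ≤ L := by
    apply ge_of_tendsto hd
    filter_upwards [self_mem_nhdsWithin] with r hr
    exact div_nonneg ENNReal.toReal_nonneg
      (Real.rpow_nonneg (by have := mem_Ioi.mp hr; linarith) α)
  have hK : ∃ K : ℝ, 0 < K ∧ ∀ r : ℝ, 0 < r →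
      (μ (Ioo (b - r) (b + r))).toReal ≤ K * r ^ α := by
    have h1 : ∀ᶠ r in 𝓝[>] (0:ℝ),
        (μ (Ioo (b - r) (b + r))).toReal / (2 * r) ^ α ≤ L + 1 :=
      hd.eventually (eventually_le_nhds (lt_add_one L))
    rw [eventually_iff, mem_nhdsGT_iff_exists_Ioo_subset] at h1
    obtain ⟨u, hu, hsub⟩ := h1
    have hu0 : (0:ℝ) < u := hu
    have hL1 : (0:ℝ) < L + 1 := by linarith
    have hb1 : (0:ℝ) < (L + 1) * 2 ^ α :=
      mul_pos hL1 (Real.rpow_pos_of_pos two_pos α)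
    have hb2 : (0:ℝ) < (u / 2) ^ (-α) :=
      Real.rpow_pos_of_pos (by linarith) (-α)
    refine ⟨(L + 1) * 2 ^ α + (u / 2) ^ (-α) + 1, by linarith, ?_⟩
    intro r hr
    have hrα : (0:ℝ) < r ^ α := Real.rpow_pos_of_pos hr α
    by_cases hcase : r < u
    · have hmem := hsub ⟨hr, hcase⟩
      simp only [mem_setOf_eq] at hmem
      have h2 : (0:ℝ) < (2 * r) ^ α := Real.rpow_pos_of_pos (by linarith) α
      have h3 : (μ (Ioo (b - r) (b + r))).toReal ≤ (L + 1) * (2 * r) ^ α := by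
        rw [div_le_iff₀ h2] at hmem
        linarith
      have h4 : (2 * r) ^ α = 2 ^ α * r ^ α :=
        Real.mul_rpow (by norm_num) hr.le
      rw [h4] at h3
      nlinarith [hb2, hrα]
    · push_neg at hcase
      have h1' : (μ (Ioo (b - r) (b + r))).toReal ≤ 1 := by
        have h := measure_mono (subset_univ (Ioo (b - r) (b + r))) (μ := μ)
        rw [measure_univ] at h
        simpa using ENNReal.toReal_mono (by simp) h
      have h2 : (1:ℝ) ≤ (u / 2) ^ (-α) * r ^ α := by
        have hbase : (u / 2 : ℝ) ^ α ≤ r ^ α :=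
          Real.rpow_le_rpow (by linarith) (by linarith) hα0.le
        rw [Real.rpow_neg (by linarith : (0:ℝ) ≤ u / 2), inv_mul_eq_div,
          le_div_iff₀ (Real.rpow_pos_of_pos (by linarith) α), one_mul]
        exact hbase
      nlinarith [hb1, hrα]
  obtain ⟨K, hK0, hKb⟩ := hK
  -- monotone measurable G
  have hGmono : Monotone (fun r : ℝ => (μ (Ioo (b - r) (b + r))).toReal) := by
    intro r r' hrr'
    exact ENNReal.toReal_mono (measure_ne_top μ _)
      (measure_mono (Ioo_subset_Ioo (by linarith) (by linarith)))
  have hGmeas : Measurable (fun r : ℝ => (μ (Ioo (b - r) (b + r))).toReal) :=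
    hGmono.measurable
  -- Step C : dominated convergence
  have stepC : Tendsto (fun ε : ℝ => ∫ s in Ioi (0:ℝ),
        (-ψ' s) * (μ (Ioo (b - ε * s) (b + ε * s))).toReal / ε ^ α)
      (𝓝[>] 0)
      (𝓝 (∫ s in Ioi (0:ℝ), (-ψ' s) * (L * (2 * s) ^ α))) := by
    apply tendsto_integral_filter_of_dominated_convergence
      (bound := fun s : ℝ => K * (s ^ α * |ψ' s|))
    · filter_upwards with ε
      exact (((hψ'cont.measurable.neg).mul
        (hGmeas.comp (measurable_id.const_mul ε))).div_const (ε ^ α)).aestronglyMeasurable.restrict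
    · filter_upwards [self_mem_nhdsWithin] with ε hε
      have hε0 : (0:ℝ) < ε := hε
      rw [ae_restrict_iff' measurableSet_Ioi]
      filter_upwards with s hs
      have hs0 : (0:ℝ) < s := hs
      have hεα : (0:ℝ) < ε ^ α := Real.rpow_pos_of_pos hε0 α
      rw [Real.norm_eq_abs, abs_div, abs_mul, abs_neg,
        abs_of_nonneg (ENNReal.toReal_nonneg), abs_of_nonneg hεα.le]
      have hG : (μ (Ioo (b - ε * s) (b + ε * s))).toReal ≤ K * (ε ^ α * s ^ α) := by
        have := hKb (ε * s) (mul_pos hε0 hs0)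
        rwa [Real.mul_rpow hε0.le hs0.le] at this
      calc |ψ' s| * (μ (Ioo (b - ε * s) (b + ε * s))).toReal / ε ^ α
          ≤ |ψ' s| * (K * (ε ^ α * s ^ α)) / ε ^ α := by
            apply div_le_div_of_nonneg_right _ hεα.le
            exact mul_le_mul_of_nonneg_left hG (abs_nonneg _)
        _ = K * (s ^ α * |ψ' s|) := by
            field_simp
    · exact hbint.const_mul K
    · rw [ae_restrict_iff' measurableSet_Ioi]
      filter_upwards with s hs
      have hs0 : (0:ℝ) < s := hs
      have h1 : Tendsto (fun ε : ℝ => ε * s) (𝓝[>] 0) (𝓝[>] 0) := by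
        apply tendsto_nhdsWithin_of_tendsto_nhds_of_eventually_within
        · have h : Tendsto (fun ε : ℝ => ε * s) (𝓝 0) (𝓝 0) := by
            simpa using (continuous_mul_right s).tendsto (0:ℝ)
          exact h.mono_left nhdsWithin_le_nhds
        · filter_upwards [self_mem_nhdsWithin] with ε hε
          exact mul_pos hε hs0
      have h2 := hd.comp h1
      have h3 := (h2.mul_const ((2 * s) ^ α)).const_mul (-ψ' s)
      apply Tendsto.congr' _ h3
      filter_upwards [self_mem_nhdsWithin] with ε hε
      have hε0 : (0:ℝ) < ε := hε
      have h4 : (2 * (ε * s)) ^ α = ε ^ α * (2 * s) ^ α := by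
        rw [show (2 * (ε * s) : ℝ) = ε * (2 * s) by ring,
          Real.mul_rpow hε0.le (by linarith)]
      have h5 : (0:ℝ) < (2 * s) ^ α := Real.rpow_pos_of_pos (by linarith) α
      have h6 : (0:ℝ) < ε ^ α := Real.rpow_pos_of_pos hε0 α
      show (-ψ' s) * ((μ (Ioo (b - ε * s) (b + ε * s))).toReal / (2 * (ε * s)) ^ α
          * (2 * s) ^ α) = (-ψ' s) * (μ (Ioo (b - ε * s) (b + ε * s))).toReal / ε ^ α
      rw [h4]
      field_simp
  -- value of the limit
  have hval : ∫ s in Ioi (0:ℝ), (-ψ' s) * (L * (2 * s) ^ α)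
      = (∫ y in Ioi (0:ℝ), α * 2 ^ α * y ^ (α - 1) * ψ y) * L := by
    calc ∫ s in Ioi (0:ℝ), (-ψ' s) * (L * (2 * s) ^ α)
        = ∫ s in Ioi (0:ℝ), L * ((-ψ' s) * (2 * s) ^ α) := by
          apply setIntegral_congr_fun measurableSet_Ioi
          intro s _
          show (-ψ' s) * (L * (2 * s) ^ α) = L * ((-ψ' s) * (2 * s) ^ α)
          ring
      _ = L * ∫ s in Ioi (0:ℝ), (-ψ' s) * (2 * s) ^ α := integral_const_mul _ _
      _ = L * ∫ y in Ioi (0:ℝ), α * 2 ^ α * y ^ (α - 1) * ψ y := by rw [hconst]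
      _ = (∫ y in Ioi (0:ℝ), α * 2 ^ α * y ^ (α - 1) * ψ y) * L := mul_comm _ _
  rw [← hval]
  apply stepC.congr'
  filter_upwards [self_mem_nhdsWithin] with ε hε
  have hε0 : (0:ℝ) < ε := hε
  have hεα : (0:ℝ) < ε ^ α := Real.rpow_pos_of_pos hε0 α
  rw [stepA ε hε0]
  show (∫ s in Ioi (0:ℝ),
      (-ψ' s) * (μ (Ioo (b - ε * s) (b + ε * s))).toReal / ε ^ α)
    = ε ^ (1 - α) * (ε⁻¹ * ∫ y, ψ ((b - y) * ε⁻¹) ∂μ)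
  rw [stepB ε hε0, integral_div]
  have hpow : ε ^ (1 - α) * ε⁻¹ = (ε ^ α)⁻¹ := by
    rw [Real.rpow_sub hε0, Real.rpow_one]
    field_simp
  calc (∫ s in Ioi (0:ℝ), (-ψ' s) * (μ (Ioo (b - ε * s) (b + ε * s))).toReal) / ε ^ α
      = (ε ^ (1 - α) * ε⁻¹) * ∫ s in Ioi (0:ℝ),
          (-ψ' s) * (μ (Ioo (b - ε * s) (b + ε * s))).toReal := by
        rw [hpow]; field_simp
    _ = ε ^ (1 - α) * (ε⁻¹ * ∫ s in Ioi (0:ℝ),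
          (-ψ' s) * (μ (Ioo (b - ε * s) (b + ε * s))).toReal) := by ring
end

section
/- Let ψ: ℝ → ℝ be C¹ with ψ(0)=1, ψ even, and suppose there exist C>0 and δ>1 such that |ψ(x)| + |x·ψ'(x)| ≤ C·(1+x²)^{-δ/2} for all x ∈ ℝ. Let μ be a probability measure on ℝ, 0 < α ≤ 1, and x ∈ ℝ. If D_μ^α(x) := limsup_{ε→0⁺} μ((x−ε, x+ε))/(2ε)^α is finite, then C_{μ,ψ}^α(x) := limsup_{a→0⁺} a^{−α}·(ψ_a * μ)(x) is finite, where ψ_a(x) = ψ(x/a). -/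
open MeasureTheory Filter Real Set Topology Metric
open scoped ENNReal NNReal

/-!
Cut ℝ into the dyadic shells `2ᵏa ≤ |x - y| < 2ᵏ⁺¹a` around `x`. On the `k`-th shell the
decay of `ψ` bounds `|ψ((x - y)/a)|` by `C 2^{-kδ}`, while the finite upper density (for small
radii) together with the finiteness of `μ` (for large radii) bounds the mass of the shell by
`M (2ᵏ⁺¹a)^α`. Summing, the geometric series of ratio `2^{α-δ} < 1` converges and gives
`∫ |ψ((x - y)/a)| dμ(y) ≤ K a^α` uniformly in `a > 0`.
-/

theorem lintegral_le_tsum_mul_of_le_on_disjointed {Ω : Type*} [MeasurableSpace Ω] {μ : Measure Ω}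
    {S : ℕ → Set Ω} (hS : ∀ k, MeasurableSet (S k)) (hcover : ⋃ k, S k = univ)
    {f : Ω → ℝ≥0∞} {c : ℕ → ℝ≥0∞} (hf : ∀ k, ∀ y ∈ disjointed S k, f y ≤ c k) :
    ∫⁻ y, f y ∂μ ≤ ∑' k, c k * μ (S k) :=
  calc ∫⁻ y, f y ∂μ = ∑' k, ∫⁻ y in disjointed S k, f y ∂μ := by
        rw [← lintegral_iUnion (MeasurableSet.disjointed hS) (disjoint_disjointed S),
          iUnion_disjointed, hcover, setLIntegral_univ]
    _ ≤ ∑' k, ∫⁻ _ in disjointed S k, c k ∂μ :=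
        ENNReal.tsum_le_tsum fun k => setLIntegral_mono measurable_const (hf k)
    _ ≤ ∑' k, c k * μ (S k) := by
        simp_rw [setLIntegral_const]
        gcongr with k
        exact disjointed_subset S k

theorem integral_le_toReal_mul_of_lintegral_le {Ω : Type*} [MeasurableSpace Ω] {μ : Measure Ω}
    {g : Ω → ℝ} {K : ℝ≥0∞} (hK : K ≠ ⊤) {b : ℝ} (hb : 0 ≤ b)
    (h : ∫⁻ y, ENNReal.ofReal ‖g y‖ ∂μ ≤ K * ENNReal.ofReal b) :
    ∫ y, g y ∂μ ≤ K.toReal * b :=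
  calc ∫ y, g y ∂μ ≤ (∫⁻ y, ENNReal.ofReal ‖g y‖ ∂μ).toReal :=
        (Real.le_norm_self _).trans (norm_integral_le_lintegral_norm g)
    _ ≤ (K * ENNReal.ofReal b).toReal := ENNReal.toReal_mono (by finiteness) h
    _ = K.toReal * b := by rw [ENNReal.toReal_mul, ENNReal.toReal_ofReal hb]

section DyadicBalls

variable {X : Type*} [PseudoMetricSpace X] (x : X) {r : ℝ}

theorem iUnion_ball_two_pow_succ_mul (hr : 0 < r) : ⋃ k : ℕ, ball x (2 ^ (k + 1) * r) = univ := by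
  refine eq_univ_of_forall fun y => mem_iUnion.2 ?_
  obtain ⟨k, hk⟩ := pow_unbounded_of_one_lt (dist y x / r) one_lt_two
  refine ⟨k, mem_ball.2 ?_⟩
  rw [div_lt_iff₀ hr] at hk
  exact hk.trans_le (by gcongr <;> norm_num)

theorem two_pow_mul_le_max_of_mem_disjointed_ball (hr : 0 ≤ r) {k : ℕ} {y : X}
    (hy : y ∈ disjointed (fun k : ℕ => ball x (2 ^ (k + 1) * r)) k) :
    2 ^ k * r ≤ max r (dist y x) := by
  cases k with
  | zero => simp
  | succ k =>
    have hmono : Monotone fun k : ℕ => ball x (2 ^ (k + 1) * r) := fun i j hij =>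
      ball_subset_ball (by gcongr; norm_num)
    rw [hmono.disjointed_add_one] at hy
    exact le_max_of_le_right (not_lt.1 fun h => hy.2 (mem_ball.2 h))

end DyadicBalls

theorem one_add_sq_rpow_neg_le {t u δ : ℝ} (hδ : 0 ≤ δ) (ht : 0 < t) (htu : t ≤ max 1 |u|) :
    (1 + u ^ 2) ^ (-δ / 2) ≤ t ^ (-δ) := by
  have hsq : t ^ 2 ≤ 1 + u ^ 2 := by
    rcases le_max_iff.1 htu with h | h
    · nlinarith [sq_nonneg u]
    · nlinarith [sq_abs u, abs_nonneg u]
  calc (1 + u ^ 2) ^ (-δ / 2) ≤ (t ^ 2) ^ (-δ / 2) :=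
        rpow_le_rpow_of_nonpos (by positivity) hsq (by linarith)
    _ = t ^ (-δ) := by
        rw [← rpow_natCast, ← rpow_mul ht.le]
        ring_nf

theorem lintegral_le_of_measure_ball_le {X : Type*} [PseudoMetricSpace X] [MeasurableSpace X]
    [OpensMeasurableSpace X] {μ : Measure X} {x : X} {α δ a : ℝ} {C M : ℝ≥0∞} {f : X → ℝ≥0∞}
    (hμ : ∀ r > 0, μ (ball x r) ≤ M * ENNReal.ofReal (r ^ α)) (hδ : 0 ≤ δ) (ha : 0 < a)
    (hf : ∀ y, f y ≤ C * ENNReal.ofReal ((1 + (dist y x / a) ^ 2) ^ (-δ / 2))) :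
    ∫⁻ y, f y ∂μ ≤
      C * M * ENNReal.ofReal (2 ^ α) * (1 - ENNReal.ofReal (2 ^ (α - δ)))⁻¹ *
        ENNReal.ofReal (a ^ α) := by
  have hshell : ∀ k, ∀ y ∈ disjointed (fun k : ℕ => ball x (2 ^ (k + 1) * a)) k,
      f y ≤ C * ENNReal.ofReal (2 ^ (-δ)) ^ k := by
    intro k y hy
    refine (hf y).trans (mul_le_mul_right ?_ C)
    have hk : (2 : ℝ) ^ k ≤ max 1 |dist y x / a| := by
      rw [abs_of_nonneg (by positivity), ← div_self ha.ne', max_div_div_right ha.le,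
        le_div_iff₀ ha]
      exact two_pow_mul_le_max_of_mem_disjointed_ball x ha.le hy
    rw [← ENNReal.ofReal_pow (by positivity), rpow_pow_comm zero_le_two]
    exact ENNReal.ofReal_le_ofReal (one_add_sq_rpow_neg_le hδ (by positivity) hk)
  have hball : ∀ k : ℕ, μ (ball x (2 ^ (k + 1) * a)) ≤
      M * ENNReal.ofReal (2 ^ α) * ENNReal.ofReal (2 ^ α) ^ k * ENNReal.ofReal (a ^ α) := by
    intro k
    refine (hμ _ (by positivity)).trans_eq ?_
    rw [mul_rpow (by positivity) ha.le, ← rpow_pow_comm zero_le_two, pow_succ,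
      ENNReal.ofReal_mul (by positivity), ENNReal.ofReal_mul (by positivity),
      ENNReal.ofReal_pow (by positivity)]
    ring
  have hratio :
      ENNReal.ofReal (2 ^ (-δ)) * ENNReal.ofReal (2 ^ α) = ENNReal.ofReal (2 ^ (α - δ)) := by
    rw [← ENNReal.ofReal_mul (by positivity), ← rpow_add zero_lt_two, neg_add_eq_sub]
  calc ∫⁻ y, f y ∂μ
        ≤ ∑' k : ℕ, C * ENNReal.ofReal (2 ^ (-δ)) ^ k * μ (ball x (2 ^ (k + 1) * a)) :=
        lintegral_le_tsum_mul_of_le_on_disjointed (fun _ => measurableSet_ball)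
          (iUnion_ball_two_pow_succ_mul x ha) hshell
    _ ≤ ∑' k : ℕ, C * ENNReal.ofReal (2 ^ (-δ)) ^ k *
          (M * ENNReal.ofReal (2 ^ α) * ENNReal.ofReal (2 ^ α) ^ k * ENNReal.ofReal (a ^ α)) := by
        gcongr with k
        exact hball k
    _ = _ := by
        rw [← ENNReal.tsum_geometric, ← ENNReal.tsum_mul_left, ← ENNReal.tsum_mul_right]
        congr 1
        ext k
        rw [← hratio, mul_pow]
        ring

theorem exists_measure_ball_le_of_limsup_lt_top {X : Type*} [PseudoMetricSpace X]
    [MeasurableSpace X] (μ : Measure X) [IsFiniteMeasure μ] {x : X} {α : ℝ} (hα : 0 ≤ α)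
    (hD : limsup (fun ε : ℝ => (((μ (ball x ε)).toReal / (2 * ε) ^ α : ℝ) : EReal)) (𝓝[>] 0) < ⊤) :
    ∃ M : ℝ≥0, ∀ r > 0, μ (ball x r) ≤ M * ENNReal.ofReal (r ^ α) := by
  obtain ⟨M₀, hM₀, -⟩ := EReal.exists_between_coe_real hD
  obtain ⟨ε, hε, hsmall⟩ :=
    (nhdsGT_basis (0 : ℝ)).eventually_iff.1 (eventually_lt_of_limsup_lt hM₀)
  set M := max (M₀ * 2 ^ α) ((μ univ).toReal / ε ^ α)
  have hM : 0 ≤ M := le_max_of_le_right (by positivity)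
  refine ⟨M.toNNReal, fun r hr => ?_⟩
  change μ (ball x r) ≤ ENNReal.ofReal M * _
  rw [← ENNReal.ofReal_mul hM, ← ENNReal.ofReal_toReal (measure_ne_top μ _)]
  refine ENNReal.ofReal_le_ofReal ?_
  rcases lt_or_ge r ε with hrε | hεr
  · have hlt := hsmall ⟨hr, hrε⟩
    rw [EReal.coe_lt_coe_iff, div_lt_iff₀ (by positivity)] at hlt
    calc (μ (ball x r)).toReal ≤ M₀ * (2 * r) ^ α := hlt.le
      _ = M₀ * 2 ^ α * r ^ α := by rw [mul_rpow zero_le_two hr.le, mul_assoc]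
      _ ≤ M * r ^ α := by gcongr; exact le_max_left _ _
  · calc (μ (ball x r)).toReal ≤ (μ univ).toReal :=
          ENNReal.toReal_mono (measure_ne_top μ _) (measure_mono (subset_univ _))
      _ = (μ univ).toReal / ε ^ α * ε ^ α := by field_simp
      _ ≤ (μ univ).toReal / ε ^ α * r ^ α := by gcongr
      _ ≤ M * r ^ α := by gcongr; exact le_max_right _ _

theorem upper_alpha_density_finite_implies_conv_finite_general
    (ψ : ℝ → ℝ)
    (hdecay : ∃ C > (0:ℝ), ∃ δ > (1:ℝ), ∀ x : ℝ,
      |ψ x| + |x * deriv ψ x| ≤ C * (1 + x ^ 2) ^ (-δ / 2))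
    (μ : Measure ℝ) [IsProbabilityMeasure μ]
    (α : ℝ) (hα0 : 0 < α) (hα1 : α ≤ 1) (x : ℝ)
    (hD : Filter.limsup
        (fun ε : ℝ => (((μ (Ioo (x - ε) (x + ε))).toReal / (2 * ε) ^ α : ℝ) : EReal))
        (𝓝[>] 0) < ⊤) :
    Filter.limsup
        (fun a : ℝ => ((a ^ (-α) * ∫ y : ℝ, ψ ((x - y) / a) ∂μ : ℝ) : EReal))
        (𝓝[>] 0) < ⊤ := by
  obtain ⟨C, hC, δ, hδ, hdecay⟩ := hdecay
  obtain ⟨M, hM⟩ := exists_measure_ball_le_of_limsup_lt_top μ hα0.le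
    (by simpa only [Real.ball_eq_Ioo] using hD)
  set K := ENNReal.ofReal C * M * ENNReal.ofReal (2 ^ α) *
    (1 - ENNReal.ofReal (2 ^ (α - δ)))⁻¹
  have hK : K ≠ ⊤ := by
    have hq : ENNReal.ofReal (2 ^ (α - δ)) < 1 :=
      ENNReal.ofReal_lt_one.2 (rpow_lt_one_of_one_lt_of_neg one_lt_two (by linarith))
    exact ENNReal.mul_ne_top (by finiteness) (ENNReal.inv_ne_top.2 (tsub_pos_of_lt hq).ne')
  have hbound : ∀ a > 0, a ^ (-α) * ∫ y, ψ ((x - y) / a) ∂μ ≤ K.toReal := by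
    intro a ha
    have hlint : ∫⁻ y, ENNReal.ofReal ‖ψ ((x - y) / a)‖ ∂μ ≤ K * ENNReal.ofReal (a ^ α) := by
      refine lintegral_le_of_measure_ball_le hM (by linarith) ha fun y => ?_
      rw [← ENNReal.ofReal_mul hC.le, Real.dist_eq, abs_sub_comm, div_pow, sq_abs, ← div_pow]
      exact ENNReal.ofReal_le_ofReal ((le_add_of_nonneg_right (abs_nonneg _)).trans (hdecay _))
    have hint : ∫ y, ψ ((x - y) / a) ∂μ ≤ K.toReal * a ^ α :=
      integral_le_toReal_mul_of_lintegral_le hK (by positivity) hlint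
    calc a ^ (-α) * ∫ y, ψ ((x - y) / a) ∂μ ≤ a ^ (-α) * (K.toReal * a ^ α) := by gcongr
      _ = K.toReal := by rw [mul_left_comm, ← rpow_add ha, neg_add_cancel, rpow_zero, mul_one]
  refine lt_of_le_of_lt ?_ (EReal.coe_lt_top K.toReal)
  exact limsup_le_of_le (by isBoundedDefault)
    (eventually_nhdsWithin_of_forall fun a ha => EReal.coe_le_coe_iff.2 (hbound a ha))

/-- Theorem 2.9 (first half): if `D_μ^α(x) = limsup_{ε→0⁺} μ((x-ε,x+ε))/(2ε)^α` is finite,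
then so is `C_{μ,ψ}^α(x) = limsup_{a→0⁺} a^{-α} (ψ_a * μ)(x)`. The limsups are taken in
the extended reals, finiteness meaning `< ⊤`. -/
theorem upper_alpha_density_finite_implies_conv_finite
    (ψ : ℝ → ℝ) (hC1 : ContDiff ℝ 1 ψ) (hψ0 : ψ 0 = 1)
    (heven : ∀ x : ℝ, ψ (-x) = ψ x)
    (hdecay : ∃ C > (0:ℝ), ∃ δ > (1:ℝ), ∀ x : ℝ,
      |ψ x| + |x * deriv ψ x| ≤ C * (1 + x ^ 2) ^ (-δ / 2))
    (μ : Measure ℝ) [IsProbabilityMeasure μ]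
    (α : ℝ) (hα0 : 0 < α) (hα1 : α ≤ 1) (x : ℝ)
    (hD : Filter.limsup
        (fun ε : ℝ => (((μ (Ioo (x - ε) (x + ε))).toReal / (2 * ε) ^ α : ℝ) : EReal))
        (𝓝[>] 0) < ⊤) :
    Filter.limsup
        (fun a : ℝ => ((a ^ (-α) * ∫ y : ℝ, ψ ((x - y) / a) ∂μ : ℝ) : EReal))
        (𝓝[>] 0) < ⊤ :=
  upper_alpha_density_finite_implies_conv_finite_general ψ hdecay μ α hα0 hα1 x hD
end

section
/- Let ψ: ℝ → ℝ be C¹ with ψ(0)=1, ψ even, non-negative, and suppose there exist C>0 and δ>1 such that |ψ(x)| + |x·ψ'(x)| ≤ C·(1+x²)^{-δ/2} for all x ∈ ℝ. Let μ be a probability measure on ℝ with Lebesgue decomposition μ = μ_ac + μ_s, and let (c,d) be a bounded interval. If limsup_{a→0⁺} |(ψ̃_a * μ)(x)| < ∞ for every x ∈ (c,d), where ψ̃_a(x) = (1/a)·ψ(x/a), then the singular part μ_s gives zero mass to (c,d), i.e. μ_s((c,d)) = 0. -/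
open MeasureTheory Filter Real Set Topology Metric
open scoped NNReal ENNReal

/-!
Since `ψ ≥ 0` and `ψ ≥ 1/2` on some `[-ε, ε]`, the smoothed value `(ψ̃_a * μ)(x)` dominates
`μ(B(x, εa)) / (2a)`. A finite limsup at `x` therefore bounds `μ(B(x, r))` by a constant multiple
of the Lebesgue measure of `B(x, r)` for arbitrarily small `r`. On the other hand, by Besicovitch
differentiation, at almost every point for the singular part `ν` of `μ` the ratio
`|B(x, r)| / ν(B(x, r))` tends to `0`; as `ν ≤ μ`, no point of `(c, d)` is such a point.
-/

theorem Besicovitch.ae_eventually_measure_closedBall_lt_mul_of_singular {α : Type*}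
    [MetricSpace α] [MeasurableSpace α] [BorelSpace α] [SecondCountableTopology α]
    [HasBesicovitchCovering α] {ρ ν : Measure α} [IsLocallyFiniteMeasure ρ]
    [IsLocallyFiniteMeasure ν] (hρν : ρ ⟂ₘ ν) :
    ∀ᵐ x ∂ν, ∀ η : ℝ≥0, 0 < η →
      ∀ᶠ r in 𝓝[>] 0, ρ (closedBall x r) < η * ν (closedBall x r) := by
  set v := Besicovitch.vitaliFamily ν
  filter_upwards [v.ae_eventually_measure_zero_of_singular hρν, v.ae_eventually_measure_pos]
    with x hx_ratio hx_pos η hη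
  have hball := Besicovitch.tendsto_filterAt ν x
  filter_upwards [(hx_ratio.comp hball).eventually_lt_const (ENNReal.coe_pos.2 hη),
    hball.eventually hx_pos, hball.eventually (v.eventually_measure_lt_top x)]
    with r hr_ratio hr_pos hr_fin
  exact (ENNReal.div_lt_iff (.inl hr_pos.ne') (.inl hr_fin.ne)).1 hr_ratio

theorem MeasureTheory.Measure.singularPart_eq_zero_of_frequently_le_mul {α : Type*}
    [MetricSpace α] [MeasurableSpace α] [BorelSpace α] [SecondCountableTopology α]
    [HasBesicovitchCovering α] {μ ρ : Measure α} [IsLocallyFiniteMeasure μ]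
    [IsLocallyFiniteMeasure ρ] {s : Set α}
    (h : ∀ x ∈ s, ∃ K : ℝ≥0, ∃ᶠ r in 𝓝[>] 0, μ (closedBall x r) ≤ K * ρ (closedBall x r)) :
    μ.singularPart ρ s = 0 := by
  refine measure_mono_null (fun x hx => ?_) (ae_iff.1
    (Besicovitch.ae_eventually_measure_closedBall_lt_mul_of_singular
      (μ.mutuallySingular_singularPart ρ).symm))
  intro hx_small
  obtain ⟨K, hK⟩ := h x hx
  obtain ⟨r, hr_le, hr_lt⟩ :=
    (hK.and_eventually (hx_small (K + 1)⁻¹ (by positivity))).exists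
  have hK_inv : ((K + 1)⁻¹ : ℝ≥0) * K ≤ 1 := by
    rw [inv_mul_le_iff₀ (by positivity), mul_one]
    exact le_self_add
  refine lt_irrefl (ρ (closedBall x r)) ?_
  calc ρ (closedBall x r) < (K + 1)⁻¹ * μ.singularPart ρ (closedBall x r) := hr_lt
    _ ≤ (K + 1)⁻¹ * (K * ρ (closedBall x r)) := by
        gcongr; exact (μ.singularPart_le ρ _).trans hr_le
    _ = ((((K + 1)⁻¹ * K : ℝ≥0)) : ℝ≥0∞) * ρ (closedBall x r) := by push_cast; ring
    _ ≤ ρ (closedBall x r) := by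
        simpa using mul_le_mul_left (ENNReal.coe_le_one_iff.2 hK_inv) (ρ (closedBall x r))

theorem mul_measureReal_closedBall_le_integral {ψ : ℝ → ℝ} {μ : Measure ℝ} {m ε a : ℝ}
    (x : ℝ) (ha : 0 < a) (hm : 0 ≤ m) (hψ_nonneg : ∀ t, 0 ≤ ψ t)
    (hψ_ge : ∀ t, |t| ≤ ε → m ≤ ψ t) (hint : Integrable (fun y => ψ ((x - y) / a)) μ) :
    m * μ.real (closedBall x (ε * a)) ≤ ∫ y, ψ ((x - y) / a) ∂μ := by
  rw [mul_comm, ← smul_eq_mul, ← integral_indicator_const _ measurableSet_closedBall]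
  refine integral_mono_of_nonneg (.of_forall fun y => indicator_nonneg (fun _ _ => hm) y) hint
    (.of_forall (indicator_le' (fun y hy => hψ_ge _ ?_) fun y _ => hψ_nonneg _))
  rw [mem_closedBall, dist_comm, Real.dist_eq] at hy
  rwa [abs_div, abs_of_pos ha, div_le_iff₀ ha]

theorem exists_frequently_measure_closedBall_le_mul_volume {ψ : ℝ → ℝ} {μ : Measure ℝ}
    [IsFiniteMeasure μ] (hψ : Continuous ψ) (hψ0 : ψ 0 = 1) (hψ_nonneg : ∀ t, 0 ≤ ψ t)
    (hψ_bdd : BddAbove (range ψ)) {x : ℝ}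
    (hx : liminf (fun a : ℝ => ((|∫ y, (1 / a) * ψ ((x - y) / a) ∂μ| : ℝ) : EReal))
      (𝓝[>] 0) < ⊤) :
    ∃ K : ℝ≥0, ∃ᶠ r in 𝓝[>] 0, μ (closedBall x r) ≤ K * volume (closedBall x r) := by
  obtain ⟨ε, hε, hψ_half⟩ : ∃ ε > 0, ∀ t, |t| ≤ ε → 1 / 2 ≤ ψ t := by
    have hnear : ∀ᶠ t in 𝓝 0, 1 / 2 < ψ t :=
      hψ.continuousAt.eventually_const_lt (by rw [hψ0]; norm_num)
    obtain ⟨ε, hε, hball⟩ := Metric.eventually_nhds_iff_ball.1 hnear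
    refine ⟨ε / 2, half_pos hε, fun t ht => (hball t ?_).le⟩
    rw [mem_ball, Real.dist_eq, sub_zero]
    linarith
  obtain ⟨M, hM, -⟩ := EReal.exists_between_coe_real hx
  have hfreq : ∃ᶠ a in 𝓝[>] 0, |∫ y, (1 / a) * ψ ((x - y) / a) ∂μ| < M := by
    simpa only [EReal.coe_lt_coe_iff] using frequently_lt_of_liminf_lt (by isBoundedDefault) hM
  have hscale : Tendsto (ε * ·) (𝓝[>] 0) (𝓝[>] (0 : ℝ)) :=
    tendsto_iff_comap.2 (comap_mulLeft_nhdsGT_zero hε).ge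
  refine ⟨(M / ε).toNNReal, hscale.frequently ?_⟩
  refine (hfreq.and_eventually self_mem_nhdsWithin).mono fun a ⟨haM, (ha : 0 < a)⟩ => ?_
  obtain ⟨C, hC⟩ := hψ_bdd
  have hint : Integrable (fun y => ψ ((x - y) / a)) μ :=
    .of_bound (hψ.comp (by fun_prop)).aestronglyMeasurable C (ae_of_all _ fun y => by
      rw [Real.norm_of_nonneg (hψ_nonneg _)]; exact hC (mem_range_self _))
  have hball : μ.real (closedBall x (ε * a)) ≤ 2 * a * M := by
    have hlow := mul_measureReal_closedBall_le_integral x ha one_half_pos.le hψ_nonneg hψ_half hint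
    have hconv : ∫ y, ψ ((x - y) / a) ∂μ = a * ∫ y, (1 / a) * ψ ((x - y) / a) ∂μ := by
      rw [integral_const_mul, ← mul_assoc, mul_one_div_cancel ha.ne', one_mul]
    nlinarith [le_abs_self (∫ y, (1 / a) * ψ ((x - y) / a) ∂μ)]
  rw [← ofReal_measureReal, Real.volume_closedBall, ENNReal.ofReal_coe_nnreal.symm, 
    ← ENNReal.ofReal_mul (by positivity)]
  refine ENNReal.ofReal_le_ofReal (hball.trans_eq ?_)
  rw [Real.coe_toNNReal _ (div_nonneg ((abs_nonneg _).trans haM.le) hε.le)]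
  field_simp

theorem bounded_limsup_implies_no_singular_part_general
    (ψ : ℝ → ℝ) (hC1 : ContDiff ℝ 1 ψ) (hψ0 : ψ 0 = 1)
    (hpos : ∀ x : ℝ, 0 ≤ ψ x)
    (hdecay : ∃ C > (0:ℝ), ∃ δ > (1:ℝ), ∀ x : ℝ,
      |ψ x| + |x * deriv ψ x| ≤ C * (1 + x ^ 2) ^ (-δ / 2))
    (μ : Measure ℝ) [IsProbabilityMeasure μ]
    (c d : ℝ)
    (hbd : ∀ x ∈ Ioo c d,
      Filter.limsup
        (fun a : ℝ => ((|∫ y : ℝ, (1 / a) * ψ ((x - y) / a) ∂μ| : ℝ) : EReal))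
        (𝓝[>] 0) < ⊤) :
    μ.singularPart volume (Ioo c d) = 0 := by
  obtain ⟨C, hC, δ, hδ, hdec⟩ := hdecay
  have hψ_bdd : BddAbove (range ψ) := by
    refine ⟨C, forall_mem_range.2 fun t => ?_⟩
    have hweight : (1 + t ^ 2) ^ (-δ / 2) ≤ 1 :=
      rpow_le_one_of_one_le_of_nonpos (by nlinarith) (by linarith)
    nlinarith [le_abs_self (ψ t), abs_nonneg (t * deriv ψ t), hdec t]
  refine Measure.singularPart_eq_zero_of_frequently_le_mul fun x hx =>
    exists_frequently_measure_closedBall_le_mul_volume hC1.continuous hψ0 hpos hψ_bdd ?_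
  exact (liminf_le_limsup).trans_lt (hbd x hx)

/-- Remark 2.10: if `limsup_{a→0⁺} |(ψ̃_a * μ)(x)| < ∞` for every `x ∈ (c,d)`, then the
singular part of `μ` (with respect to Lebesgue measure) gives zero mass to `(c,d)`. -/
theorem bounded_limsup_implies_no_singular_part
    (ψ : ℝ → ℝ) (hC1 : ContDiff ℝ 1 ψ) (hψ0 : ψ 0 = 1)
    (heven : ∀ x : ℝ, ψ (-x) = ψ x) (hpos : ∀ x : ℝ, 0 ≤ ψ x)
    (hdecay : ∃ C > (0:ℝ), ∃ δ > (1:ℝ), ∀ x : ℝ,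
      |ψ x| + |x * deriv ψ x| ≤ C * (1 + x ^ 2) ^ (-δ / 2))
    (μ : Measure ℝ) [IsProbabilityMeasure μ]
    (c d : ℝ)
    (hbd : ∀ x ∈ Ioo c d,
      Filter.limsup
        (fun a : ℝ => ((|∫ y : ℝ, (1 / a) * ψ ((x - y) / a) ∂μ| : ℝ) : EReal))
        (𝓝[>] 0) < ⊤) :
    μ.singularPart volume (Ioo c d) = 0 :=
  bounded_limsup_implies_no_singular_part_general ψ hC1 hψ0 hpos hdecay μ c d hbd
end

section
/- Let ψ: ℝ → ℝ be C¹ with ψ(0)=1, ψ even, and suppose there exist C>0 and δ>1 such that |ψ(x)| + |x·ψ'(x)| ≤ C·(1+x²)^{-δ/2} for all x ∈ ℝ. Let A be a bounded self-adjoint operator on a complex separable Hilbert space H, let λ ∈ ℝ, and for a > 0 let ψ_a(A−λ) denote the operator obtained by applying the continuous functional calculus for A to the continuous function t ↦ ψ((t−λ)/a). If there exists f ∈ H with ‖f‖ = 1 such that lim_{a→0⁺} ⟨f, ψ_a(A−λ) f⟩ exists and is nonzero, then λ is an eigenvalue of A, i.e. there exists a nonzero g ∈ H with A g = λ g. -/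
/-!
If `λ` is not an eigenvalue, `B = A - λ` is injective, so its adjoint has dense range.
The vectors `v_a = ψ_a(A - λ) f` are bounded uniformly in `a` because `ψ` is bounded, and
`‖B v_a‖ ≤ C a ‖f‖` because `x ψ(x)` is bounded. Hence `⟪B w, v_a⟫ = ⟪w, B v_a⟫ → 0` for
every `w`, and by density and the uniform bound `⟪f, v_a⟫ → 0`, so the limit vanishes.
-/

open Filter Set Topology InnerProductSpace

section DecayBounds

variable {x y C δ : ℝ}

lemma abs_le_of_abs_le_mul_one_add_sq_rpow_neg (hδ : 0 ≤ δ)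
    (h : |y| ≤ C * (1 + x ^ 2) ^ (-δ / 2)) : |y| ≤ C := by
  have hw : 0 < (1 + x ^ 2) ^ (-δ / 2) := by positivity
  have hC : 0 ≤ C := nonneg_of_mul_nonneg_left ((abs_nonneg y).trans h) hw
  have hw1 : (1 + x ^ 2) ^ (-δ / 2) ≤ 1 :=
    Real.rpow_le_one_of_one_le_of_nonpos (by nlinarith) (by linarith)
  exact h.trans (mul_le_of_le_one_right hC hw1)

lemma abs_mul_le_of_abs_le_mul_one_add_sq_rpow_neg (hδ : 1 ≤ δ)
    (h : |y| ≤ C * (1 + x ^ 2) ^ (-δ / 2)) : |x * y| ≤ C := by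
  have hbase : 1 ≤ 1 + x ^ 2 := by nlinarith
  set w := (1 + x ^ 2) ^ (δ / 2) with hw
  have hwpos : 0 < w := by positivity
  have hxw : |x| ≤ w :=
    calc |x| ≤ √(1 + x ^ 2) := Real.abs_le_sqrt (by linarith)
      _ = (1 + x ^ 2) ^ (1 / 2 : ℝ) := Real.sqrt_eq_rpow _
      _ ≤ w := Real.rpow_le_rpow_of_exponent_le hbase (by linarith)
  have hneg : (1 + x ^ 2) ^ (-δ / 2) = w⁻¹ := by
    rw [hw, ← Real.rpow_neg (by linarith), neg_div]
  have hC : 0 ≤ C := by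
    have := (abs_nonneg y).trans h
    rw [hneg] at this
    exact nonneg_of_mul_nonneg_left this (inv_pos.mpr hwpos)
  calc |x * y| = |x| * |y| := abs_mul x y
    _ ≤ w * (C * w⁻¹) := mul_le_mul hxw (hneg ▸ h) (abs_nonneg y) hwpos.le
    _ = C := by field_simp

end DecayBounds

theorem ContinuousLinearMap.tendsto_inner_zero_of_ker_eq_bot
    {𝕜 E F ι : Type*} [RCLike 𝕜] [NormedAddCommGroup E] [InnerProductSpace 𝕜 E] [CompleteSpace E]
    [NormedAddCommGroup F] [InnerProductSpace 𝕜 F] [CompleteSpace F]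
    {T : E →L[𝕜] F} (hT : (T : E →ₗ[𝕜] F).ker = ⊥) {l : Filter ι} {v : ι → E} {M : ℝ}
    (hv : ∀ i, ‖v i‖ ≤ M) (hTv : Tendsto (fun i ↦ T (v i)) l (𝓝 0)) (f : E) :
    Tendsto (fun i ↦ ⟪f, v i⟫_𝕜) l (𝓝 0) := by
  have hequi : Equicontinuous fun i (x : E) ↦ ⟪x, v i⟫_𝕜 := by
    refine (LipschitzWith.uniformEquicontinuous _ M.toNNReal fun i ↦
      LipschitzWith.of_dist_le_mul fun x y ↦ ?_).equicontinuous
    rw [dist_eq_norm, dist_eq_norm, ← inner_sub_left]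
    exact (norm_inner_le_norm _ _).trans
      (by rw [mul_comm]; gcongr; exact (hv i).trans (Real.le_coe_toNNReal M))
  have hclosed : IsClosed {x : E | Tendsto (fun i ↦ ⟪x, v i⟫_𝕜) l (𝓝 0)} :=
    hequi.isClosed_setOfPred_tendsto continuous_const
  have hrange : ((adjoint T : F →ₗ[𝕜] E).range : Set E) ⊆
      {x : E | Tendsto (fun i ↦ ⟪x, v i⟫_𝕜) l (𝓝 0)} := by
    rintro _ ⟨w, rfl⟩
    simpa [adjoint_inner_left] using (tendsto_const_nhds (x := w)).inner hTv
  have hdense : ((adjoint T : F →ₗ[𝕜] E).range.topologicalClosure : Set E) = univ := by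
    rw [← orthogonal_ker, hT, Submodule.bot_orthogonal_eq_top, Submodule.top_coe]
  have := hclosed.closure_subset_iff.mpr hrange
  rw [← Submodule.topologicalClosure_coe, hdense] at this
  exact this (mem_univ f)

section Rescaled

variable {A : Type*} [CStarAlgebra A] {ψ : ℝ → ℝ} {C : ℝ}

lemma norm_cfc_rescale_le (hψ : ∀ x, |ψ x| ≤ C) (a : A) (l s : ℝ) :
    ‖cfc (fun t ↦ ψ ((t - l) / s)) a‖ ≤ C :=
  norm_cfc_le ((abs_nonneg _).trans (hψ 0)) fun _ _ ↦ hψ _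

lemma cfc_sub_algebraMap_mul_cfc_rescale {a : A} (ha : IsSelfAdjoint a) (hψc : Continuous ψ)
    (l s : ℝ) :
    (a - algebraMap ℝ A l) * cfc (fun t ↦ ψ ((t - l) / s)) a =
      cfc (fun t ↦ (t - l) * ψ ((t - l) / s)) a := by
  rw [cfc_mul _ _ a (by fun_prop) (by fun_prop), cfc_sub _ _ a, cfc_id' ℝ a, cfc_const l a]

lemma norm_sub_algebraMap_mul_cfc_rescale_le {a : A} (ha : IsSelfAdjoint a)
    (hψc : Continuous ψ) (hψ : ∀ x, |x * ψ x| ≤ C) (l : ℝ) {s : ℝ} (hs : 0 < s) :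
    ‖(a - algebraMap ℝ A l) * cfc (fun t ↦ ψ ((t - l) / s)) a‖ ≤ C * s := by
  rw [cfc_sub_algebraMap_mul_cfc_rescale ha hψc]
  refine norm_cfc_le (mul_nonneg ((abs_nonneg _).trans (hψ 0)) hs.le) fun x _ ↦ ?_
  calc ‖(x - l) * ψ ((x - l) / s)‖ = |(x - l) / s * ψ ((x - l) / s)| * s := by
        rw [Real.norm_eq_abs, abs_mul, abs_mul, abs_div, abs_of_pos hs]; field_simp
    _ ≤ C * s := by gcongr; exact hψ _

end Rescaled

theorem nonzero_limit_implies_eigenvalue_general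
    {H : Type*} [NormedAddCommGroup H] [InnerProductSpace ℂ H] [CompleteSpace H]
    (ψ : ℝ → ℝ) (hC1 : ContDiff ℝ 1 ψ)
    (hdecay : ∃ C > (0:ℝ), ∃ δ > (1:ℝ), ∀ x : ℝ,
      |ψ x| + |x * deriv ψ x| ≤ C * (1 + x ^ 2) ^ (-δ / 2))
    (A : H →L[ℂ] H) (hA : IsSelfAdjoint A) (l : ℝ)
    (f : H) (L : ℂ) (hL : L ≠ 0)
    (hlim : Tendsto
      (fun a : ℝ => ⟪f, (cfc (fun t : ℝ => ψ ((t - l) / a)) A) f⟫_ℂ)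
      (𝓝[>] 0) (𝓝 L)) :
    ∃ g : H, g ≠ 0 ∧ A g = (l : ℂ) • g := by
  obtain ⟨C, -, δ, hδ, hd⟩ := hdecay
  have hψ_le : ∀ x, |ψ x| ≤ C * (1 + x ^ 2) ^ (-δ / 2) :=
    fun x ↦ (le_add_of_nonneg_right (abs_nonneg _)).trans (hd x)
  have hψ : ∀ x, |ψ x| ≤ C :=
    fun x ↦ abs_le_of_abs_le_mul_one_add_sq_rpow_neg (by linarith) (hψ_le x)
  have hxψ : ∀ x, |x * ψ x| ≤ C :=
    fun x ↦ abs_mul_le_of_abs_le_mul_one_add_sq_rpow_neg hδ.le (hψ_le x)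
  set B := A - algebraMap ℝ (H →L[ℂ] H) l
  suffices hker : (B : H →ₗ[ℂ] H).ker ≠ ⊥ by
    obtain ⟨g, hg, hg0⟩ := (Submodule.ne_bot_iff _).mp hker
    refine ⟨g, hg0, ?_⟩
    simpa [B, Algebra.algebraMap_eq_smul_one, sub_eq_zero] using hg
  intro hker
  have hBv : Tendsto (fun s ↦ B (cfc (fun t ↦ ψ ((t - l) / s)) A f)) (𝓝[>] 0) (𝓝 0) := by
    refine squeeze_zero_norm' (a := fun s ↦ C * s * ‖f‖) ?_ ?_
    · filter_upwards [self_mem_nhdsWithin] with s (hs : 0 < s)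
      calc ‖B (cfc (fun t ↦ ψ ((t - l) / s)) A f)‖
          ≤ ‖B * cfc (fun t ↦ ψ ((t - l) / s)) A‖ * ‖f‖ := (B * _).le_opNorm f
        _ ≤ C * s * ‖f‖ := by
          gcongr; exact norm_sub_algebraMap_mul_cfc_rescale_le hA hC1.continuous hxψ l hs
    · exact tendsto_nhdsWithin_of_tendsto_nhds <|
        (by fun_prop : Continuous fun s : ℝ ↦ C * s * ‖f‖).tendsto' 0 0 (by simp)
  have hv (s : ℝ) : ‖cfc (fun t ↦ ψ ((t - l) / s)) A f‖ ≤ C * ‖f‖ :=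
    (ContinuousLinearMap.le_opNorm _ f).trans (by gcongr; exact norm_cfc_rescale_le hψ A l s)
  exact hL (tendsto_nhds_unique hlim (B.tendsto_inner_zero_of_ker_eq_bot hker hv hBv f))

/-- Theorem 2.11 (1): if for some unit vector `f` the quantity `⟨f, ψ_a(A-λ) f⟩` has a
nonzero limit as `a → 0⁺`, then `λ` is an eigenvalue of the bounded self-adjoint
operator `A`. Here `ψ_a(A-λ)` is defined by the continuous functional calculus. -/
theorem nonzero_limit_implies_eigenvalue
    {H : Type*} [NormedAddCommGroup H] [InnerProductSpace ℂ H] [CompleteSpace H]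
    [TopologicalSpace.SeparableSpace H]
    (ψ : ℝ → ℝ) (hC1 : ContDiff ℝ 1 ψ) (hψ0 : ψ 0 = 1)
    (heven : ∀ x : ℝ, ψ (-x) = ψ x)
    (hdecay : ∃ C > (0:ℝ), ∃ δ > (1:ℝ), ∀ x : ℝ,
      |ψ x| + |x * deriv ψ x| ≤ C * (1 + x ^ 2) ^ (-δ / 2))
    (A : H →L[ℂ] H) (hA : IsSelfAdjoint A) (l : ℝ)
    (f : H) (hf : ‖f‖ = 1) (L : ℂ) (hL : L ≠ 0)
    (hlim : Tendsto
      (fun a : ℝ => ⟪f, (cfc (fun t : ℝ => ψ ((t - l) / a)) A) f⟫_ℂ)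
      (𝓝[>] 0) (𝓝 L)) :
    ∃ g : H, g ≠ 0 ∧ A g = (l : ℂ) • g :=
  nonzero_limit_implies_eigenvalue_general ψ hC1 hdecay A hA l f L hL hlim
end
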